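/- arXiv:2212.13181 — 3 statements merged into one kernel-verified Lean document; each statement's English description precedes it below -/
import Mathlib

section
/- For d = 3 and for d = 4, the level-d principal congruence subgroup Γ_d(2) of SL(2,ℤ) is equal to the subgroup of SL(2,ℤ) generated by e_{21}^d together with the matrices e_{21}^m · e_{12}^d · e_{21}^{−m} for all integers 0 ≤ m ≤ d − 1. -/
open Matrix

abbrev SLZ2 := Matrix.SpecialLinearGroup (Fin 2) ℤ

/-- The level-`d` principal congruence subgroup of `SL(2, ℤ)`:
the kernel of the reduction map `SL(2, ℤ) → SL(2, ℤ/dℤ)`. -/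
def Gamma (d : ℕ) : Subgroup SLZ2 :=
  (Matrix.SpecialLinearGroup.map (n := Fin 2) (Int.castRingHom (ZMod d))).ker

/-- The elementary matrix `e_{ij} ∈ SL(2, ℤ)` (junk value `1` if `i = j`). -/
def E (i j : Fin 2) : SLZ2 :=
  if h : i ≠ j then ⟨Matrix.transvection i j 1, Matrix.det_transvection_of_ne i j h 1⟩ else 1

instance {n : Type*} {R : Type*} [DecidableEq n] [Fintype n] [CommRing R] [DecidableEq R] :
    DecidableEq (Matrix.SpecialLinearGroup n R) := fun _ _ => decidable_of_iff _ Subtype.ext_iff.symm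

def M (a b c d : ℤ) (h : a * d - b * c = 1) : SLZ2 :=
  ⟨!![a, b; c, d], by rw [Matrix.det_fin_two_of]; exact h⟩

lemma M_eq {a b c d a' b' c' d' : ℤ} (h : a*d-b*c=1) (h' : a'*d'-b'*c'=1)
    (e1 : a = a') (e2 : b = b') (e3 : c = c') (e4 : d = d') :
    M a b c d h = M a' b' c' d' h' := by subst e1; subst e2; subst e3; subst e4; rfl

lemma Mmul {a b c d a' b' c' d' A B C D : ℤ} (h : a*d-b*c=1) (h' : a'*d'-b'*c'=1)
    (hdet : A*D-B*C=1)
    (eA : A = a*a'+b*c') (eB : B = a*b'+b*d') (eC : C = c*a'+d*c') (eD : D = c*b'+d*d') :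
    M a b c d h * M a' b' c' d' h' = M A B C D hdet := by
  subst eA; subst eB; subst eC; subst eD
  apply Subtype.ext
  show (!![a,b;c,d] : Matrix (Fin 2) (Fin 2) ℤ) * !![a',b';c',d'] = _
  rw [Matrix.mul_fin_two]; rfl

lemma M_one : M 1 0 0 1 (by ring : (1:ℤ)*1-0*0=1) = 1 := by apply Subtype.ext; decide

lemma SL2_cases (A : SLZ2) : ∃ a b c d h, A = M a b c d h := by
  refine ⟨A.1 0 0, A.1 0 1, A.1 1 0, A.1 1 1, ?_, ?_⟩
  · have := A.2; rwa [Matrix.det_fin_two] at this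
  · apply Subtype.ext; exact (Matrix.eta_fin_two A.1)

abbrev Tm (n : ℤ) : SLZ2 := M 1 n 0 1 (by ring)
abbrev Lm (n : ℤ) : SLZ2 := M 1 0 n 1 (by ring)

lemma Tm_mul (m n : ℤ) : Tm m * Tm n = Tm (m+n) :=
  Mmul _ _ _ (by ring) (by ring) (by ring) (by ring)
lemma Lm_mul (m n : ℤ) : Lm m * Lm n = Lm (m+n) :=
  Mmul _ _ _ (by ring) (by ring) (by ring) (by ring)
lemma Tm_zero : Tm 0 = 1 := by apply Subtype.ext; decide
lemma Lm_zero : Lm 0 = 1 := by apply Subtype.ext; decide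
lemma Tm_inv (n : ℤ) : (Tm n)⁻¹ = Tm (-n) :=
  inv_eq_of_mul_eq_one_right (by rw [Tm_mul]; simp [Tm_zero])
lemma Lm_inv (n : ℤ) : (Lm n)⁻¹ = Lm (-n) :=
  inv_eq_of_mul_eq_one_right (by rw [Lm_mul]; simp [Lm_zero])
lemma hE01 : E 0 1 = Tm 1 := by apply Subtype.ext; decide
lemma hE10 : E 1 0 = Lm 1 := by apply Subtype.ext; decide

section
variable {K : Subgroup SLZ2}

lemma Tm_mem (h01 : E 0 1 ∈ K) : ∀ n : ℤ, Tm n ∈ K := by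
  intro n
  induction n using Int.induction_on with
  | zero => rw [Tm_zero]; exact one_mem K
  | succ k ih => rw [← Tm_mul]; exact mul_mem ih (hE01 ▸ h01)
  | pred k ih => rw [show (-(k:ℤ)-1) = (-k) + (-1) by ring, ← Tm_mul]
                 exact mul_mem ih (by rw [← Tm_inv]; exact inv_mem (hE01 ▸ h01))

lemma Lm_mem (h10 : E 1 0 ∈ K) : ∀ n : ℤ, Lm n ∈ K := by
  intro n
  induction n using Int.induction_on with
  | zero => rw [Lm_zero]; exact one_mem K
  | succ k ih => rw [← Lm_mul]; exact mul_mem ih (hE10 ▸ h10)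
  | pred k ih => rw [show (-(k:ℤ)-1) = (-k) + (-1) by ring, ← Lm_mul]
                 exact mul_mem ih (by rw [← Lm_inv]; exact inv_mem (hE10 ▸ h10))

abbrev Sm : SLZ2 := M 0 (-1) 1 0 (by ring)
abbrev negI : SLZ2 := M (-1) 0 0 (-1) (by ring)

lemma Sm_mem (h01 : E 0 1 ∈ K) (h10 : E 1 0 ∈ K) : Sm ∈ K := by
  have : Sm = Tm (-1) * Lm 1 * Tm (-1) := by apply Subtype.ext; decide
  rw [this]; exact mul_mem (mul_mem (Tm_mem h01 _) (Lm_mem h10 _)) (Tm_mem h01 _)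
lemma negI_mem (h01 : E 0 1 ∈ K) (h10 : E 1 0 ∈ K) : negI ∈ K := by
  have : negI = Sm * Sm := by apply Subtype.ext; decide
  rw [this]; exact mul_mem (Sm_mem h01 h10) (Sm_mem h01 h10)
end

lemma euclid {K : Subgroup SLZ2} (h01 : E 0 1 ∈ K) (h10 : E 1 0 ∈ K) :
    ∀ N : ℕ, ∀ a b c d : ℤ, ∀ h : a*d-b*c=1, a.natAbs + c.natAbs ≤ N → M a b c d h ∈ K := by
  intro N
  induction N using Nat.strong_induction_on with
  | _ N ih =>
  intro a b c d h hN
  by_cases hc : c = 0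
  · subst hc
    have had : a * d = 1 := by linarith
    rcases Int.mul_eq_one_iff_eq_one_or_neg_one.mp had with ⟨ha, hd⟩ | ⟨ha, hd⟩
    · subst ha; subst hd
      have : M 1 b 0 1 h = Tm b := rfl
      rw [this]; exact Tm_mem h01 b
    · subst ha; subst hd
      have : M (-1) b 0 (-1) h = negI * Tm (-b) :=
        (Mmul _ _ _ (by ring) (by ring) (by ring) (by ring)).symm
      rw [this]; exact mul_mem (negI_mem h01 h10) (Tm_mem h01 _)
  · by_cases ha : a = 0
    · subst ha
      have hbc : b * (-c) = 1 := by linarith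
      rcases Int.mul_eq_one_iff_eq_one_or_neg_one.mp hbc with ⟨hb, hcc⟩ | ⟨hb, hcc⟩
      · have hc1 : c = -1 := by omega
        subst hb; subst hc1
        have : M 0 1 (-1) d h = negI * (Sm * Tm (-d)) := by
          rw [show Sm * Tm (-d) = M 0 (-1) 1 (-d) (by ring) from
            Mmul _ _ _ (by ring) (by ring) (by ring) (by ring)]
          exact (Mmul _ _ _ (by ring) (by ring) (by ring) (by ring)).symm
        rw [this]
        exact mul_mem (negI_mem h01 h10) (mul_mem (Sm_mem h01 h10) (Tm_mem h01 _))
      · have hc1 : c = 1 := by omega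
        subst hb; subst hc1
        have : M 0 (-1) 1 d h = Sm * Tm d :=
          (Mmul _ _ _ (by ring) (by ring) (by ring) (by ring)).symm
        rw [this]; exact mul_mem (Sm_mem h01 h10) (Tm_mem h01 _)
    · rcases le_or_gt a.natAbs c.natAbs with hle | hlt
      · obtain ⟨e, he2⟩ : ∃ e : ℤ, (c - e*a).natAbs < c.natAbs := by
          rcases lt_or_gt_of_ne ha with h1 | h1 <;> rcases lt_or_gt_of_ne hc with h2 | h2
          · exact ⟨1, by omega⟩
          · exact ⟨-1, by omega⟩
          · exact ⟨-1, by omega⟩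
          · exact ⟨1, by omega⟩
        have step : M a b c d h = Lm e * M a b (c - e*a) (d - e*b) (by ring_nf; linarith) :=
          (Mmul _ _ _ (by ring) (by ring) (by ring) (by ring)).symm
        rw [step]
        exact mul_mem (Lm_mem h10 e)
          (ih (a.natAbs + (c - e*a).natAbs) (by omega) a b _ _ _ le_rfl)
      · obtain ⟨e, he2⟩ : ∃ e : ℤ, (a - e*c).natAbs < a.natAbs := by
          rcases lt_or_gt_of_ne ha with h1 | h1 <;> rcases lt_or_gt_of_ne hc with h2 | h2
          · exact ⟨1, by omega⟩
          · exact ⟨-1, by omega⟩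
          · exact ⟨-1, by omega⟩
          · exact ⟨1, by omega⟩
        have step : M a b c d h = Tm e * M (a - e*c) (b - e*d) c d (by ring_nf; linarith) :=
          (Mmul _ _ _ (by ring) (by ring) (by ring) (by ring)).symm
        rw [step]
        exact mul_mem (Tm_mem h01 e)
          (ih ((a - e*c).natAbs + c.natAbs) (by omega) _ _ c d _ le_rfl)


theorem closure_ET : Subgroup.closure ({E 0 1, E 1 0} : Set SLZ2) = ⊤ := by
  rw [eq_top_iff]; intro A _
  obtain ⟨a, b, c, d, h, rfl⟩ := SL2_cases A
  exact euclid (Subgroup.subset_closure (by simp)) (Subgroup.subset_closure (by simp))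
    (a.natAbs + c.natAbs) a b c d h le_rfl

lemma mem_Gamma {d : ℕ} {x : SLZ2}
    (h : Matrix.SpecialLinearGroup.map (n := Fin 2) (Int.castRingHom (ZMod d)) x = 1) :
    x ∈ Gamma d := MonoidHom.mem_ker.mpr h

lemma Gamma_map {d : ℕ} {x : SLZ2} (h : x ∈ Gamma d) :
    Matrix.SpecialLinearGroup.map (n := Fin 2) (Int.castRingHom (ZMod d)) x = 1 :=
  MonoidHom.mem_ker.mp h

lemma step {H : Subgroup SLZ2} {L : List SLZ2} {x t y t' : SLZ2}
    (h1 : t'⁻¹ * x * t ∈ H) (h3 : t' ∈ L) (h2 : t⁻¹ * y ∈ H) :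
    ∃ s ∈ L, s⁻¹ * (x * y) ∈ H :=
  ⟨t', h3, by
    have e : t'⁻¹ * (x * y) = (t'⁻¹ * x * t) * (t⁻¹ * y) := by group
    rw [e]; exact mul_mem h1 h2⟩

namespace D3

def SS : Set SLZ2 :=
  {(E 1 0) ^ 3} ∪
    {x : SLZ2 | ∃ m : ℕ, m ≤ 3 - 1 ∧ x = (E 1 0) ^ m * (E 0 1) ^ 3 * ((E 1 0) ^ m)⁻¹}

def H : Subgroup SLZ2 := Subgroup.closure SS

def U : SLZ2 := ⟨!![1, 0; 3, 1], by decide⟩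
def W0 : SLZ2 := ⟨!![1, 3; 0, 1], by decide⟩
def W1 : SLZ2 := ⟨!![-2, 3; -3, 4], by decide⟩
def W2 : SLZ2 := ⟨!![-5, 3; -12, 7], by decide⟩

lemma hU : U ∈ H := by
  have h : (E 1 0) ^ 3 = U := by apply Subtype.ext; decide
  exact h ▸ Subgroup.subset_closure (Set.mem_union_left _ rfl)
lemma hW0 : W0 ∈ H := by
  have h : (E 1 0) ^ 0 * (E 0 1) ^ 3 * ((E 1 0) ^ 0)⁻¹ = W0 := by apply Subtype.ext; decide
  exact h ▸ Subgroup.subset_closure (Set.mem_union_right _ ⟨0, by norm_num, rfl⟩)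
lemma hW1 : W1 ∈ H := by
  have h : (E 1 0) ^ 1 * (E 0 1) ^ 3 * ((E 1 0) ^ 1)⁻¹ = W1 := by apply Subtype.ext; decide
  exact h ▸ Subgroup.subset_closure (Set.mem_union_right _ ⟨1, by norm_num, rfl⟩)
lemma hW2 : W2 ∈ H := by
  have h : (E 1 0) ^ 2 * (E 0 1) ^ 3 * ((E 1 0) ^ 2)⁻¹ = W2 := by apply Subtype.ext; decide
  exact h ▸ Subgroup.subset_closure (Set.mem_union_right _ ⟨2, by norm_num, rfl⟩)

lemma Hle : H ≤ Gamma 3 := by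
  refine (Subgroup.closure_le _).mpr ?_
  rintro x (rfl | ⟨m, hm, rfl⟩)
  · exact mem_Gamma (by apply Subtype.ext; decide)
  · interval_cases m <;> exact mem_Gamma (by apply Subtype.ext; decide)

def R0 : SLZ2 := ⟨!![1, 0; 0, 1], by decide⟩
def R1 : SLZ2 := ⟨!![1, 1; 0, 1], by decide⟩
def R2 : SLZ2 := ⟨!![1, -1; 0, 1], by decide⟩
def R3 : SLZ2 := ⟨!![1, 0; 1, 1], by decide⟩
def R4 : SLZ2 := ⟨!![1, 0; -1, 1], by decide⟩
def R5 : SLZ2 := ⟨!![2, 1; 1, 1], by decide⟩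
def R6 : SLZ2 := ⟨!![0, 1; -1, 1], by decide⟩
def R7 : SLZ2 := ⟨!![0, -1; 1, 1], by decide⟩
def R8 : SLZ2 := ⟨!![2, -1; -1, 1], by decide⟩
def R9 : SLZ2 := ⟨!![1, 1; 1, 2], by decide⟩
def R10 : SLZ2 := ⟨!![1, -1; 1, 0], by decide⟩
def R11 : SLZ2 := ⟨!![1, 1; -1, 0], by decide⟩
def R12 : SLZ2 := ⟨!![1, -1; -1, 2], by decide⟩
def R13 : SLZ2 := ⟨!![2, 3; 1, 2], by decide⟩
def R14 : SLZ2 := ⟨!![2, -1; 1, 0], by decide⟩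
def R15 : SLZ2 := ⟨!![0, 1; -1, 0], by decide⟩
def R16 : SLZ2 := ⟨!![0, 1; -1, 2], by decide⟩
def R17 : SLZ2 := ⟨!![0, -1; 1, 2], by decide⟩
def R18 : SLZ2 := ⟨!![0, -1; 1, 0], by decide⟩
def R19 : SLZ2 := ⟨!![2, 1; -1, 0], by decide⟩
def R20 : SLZ2 := ⟨!![2, -3; -1, 2], by decide⟩
def R21 : SLZ2 := ⟨!![2, 1; 3, 2], by decide⟩
def R22 : SLZ2 := ⟨!![2, -1; -3, 2], by decide⟩
def R23 : SLZ2 := ⟨!![5, 3; 3, 2], by decide⟩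

def RepL : List SLZ2 :=
  [R0, R1, R2, R3, R4, R5, R6, R7, R8, R9, R10, R11, R12, R13, R14, R15, R16, R17, R18, R19, R20, R21, R22, R23]

lemma mR0 : R0 ∈ RepL := by decide
lemma mR1 : R1 ∈ RepL := by decide
lemma mR2 : R2 ∈ RepL := by decide
lemma mR3 : R3 ∈ RepL := by decide
lemma mR4 : R4 ∈ RepL := by decide
lemma mR5 : R5 ∈ RepL := by decide
lemma mR6 : R6 ∈ RepL := by decide
lemma mR7 : R7 ∈ RepL := by decide
lemma mR8 : R8 ∈ RepL := by decide
lemma mR9 : R9 ∈ RepL := by decide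
lemma mR10 : R10 ∈ RepL := by decide
lemma mR11 : R11 ∈ RepL := by decide
lemma mR12 : R12 ∈ RepL := by decide
lemma mR13 : R13 ∈ RepL := by decide
lemma mR14 : R14 ∈ RepL := by decide
lemma mR15 : R15 ∈ RepL := by decide
lemma mR16 : R16 ∈ RepL := by decide
lemma mR17 : R17 ∈ RepL := by decide
lemma mR18 : R18 ∈ RepL := by decide
lemma mR19 : R19 ∈ RepL := by decide
lemma mR20 : R20 ∈ RepL := by decide
lemma mR21 : R21 ∈ RepL := by decide
lemma mR22 : R22 ∈ RepL := by decide
lemma mR23 : R23 ∈ RepL := by decide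

lemma c0_0 : R1⁻¹ * (E 0 1) * R0 ∈ H := by
  have h : R1⁻¹ * (E 0 1) * R0 = 1 := by apply Subtype.ext; decide
  rw [h]; exact one_mem H
lemma c0_1 : R2⁻¹ * (E 0 1) * R1 ∈ H := by
  have h : R2⁻¹ * (E 0 1) * R1 = W0 := by apply Subtype.ext; decide
  rw [h]; exact hW0
lemma c0_2 : R0⁻¹ * (E 0 1) * R2 ∈ H := by
  have h : R0⁻¹ * (E 0 1) * R2 = 1 := by apply Subtype.ext; decide
  rw [h]; exact one_mem H
lemma c0_3 : R5⁻¹ * (E 0 1) * R3 ∈ H := by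
  have h : R5⁻¹ * (E 0 1) * R3 = 1 := by apply Subtype.ext; decide
  rw [h]; exact one_mem H
lemma c0_4 : R6⁻¹ * (E 0 1) * R4 ∈ H := by
  have h : R6⁻¹ * (E 0 1) * R4 = 1 := by apply Subtype.ext; decide
  rw [h]; exact one_mem H
lemma c0_5 : R7⁻¹ * (E 0 1) * R5 ∈ H := by
  have h : R7⁻¹ * (E 0 1) * R5 = U⁻¹ * W2 * U := by apply Subtype.ext; decide
  rw [h]; exact (mul_mem (mul_mem (inv_mem hU) hW2) hU)
lemma c0_6 : R8⁻¹ * (E 0 1) * R6 ∈ H := by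
  have h : R8⁻¹ * (E 0 1) * R6 = W1 := by apply Subtype.ext; decide
  rw [h]; exact hW1
lemma c0_7 : R3⁻¹ * (E 0 1) * R7 ∈ H := by
  have h : R3⁻¹ * (E 0 1) * R7 = 1 := by apply Subtype.ext; decide
  rw [h]; exact one_mem H
lemma c0_8 : R4⁻¹ * (E 0 1) * R8 ∈ H := by
  have h : R4⁻¹ * (E 0 1) * R8 = 1 := by apply Subtype.ext; decide
  rw [h]; exact one_mem H
lemma c0_9 : R13⁻¹ * (E 0 1) * R9 ∈ H := by
  have h : R13⁻¹ * (E 0 1) * R9 = 1 := by apply Subtype.ext; decide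
  rw [h]; exact one_mem H
lemma c0_10 : R14⁻¹ * (E 0 1) * R10 ∈ H := by
  have h : R14⁻¹ * (E 0 1) * R10 = 1 := by apply Subtype.ext; decide
  rw [h]; exact one_mem H
lemma c0_11 : R15⁻¹ * (E 0 1) * R11 ∈ H := by
  have h : R15⁻¹ * (E 0 1) * R11 = 1 := by apply Subtype.ext; decide
  rw [h]; exact one_mem H
lemma c0_12 : R16⁻¹ * (E 0 1) * R12 ∈ H := by
  have h : R16⁻¹ * (E 0 1) * R12 = 1 := by apply Subtype.ext; decide
  rw [h]; exact one_mem H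
lemma c0_13 : R17⁻¹ * (E 0 1) * R13 ∈ H := by
  have h : R17⁻¹ * (E 0 1) * R13 = W0⁻¹ * W1 * W0 := by apply Subtype.ext; decide
  rw [h]; exact (mul_mem (mul_mem (inv_mem hW0) hW1) hW0)
lemma c0_14 : R18⁻¹ * (E 0 1) * R14 ∈ H := by
  have h : R18⁻¹ * (E 0 1) * R14 = U⁻¹ := by apply Subtype.ext; decide
  rw [h]; exact (inv_mem hU)
lemma c0_15 : R19⁻¹ * (E 0 1) * R15 ∈ H := by
  have h : R19⁻¹ * (E 0 1) * R15 = U⁻¹ := by apply Subtype.ext; decide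
  rw [h]; exact (inv_mem hU)
lemma c0_16 : R20⁻¹ * (E 0 1) * R16 ∈ H := by
  have h : R20⁻¹ * (E 0 1) * R16 = W1⁻¹ * U * W0⁻¹ := by apply Subtype.ext; decide
  rw [h]; exact (mul_mem (mul_mem (inv_mem hW1) hU) (inv_mem hW0))
lemma c0_17 : R9⁻¹ * (E 0 1) * R17 ∈ H := by
  have h : R9⁻¹ * (E 0 1) * R17 = 1 := by apply Subtype.ext; decide
  rw [h]; exact one_mem H
lemma c0_18 : R10⁻¹ * (E 0 1) * R18 ∈ H := by
  have h : R10⁻¹ * (E 0 1) * R18 = 1 := by apply Subtype.ext; decide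
  rw [h]; exact one_mem H
lemma c0_19 : R11⁻¹ * (E 0 1) * R19 ∈ H := by
  have h : R11⁻¹ * (E 0 1) * R19 = 1 := by apply Subtype.ext; decide
  rw [h]; exact one_mem H
lemma c0_20 : R12⁻¹ * (E 0 1) * R20 ∈ H := by
  have h : R12⁻¹ * (E 0 1) * R20 = 1 := by apply Subtype.ext; decide
  rw [h]; exact one_mem H
lemma c0_21 : R23⁻¹ * (E 0 1) * R21 ∈ H := by
  have h : R23⁻¹ * (E 0 1) * R21 = 1 := by apply Subtype.ext; decide
  rw [h]; exact one_mem H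
lemma c0_22 : R21⁻¹ * (E 0 1) * R22 ∈ H := by
  have h : R21⁻¹ * (E 0 1) * R22 = U⁻¹ := by apply Subtype.ext; decide
  rw [h]; exact (inv_mem hU)
lemma c0_23 : R22⁻¹ * (E 0 1) * R23 ∈ H := by
  have h : R22⁻¹ * (E 0 1) * R23 = W1 * W0 * W1⁻¹ * U := by apply Subtype.ext; decide
  rw [h]; exact (mul_mem (mul_mem (mul_mem hW1 hW0) (inv_mem hW1)) hU)
lemma c1_0 : R2⁻¹ * (E 0 1)⁻¹ * R0 ∈ H := by
  have h : R2⁻¹ * (E 0 1)⁻¹ * R0 = 1 := by apply Subtype.ext; decide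
  rw [h]; exact one_mem H
lemma c1_1 : R0⁻¹ * (E 0 1)⁻¹ * R1 ∈ H := by
  have h : R0⁻¹ * (E 0 1)⁻¹ * R1 = 1 := by apply Subtype.ext; decide
  rw [h]; exact one_mem H
lemma c1_2 : R1⁻¹ * (E 0 1)⁻¹ * R2 ∈ H := by
  have h : R1⁻¹ * (E 0 1)⁻¹ * R2 = W0⁻¹ := by apply Subtype.ext; decide
  rw [h]; exact (inv_mem hW0)
lemma c1_3 : R7⁻¹ * (E 0 1)⁻¹ * R3 ∈ H := by
  have h : R7⁻¹ * (E 0 1)⁻¹ * R3 = 1 := by apply Subtype.ext; decide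
  rw [h]; exact one_mem H
lemma c1_4 : R8⁻¹ * (E 0 1)⁻¹ * R4 ∈ H := by
  have h : R8⁻¹ * (E 0 1)⁻¹ * R4 = 1 := by apply Subtype.ext; decide
  rw [h]; exact one_mem H
lemma c1_5 : R3⁻¹ * (E 0 1)⁻¹ * R5 ∈ H := by
  have h : R3⁻¹ * (E 0 1)⁻¹ * R5 = 1 := by apply Subtype.ext; decide
  rw [h]; exact one_mem H
lemma c1_6 : R4⁻¹ * (E 0 1)⁻¹ * R6 ∈ H := by
  have h : R4⁻¹ * (E 0 1)⁻¹ * R6 = 1 := by apply Subtype.ext; decide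
  rw [h]; exact one_mem H
lemma c1_7 : R5⁻¹ * (E 0 1)⁻¹ * R7 ∈ H := by
  have h : R5⁻¹ * (E 0 1)⁻¹ * R7 = U⁻¹ * W1 * W0 := by apply Subtype.ext; decide
  rw [h]; exact (mul_mem (mul_mem (inv_mem hU) hW1) hW0)
lemma c1_8 : R6⁻¹ * (E 0 1)⁻¹ * R8 ∈ H := by
  have h : R6⁻¹ * (E 0 1)⁻¹ * R8 = W1⁻¹ := by apply Subtype.ext; decide
  rw [h]; exact (inv_mem hW1)
lemma c1_9 : R17⁻¹ * (E 0 1)⁻¹ * R9 ∈ H := by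
  have h : R17⁻¹ * (E 0 1)⁻¹ * R9 = 1 := by apply Subtype.ext; decide
  rw [h]; exact one_mem H
lemma c1_10 : R18⁻¹ * (E 0 1)⁻¹ * R10 ∈ H := by
  have h : R18⁻¹ * (E 0 1)⁻¹ * R10 = 1 := by apply Subtype.ext; decide
  rw [h]; exact one_mem H
lemma c1_11 : R19⁻¹ * (E 0 1)⁻¹ * R11 ∈ H := by
  have h : R19⁻¹ * (E 0 1)⁻¹ * R11 = 1 := by apply Subtype.ext; decide
  rw [h]; exact one_mem H
lemma c1_12 : R20⁻¹ * (E 0 1)⁻¹ * R12 ∈ H := by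
  have h : R20⁻¹ * (E 0 1)⁻¹ * R12 = 1 := by apply Subtype.ext; decide
  rw [h]; exact one_mem H
lemma c1_13 : R9⁻¹ * (E 0 1)⁻¹ * R13 ∈ H := by
  have h : R9⁻¹ * (E 0 1)⁻¹ * R13 = 1 := by apply Subtype.ext; decide
  rw [h]; exact one_mem H
lemma c1_14 : R10⁻¹ * (E 0 1)⁻¹ * R14 ∈ H := by
  have h : R10⁻¹ * (E 0 1)⁻¹ * R14 = 1 := by apply Subtype.ext; decide
  rw [h]; exact one_mem H
lemma c1_15 : R11⁻¹ * (E 0 1)⁻¹ * R15 ∈ H := by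
  have h : R11⁻¹ * (E 0 1)⁻¹ * R15 = 1 := by apply Subtype.ext; decide
  rw [h]; exact one_mem H
lemma c1_16 : R12⁻¹ * (E 0 1)⁻¹ * R16 ∈ H := by
  have h : R12⁻¹ * (E 0 1)⁻¹ * R16 = 1 := by apply Subtype.ext; decide
  rw [h]; exact one_mem H
lemma c1_17 : R13⁻¹ * (E 0 1)⁻¹ * R17 ∈ H := by
  have h : R13⁻¹ * (E 0 1)⁻¹ * R17 = U⁻¹ * W2 * W0 := by apply Subtype.ext; decide
  rw [h]; exact (mul_mem (mul_mem (inv_mem hU) hW2) hW0)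
lemma c1_18 : R14⁻¹ * (E 0 1)⁻¹ * R18 ∈ H := by
  have h : R14⁻¹ * (E 0 1)⁻¹ * R18 = U := by apply Subtype.ext; decide
  rw [h]; exact hU
lemma c1_19 : R15⁻¹ * (E 0 1)⁻¹ * R19 ∈ H := by
  have h : R15⁻¹ * (E 0 1)⁻¹ * R19 = U := by apply Subtype.ext; decide
  rw [h]; exact hU
lemma c1_20 : R16⁻¹ * (E 0 1)⁻¹ * R20 ∈ H := by
  have h : R16⁻¹ * (E 0 1)⁻¹ * R20 = W0 * U⁻¹ * W1 := by apply Subtype.ext; decide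
  rw [h]; exact (mul_mem (mul_mem hW0 (inv_mem hU)) hW1)
lemma c1_21 : R22⁻¹ * (E 0 1)⁻¹ * R21 ∈ H := by
  have h : R22⁻¹ * (E 0 1)⁻¹ * R21 = U := by apply Subtype.ext; decide
  rw [h]; exact hU
lemma c1_22 : R23⁻¹ * (E 0 1)⁻¹ * R22 ∈ H := by
  have h : R23⁻¹ * (E 0 1)⁻¹ * R22 = U⁻¹ * W1 * U⁻¹ * W2 := by apply Subtype.ext; decide
  rw [h]; exact (mul_mem (mul_mem (mul_mem (inv_mem hU) hW1) (inv_mem hU)) hW2)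
lemma c1_23 : R21⁻¹ * (E 0 1)⁻¹ * R23 ∈ H := by
  have h : R21⁻¹ * (E 0 1)⁻¹ * R23 = 1 := by apply Subtype.ext; decide
  rw [h]; exact one_mem H
lemma c2_0 : R3⁻¹ * (E 1 0) * R0 ∈ H := by
  have h : R3⁻¹ * (E 1 0) * R0 = 1 := by apply Subtype.ext; decide
  rw [h]; exact one_mem H
lemma c2_1 : R9⁻¹ * (E 1 0) * R1 ∈ H := by
  have h : R9⁻¹ * (E 1 0) * R1 = 1 := by apply Subtype.ext; decide
  rw [h]; exact one_mem H
lemma c2_2 : R10⁻¹ * (E 1 0) * R2 ∈ H := by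
  have h : R10⁻¹ * (E 1 0) * R2 = 1 := by apply Subtype.ext; decide
  rw [h]; exact one_mem H
lemma c2_3 : R4⁻¹ * (E 1 0) * R3 ∈ H := by
  have h : R4⁻¹ * (E 1 0) * R3 = U := by apply Subtype.ext; decide
  rw [h]; exact hU
lemma c2_4 : R0⁻¹ * (E 1 0) * R4 ∈ H := by
  have h : R0⁻¹ * (E 1 0) * R4 = 1 := by apply Subtype.ext; decide
  rw [h]; exact one_mem H
lemma c2_5 : R21⁻¹ * (E 1 0) * R5 ∈ H := by
  have h : R21⁻¹ * (E 1 0) * R5 = 1 := by apply Subtype.ext; decide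
  rw [h]; exact one_mem H
lemma c2_6 : R16⁻¹ * (E 1 0) * R6 ∈ H := by
  have h : R16⁻¹ * (E 1 0) * R6 = 1 := by apply Subtype.ext; decide
  rw [h]; exact one_mem H
lemma c2_7 : R18⁻¹ * (E 1 0) * R7 ∈ H := by
  have h : R18⁻¹ * (E 1 0) * R7 = 1 := by apply Subtype.ext; decide
  rw [h]; exact one_mem H
lemma c2_8 : R14⁻¹ * (E 1 0) * R8 ∈ H := by
  have h : R14⁻¹ * (E 1 0) * R8 = 1 := by apply Subtype.ext; decide
  rw [h]; exact one_mem H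
lemma c2_9 : R11⁻¹ * (E 1 0) * R9 ∈ H := by
  have h : R11⁻¹ * (E 1 0) * R9 = U⁻¹ * W1 * W0 := by apply Subtype.ext; decide
  rw [h]; exact (mul_mem (mul_mem (inv_mem hU) hW1) hW0)
lemma c2_10 : R12⁻¹ * (E 1 0) * R10 ∈ H := by
  have h : R12⁻¹ * (E 1 0) * R10 = W1⁻¹ := by apply Subtype.ext; decide
  rw [h]; exact (inv_mem hW1)
lemma c2_11 : R1⁻¹ * (E 1 0) * R11 ∈ H := by
  have h : R1⁻¹ * (E 1 0) * R11 = 1 := by apply Subtype.ext; decide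
  rw [h]; exact one_mem H
lemma c2_12 : R2⁻¹ * (E 1 0) * R12 ∈ H := by
  have h : R2⁻¹ * (E 1 0) * R12 = 1 := by apply Subtype.ext; decide
  rw [h]; exact one_mem H
lemma c2_13 : R23⁻¹ * (E 1 0) * R13 ∈ H := by
  have h : R23⁻¹ * (E 1 0) * R13 = U⁻¹ * W1 * W1 * W0 := by apply Subtype.ext; decide
  rw [h]; exact (mul_mem (mul_mem (mul_mem (inv_mem hU) hW1) hW1) hW0)
lemma c2_14 : R22⁻¹ * (E 1 0) * R14 ∈ H := by
  have h : R22⁻¹ * (E 1 0) * R14 = W2⁻¹ := by apply Subtype.ext; decide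
  rw [h]; exact (inv_mem hW2)
lemma c2_15 : R6⁻¹ * (E 1 0) * R15 ∈ H := by
  have h : R6⁻¹ * (E 1 0) * R15 = 1 := by apply Subtype.ext; decide
  rw [h]; exact one_mem H
lemma c2_16 : R15⁻¹ * (E 1 0) * R16 ∈ H := by
  have h : R15⁻¹ * (E 1 0) * R16 = W0⁻¹ := by apply Subtype.ext; decide
  rw [h]; exact (inv_mem hW0)
lemma c2_17 : R7⁻¹ * (E 1 0) * R17 ∈ H := by
  have h : R7⁻¹ * (E 1 0) * R17 = 1 := by apply Subtype.ext; decide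
  rw [h]; exact one_mem H
lemma c2_18 : R17⁻¹ * (E 1 0) * R18 ∈ H := by
  have h : R17⁻¹ * (E 1 0) * R18 = W0⁻¹ := by apply Subtype.ext; decide
  rw [h]; exact (inv_mem hW0)
lemma c2_19 : R5⁻¹ * (E 1 0) * R19 ∈ H := by
  have h : R5⁻¹ * (E 1 0) * R19 = 1 := by apply Subtype.ext; decide
  rw [h]; exact one_mem H
lemma c2_20 : R13⁻¹ * (E 1 0) * R20 ∈ H := by
  have h : R13⁻¹ * (E 1 0) * R20 = W0⁻¹ := by apply Subtype.ext; decide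
  rw [h]; exact (inv_mem hW0)
lemma c2_21 : R19⁻¹ * (E 1 0) * R21 ∈ H := by
  have h : R19⁻¹ * (E 1 0) * R21 = U⁻¹ * W1⁻¹ * U := by apply Subtype.ext; decide
  rw [h]; exact (mul_mem (mul_mem (inv_mem hU) (inv_mem hW1)) hU)
lemma c2_22 : R8⁻¹ * (E 1 0) * R22 ∈ H := by
  have h : R8⁻¹ * (E 1 0) * R22 = 1 := by apply Subtype.ext; decide
  rw [h]; exact one_mem H
lemma c2_23 : R20⁻¹ * (E 1 0) * R23 ∈ H := by
  have h : R20⁻¹ * (E 1 0) * R23 = W1⁻¹ * U * W1⁻¹ * U := by apply Subtype.ext; decide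
  rw [h]; exact (mul_mem (mul_mem (mul_mem (inv_mem hW1) hU) (inv_mem hW1)) hU)
lemma c3_0 : R4⁻¹ * (E 1 0)⁻¹ * R0 ∈ H := by
  have h : R4⁻¹ * (E 1 0)⁻¹ * R0 = 1 := by apply Subtype.ext; decide
  rw [h]; exact one_mem H
lemma c3_1 : R11⁻¹ * (E 1 0)⁻¹ * R1 ∈ H := by
  have h : R11⁻¹ * (E 1 0)⁻¹ * R1 = 1 := by apply Subtype.ext; decide
  rw [h]; exact one_mem H
lemma c3_2 : R12⁻¹ * (E 1 0)⁻¹ * R2 ∈ H := by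
  have h : R12⁻¹ * (E 1 0)⁻¹ * R2 = 1 := by apply Subtype.ext; decide
  rw [h]; exact one_mem H
lemma c3_3 : R0⁻¹ * (E 1 0)⁻¹ * R3 ∈ H := by
  have h : R0⁻¹ * (E 1 0)⁻¹ * R3 = 1 := by apply Subtype.ext; decide
  rw [h]; exact one_mem H
lemma c3_4 : R3⁻¹ * (E 1 0)⁻¹ * R4 ∈ H := by
  have h : R3⁻¹ * (E 1 0)⁻¹ * R4 = U⁻¹ := by apply Subtype.ext; decide
  rw [h]; exact (inv_mem hU)
lemma c3_5 : R19⁻¹ * (E 1 0)⁻¹ * R5 ∈ H := by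
  have h : R19⁻¹ * (E 1 0)⁻¹ * R5 = 1 := by apply Subtype.ext; decide
  rw [h]; exact one_mem H
lemma c3_6 : R15⁻¹ * (E 1 0)⁻¹ * R6 ∈ H := by
  have h : R15⁻¹ * (E 1 0)⁻¹ * R6 = 1 := by apply Subtype.ext; decide
  rw [h]; exact one_mem H
lemma c3_7 : R17⁻¹ * (E 1 0)⁻¹ * R7 ∈ H := by
  have h : R17⁻¹ * (E 1 0)⁻¹ * R7 = 1 := by apply Subtype.ext; decide
  rw [h]; exact one_mem H
lemma c3_8 : R22⁻¹ * (E 1 0)⁻¹ * R8 ∈ H := by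
  have h : R22⁻¹ * (E 1 0)⁻¹ * R8 = 1 := by apply Subtype.ext; decide
  rw [h]; exact one_mem H
lemma c3_9 : R1⁻¹ * (E 1 0)⁻¹ * R9 ∈ H := by
  have h : R1⁻¹ * (E 1 0)⁻¹ * R9 = 1 := by apply Subtype.ext; decide
  rw [h]; exact one_mem H
lemma c3_10 : R2⁻¹ * (E 1 0)⁻¹ * R10 ∈ H := by
  have h : R2⁻¹ * (E 1 0)⁻¹ * R10 = 1 := by apply Subtype.ext; decide
  rw [h]; exact one_mem H
lemma c3_11 : R9⁻¹ * (E 1 0)⁻¹ * R11 ∈ H := by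
  have h : R9⁻¹ * (E 1 0)⁻¹ * R11 = U⁻¹ * W2 * U := by apply Subtype.ext; decide
  rw [h]; exact (mul_mem (mul_mem (inv_mem hU) hW2) hU)
lemma c3_12 : R10⁻¹ * (E 1 0)⁻¹ * R12 ∈ H := by
  have h : R10⁻¹ * (E 1 0)⁻¹ * R12 = W1 := by apply Subtype.ext; decide
  rw [h]; exact hW1
lemma c3_13 : R20⁻¹ * (E 1 0)⁻¹ * R13 ∈ H := by
  have h : R20⁻¹ * (E 1 0)⁻¹ * R13 = W0 := by apply Subtype.ext; decide
  rw [h]; exact hW0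
lemma c3_14 : R8⁻¹ * (E 1 0)⁻¹ * R14 ∈ H := by
  have h : R8⁻¹ * (E 1 0)⁻¹ * R14 = 1 := by apply Subtype.ext; decide
  rw [h]; exact one_mem H
lemma c3_15 : R16⁻¹ * (E 1 0)⁻¹ * R15 ∈ H := by
  have h : R16⁻¹ * (E 1 0)⁻¹ * R15 = W0 := by apply Subtype.ext; decide
  rw [h]; exact hW0
lemma c3_16 : R6⁻¹ * (E 1 0)⁻¹ * R16 ∈ H := by
  have h : R6⁻¹ * (E 1 0)⁻¹ * R16 = 1 := by apply Subtype.ext; decide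
  rw [h]; exact one_mem H
lemma c3_17 : R18⁻¹ * (E 1 0)⁻¹ * R17 ∈ H := by
  have h : R18⁻¹ * (E 1 0)⁻¹ * R17 = W0 := by apply Subtype.ext; decide
  rw [h]; exact hW0
lemma c3_18 : R7⁻¹ * (E 1 0)⁻¹ * R18 ∈ H := by
  have h : R7⁻¹ * (E 1 0)⁻¹ * R18 = 1 := by apply Subtype.ext; decide
  rw [h]; exact one_mem H
lemma c3_19 : R21⁻¹ * (E 1 0)⁻¹ * R19 ∈ H := by
  have h : R21⁻¹ * (E 1 0)⁻¹ * R19 = U⁻¹ * W1 * U := by apply Subtype.ext; decide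
  rw [h]; exact (mul_mem (mul_mem (inv_mem hU) hW1) hU)
lemma c3_20 : R23⁻¹ * (E 1 0)⁻¹ * R20 ∈ H := by
  have h : R23⁻¹ * (E 1 0)⁻¹ * R20 = U⁻¹ * W1 * U⁻¹ * W1 := by apply Subtype.ext; decide
  rw [h]; exact (mul_mem (mul_mem (mul_mem (inv_mem hU) hW1) (inv_mem hU)) hW1)
lemma c3_21 : R5⁻¹ * (E 1 0)⁻¹ * R21 ∈ H := by
  have h : R5⁻¹ * (E 1 0)⁻¹ * R21 = 1 := by apply Subtype.ext; decide
  rw [h]; exact one_mem H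
lemma c3_22 : R14⁻¹ * (E 1 0)⁻¹ * R22 ∈ H := by
  have h : R14⁻¹ * (E 1 0)⁻¹ * R22 = W2 := by apply Subtype.ext; decide
  rw [h]; exact hW2
lemma c3_23 : R13⁻¹ * (E 1 0)⁻¹ * R23 ∈ H := by
  have h : R13⁻¹ * (E 1 0)⁻¹ * R23 = U⁻¹ * W2 * W1⁻¹ * U := by apply Subtype.ext; decide
  rw [h]; exact (mul_mem (mul_mem (mul_mem (inv_mem hU) hW2) (inv_mem hW1)) hU)

lemma exists_rep (A : SLZ2) : ∃ t ∈ RepL, t⁻¹ * A ∈ H := by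
  have hA : A ∈ Subgroup.closure ({E 0 1, E 1 0} : Set SLZ2) := by rw [closure_ET]; trivial
  induction hA using Subgroup.closure_induction_left with
  | one =>
    refine ⟨R0, mR0, ?_⟩
    rw [show R0⁻¹ * 1 = 1 from by apply Subtype.ext; decide]
    exact one_mem H
  | mul_left x hx y hy ih =>
    obtain ⟨t, ht, hth⟩ := ih
    simp only [RepL, List.mem_cons, List.not_mem_nil, or_false] at ht
    simp only [Set.mem_insert_iff, Set.mem_singleton_iff] at hx
    rcases hx with rfl | rfl
    · rcases ht with rfl|rfl|rfl|rfl|rfl|rfl|rfl|rfl|rfl|rfl|rfl|rfl|rfl|rfl|rfl|rfl|rfl|rfl|rfl|rfl|rfl|rfl|rfl|rfl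
      · exact step c0_0 mR1 hth
      · exact step c0_1 mR2 hth
      · exact step c0_2 mR0 hth
      · exact step c0_3 mR5 hth
      · exact step c0_4 mR6 hth
      · exact step c0_5 mR7 hth
      · exact step c0_6 mR8 hth
      · exact step c0_7 mR3 hth
      · exact step c0_8 mR4 hth
      · exact step c0_9 mR13 hth
      · exact step c0_10 mR14 hth
      · exact step c0_11 mR15 hth
      · exact step c0_12 mR16 hth
      · exact step c0_13 mR17 hth
      · exact step c0_14 mR18 hth
      · exact step c0_15 mR19 hth
      · exact step c0_16 mR20 hth
      · exact step c0_17 mR9 hth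
      · exact step c0_18 mR10 hth
      · exact step c0_19 mR11 hth
      · exact step c0_20 mR12 hth
      · exact step c0_21 mR23 hth
      · exact step c0_22 mR21 hth
      · exact step c0_23 mR22 hth
    · rcases ht with rfl|rfl|rfl|rfl|rfl|rfl|rfl|rfl|rfl|rfl|rfl|rfl|rfl|rfl|rfl|rfl|rfl|rfl|rfl|rfl|rfl|rfl|rfl|rfl
      · exact step c2_0 mR3 hth
      · exact step c2_1 mR9 hth
      · exact step c2_2 mR10 hth
      · exact step c2_3 mR4 hth
      · exact step c2_4 mR0 hth
      · exact step c2_5 mR21 hth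
      · exact step c2_6 mR16 hth
      · exact step c2_7 mR18 hth
      · exact step c2_8 mR14 hth
      · exact step c2_9 mR11 hth
      · exact step c2_10 mR12 hth
      · exact step c2_11 mR1 hth
      · exact step c2_12 mR2 hth
      · exact step c2_13 mR23 hth
      · exact step c2_14 mR22 hth
      · exact step c2_15 mR6 hth
      · exact step c2_16 mR15 hth
      · exact step c2_17 mR7 hth
      · exact step c2_18 mR17 hth
      · exact step c2_19 mR5 hth
      · exact step c2_20 mR13 hth
      · exact step c2_21 mR19 hth
      · exact step c2_22 mR8 hth
      · exact step c2_23 mR20 hth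
  | inv_mul_cancel x hx y hy ih =>
    obtain ⟨t, ht, hth⟩ := ih
    simp only [RepL, List.mem_cons, List.not_mem_nil, or_false] at ht
    simp only [Set.mem_insert_iff, Set.mem_singleton_iff] at hx
    rcases hx with rfl | rfl
    · rcases ht with rfl|rfl|rfl|rfl|rfl|rfl|rfl|rfl|rfl|rfl|rfl|rfl|rfl|rfl|rfl|rfl|rfl|rfl|rfl|rfl|rfl|rfl|rfl|rfl
      · exact step c1_0 mR2 hth
      · exact step c1_1 mR0 hth
      · exact step c1_2 mR1 hth
      · exact step c1_3 mR7 hth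
      · exact step c1_4 mR8 hth
      · exact step c1_5 mR3 hth
      · exact step c1_6 mR4 hth
      · exact step c1_7 mR5 hth
      · exact step c1_8 mR6 hth
      · exact step c1_9 mR17 hth
      · exact step c1_10 mR18 hth
      · exact step c1_11 mR19 hth
      · exact step c1_12 mR20 hth
      · exact step c1_13 mR9 hth
      · exact step c1_14 mR10 hth
      · exact step c1_15 mR11 hth
      · exact step c1_16 mR12 hth
      · exact step c1_17 mR13 hth
      · exact step c1_18 mR14 hth
      · exact step c1_19 mR15 hth
      · exact step c1_20 mR16 hth
      · exact step c1_21 mR22 hth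
      · exact step c1_22 mR23 hth
      · exact step c1_23 mR21 hth
    · rcases ht with rfl|rfl|rfl|rfl|rfl|rfl|rfl|rfl|rfl|rfl|rfl|rfl|rfl|rfl|rfl|rfl|rfl|rfl|rfl|rfl|rfl|rfl|rfl|rfl
      · exact step c3_0 mR4 hth
      · exact step c3_1 mR11 hth
      · exact step c3_2 mR12 hth
      · exact step c3_3 mR0 hth
      · exact step c3_4 mR3 hth
      · exact step c3_5 mR19 hth
      · exact step c3_6 mR15 hth
      · exact step c3_7 mR17 hth
      · exact step c3_8 mR22 hth
      · exact step c3_9 mR1 hth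
      · exact step c3_10 mR2 hth
      · exact step c3_11 mR9 hth
      · exact step c3_12 mR10 hth
      · exact step c3_13 mR20 hth
      · exact step c3_14 mR8 hth
      · exact step c3_15 mR16 hth
      · exact step c3_16 mR6 hth
      · exact step c3_17 mR18 hth
      · exact step c3_18 mR7 hth
      · exact step c3_19 mR21 hth
      · exact step c3_20 mR23 hth
      · exact step c3_21 mR5 hth
      · exact step c3_22 mR14 hth
      · exact step c3_23 mR13 hth

lemma unique_rep : ∀ t ∈ RepL,
    Matrix.SpecialLinearGroup.map (n := Fin 2) (Int.castRingHom (ZMod 3)) t = 1 → t = R0 := by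
  decide

theorem result : Gamma 3 = Subgroup.closure SS := by
  apply le_antisymm
  · intro A hA
    obtain ⟨t, ht, hth⟩ := exists_rep A
    have h1 := Gamma_map (Hle hth)
    have h2 := Gamma_map hA
    rw [_root_.map_mul, _root_.map_inv, h2, mul_one, inv_eq_one] at h1
    have ht1 : t = R0 := unique_rep t ht h1
    subst ht1
    rw [show R0⁻¹ * A = A from by
      rw [show R0 = 1 from by apply Subtype.ext; decide, inv_one, one_mul]] at hth
    exact hth
  · exact Hle

end D3

namespace D4

def SS : Set SLZ2 :=
  {(E 1 0) ^ 4} ∪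
    {x : SLZ2 | ∃ m : ℕ, m ≤ 4 - 1 ∧ x = (E 1 0) ^ m * (E 0 1) ^ 4 * ((E 1 0) ^ m)⁻¹}

def H : Subgroup SLZ2 := Subgroup.closure SS

def U : SLZ2 := ⟨!![1, 0; 4, 1], by decide⟩
def W0 : SLZ2 := ⟨!![1, 4; 0, 1], by decide⟩
def W1 : SLZ2 := ⟨!![-3, 4; -4, 5], by decide⟩
def W2 : SLZ2 := ⟨!![-7, 4; -16, 9], by decide⟩
def W3 : SLZ2 := ⟨!![-11, 4; -36, 13], by decide⟩

lemma hU : U ∈ H := by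
  have h : (E 1 0) ^ 4 = U := by apply Subtype.ext; decide
  exact h ▸ Subgroup.subset_closure (Set.mem_union_left _ rfl)
lemma hW0 : W0 ∈ H := by
  have h : (E 1 0) ^ 0 * (E 0 1) ^ 4 * ((E 1 0) ^ 0)⁻¹ = W0 := by apply Subtype.ext; decide
  exact h ▸ Subgroup.subset_closure (Set.mem_union_right _ ⟨0, by norm_num, rfl⟩)
lemma hW1 : W1 ∈ H := by
  have h : (E 1 0) ^ 1 * (E 0 1) ^ 4 * ((E 1 0) ^ 1)⁻¹ = W1 := by apply Subtype.ext; decide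
  exact h ▸ Subgroup.subset_closure (Set.mem_union_right _ ⟨1, by norm_num, rfl⟩)
lemma hW2 : W2 ∈ H := by
  have h : (E 1 0) ^ 2 * (E 0 1) ^ 4 * ((E 1 0) ^ 2)⁻¹ = W2 := by apply Subtype.ext; decide
  exact h ▸ Subgroup.subset_closure (Set.mem_union_right _ ⟨2, by norm_num, rfl⟩)
lemma hW3 : W3 ∈ H := by
  have h : (E 1 0) ^ 3 * (E 0 1) ^ 4 * ((E 1 0) ^ 3)⁻¹ = W3 := by apply Subtype.ext; decide
  exact h ▸ Subgroup.subset_closure (Set.mem_union_right _ ⟨3, by norm_num, rfl⟩)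

lemma Hle : H ≤ Gamma 4 := by
  refine (Subgroup.closure_le _).mpr ?_
  rintro x (rfl | ⟨m, hm, rfl⟩)
  · exact mem_Gamma (by apply Subtype.ext; decide)
  · interval_cases m <;> exact mem_Gamma (by apply Subtype.ext; decide)

def R0 : SLZ2 := ⟨!![1, 0; 0, 1], by decide⟩
def R1 : SLZ2 := ⟨!![1, 1; 0, 1], by decide⟩
def R2 : SLZ2 := ⟨!![1, -1; 0, 1], by decide⟩
def R3 : SLZ2 := ⟨!![1, 0; 1, 1], by decide⟩
def R4 : SLZ2 := ⟨!![1, 0; -1, 1], by decide⟩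
def R5 : SLZ2 := ⟨!![1, 2; 0, 1], by decide⟩
def R6 : SLZ2 := ⟨!![2, 1; 1, 1], by decide⟩
def R7 : SLZ2 := ⟨!![0, 1; -1, 1], by decide⟩
def R8 : SLZ2 := ⟨!![0, -1; 1, 1], by decide⟩
def R9 : SLZ2 := ⟨!![2, -1; -1, 1], by decide⟩
def R10 : SLZ2 := ⟨!![1, 1; 1, 2], by decide⟩
def R11 : SLZ2 := ⟨!![1, -1; 1, 0], by decide⟩
def R12 : SLZ2 := ⟨!![1, 0; 2, 1], by decide⟩
def R13 : SLZ2 := ⟨!![1, 1; -1, 0], by decide⟩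
def R14 : SLZ2 := ⟨!![1, -1; -1, 2], by decide⟩
def R15 : SLZ2 := ⟨!![3, 2; 1, 1], by decide⟩
def R16 : SLZ2 := ⟨!![-1, 2; -1, 1], by decide⟩
def R17 : SLZ2 := ⟨!![2, 3; 1, 2], by decide⟩
def R18 : SLZ2 := ⟨!![2, -1; 1, 0], by decide⟩
def R19 : SLZ2 := ⟨!![3, 1; 2, 1], by decide⟩
def R20 : SLZ2 := ⟨!![0, 1; -1, 0], by decide⟩
def R21 : SLZ2 := ⟨!![0, 1; -1, 2], by decide⟩
def R22 : SLZ2 := ⟨!![0, -1; 1, 2], by decide⟩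
def R23 : SLZ2 := ⟨!![0, -1; 1, 0], by decide⟩
def R24 : SLZ2 := ⟨!![-1, -1; 2, 1], by decide⟩
def R25 : SLZ2 := ⟨!![2, 1; -1, 0], by decide⟩
def R26 : SLZ2 := ⟨!![2, -3; -1, 2], by decide⟩
def R27 : SLZ2 := ⟨!![1, 2; 1, 3], by decide⟩
def R28 : SLZ2 := ⟨!![1, 1; 2, 3], by decide⟩
def R29 : SLZ2 := ⟨!![1, -1; 2, -1], by decide⟩
def R30 : SLZ2 := ⟨!![1, 2; -1, -1], by decide⟩
def R31 : SLZ2 := ⟨!![3, 5; 1, 2], by decide⟩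
def R32 : SLZ2 := ⟨!![3, -1; 1, 0], by decide⟩
def R33 : SLZ2 := ⟨!![5, 2; 2, 1], by decide⟩
def R34 : SLZ2 := ⟨!![-1, 1; -1, 0], by decide⟩
def R35 : SLZ2 := ⟨!![-1, 3; -1, 2], by decide⟩
def R36 : SLZ2 := ⟨!![2, 5; 1, 3], by decide⟩
def R37 : SLZ2 := ⟨!![3, 4; 2, 3], by decide⟩
def R38 : SLZ2 := ⟨!![3, -2; 2, -1], by decide⟩
def R39 : SLZ2 := ⟨!![0, 1; -1, -1], by decide⟩
def R40 : SLZ2 := ⟨!![0, -1; 1, 3], by decide⟩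
def R41 : SLZ2 := ⟨!![2, 3; -1, -1], by decide⟩
def R42 : SLZ2 := ⟨!![3, 2; 4, 3], by decide⟩
def R43 : SLZ2 := ⟨!![3, 8; 1, 3], by decide⟩
def R44 : SLZ2 := ⟨!![-1, 0; -1, -1], by decide⟩
def R45 : SLZ2 := ⟨!![7, 5; 4, 3], by decide⟩
def R46 : SLZ2 := ⟨!![-1, -1; 4, 3], by decide⟩
def R47 : SLZ2 := ⟨!![11, 8; 4, 3], by decide⟩

def RepL : List SLZ2 :=
  [R0, R1, R2, R3, R4, R5, R6, R7, R8, R9, R10, R11, R12, R13, R14, R15, R16, R17, R18, R19, R20, R21, R22, R23, R24, R25, R26, R27, R28, R29, R30, R31, R32, R33, R34, R35, R36, R37, R38, R39, R40, R41, R42, R43, R44, R45, R46, R47]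

lemma mR0 : R0 ∈ RepL := by decide
lemma mR1 : R1 ∈ RepL := by decide
lemma mR2 : R2 ∈ RepL := by decide
lemma mR3 : R3 ∈ RepL := by decide
lemma mR4 : R4 ∈ RepL := by decide
lemma mR5 : R5 ∈ RepL := by decide
lemma mR6 : R6 ∈ RepL := by decide
lemma mR7 : R7 ∈ RepL := by decide
lemma mR8 : R8 ∈ RepL := by decide
lemma mR9 : R9 ∈ RepL := by decide
lemma mR10 : R10 ∈ RepL := by decide
lemma mR11 : R11 ∈ RepL := by decide
lemma mR12 : R12 ∈ RepL := by decide
lemma mR13 : R13 ∈ RepL := by decide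
lemma mR14 : R14 ∈ RepL := by decide
lemma mR15 : R15 ∈ RepL := by decide
lemma mR16 : R16 ∈ RepL := by decide
lemma mR17 : R17 ∈ RepL := by decide
lemma mR18 : R18 ∈ RepL := by decide
lemma mR19 : R19 ∈ RepL := by decide
lemma mR20 : R20 ∈ RepL := by decide
lemma mR21 : R21 ∈ RepL := by decide
lemma mR22 : R22 ∈ RepL := by decide
lemma mR23 : R23 ∈ RepL := by decide
lemma mR24 : R24 ∈ RepL := by decide
lemma mR25 : R25 ∈ RepL := by decide
lemma mR26 : R26 ∈ RepL := by decide
lemma mR27 : R27 ∈ RepL := by decide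
lemma mR28 : R28 ∈ RepL := by decide
lemma mR29 : R29 ∈ RepL := by decide
lemma mR30 : R30 ∈ RepL := by decide
lemma mR31 : R31 ∈ RepL := by decide
lemma mR32 : R32 ∈ RepL := by decide
lemma mR33 : R33 ∈ RepL := by decide
lemma mR34 : R34 ∈ RepL := by decide
lemma mR35 : R35 ∈ RepL := by decide
lemma mR36 : R36 ∈ RepL := by decide
lemma mR37 : R37 ∈ RepL := by decide
lemma mR38 : R38 ∈ RepL := by decide
lemma mR39 : R39 ∈ RepL := by decide
lemma mR40 : R40 ∈ RepL := by decide
lemma mR41 : R41 ∈ RepL := by decide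
lemma mR42 : R42 ∈ RepL := by decide
lemma mR43 : R43 ∈ RepL := by decide
lemma mR44 : R44 ∈ RepL := by decide
lemma mR45 : R45 ∈ RepL := by decide
lemma mR46 : R46 ∈ RepL := by decide
lemma mR47 : R47 ∈ RepL := by decide

lemma c0_0 : R1⁻¹ * (E 0 1) * R0 ∈ H := by
  have h : R1⁻¹ * (E 0 1) * R0 = 1 := by apply Subtype.ext; decide
  rw [h]; exact one_mem H
lemma c0_1 : R5⁻¹ * (E 0 1) * R1 ∈ H := by
  have h : R5⁻¹ * (E 0 1) * R1 = 1 := by apply Subtype.ext; decide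
  rw [h]; exact one_mem H
lemma c0_2 : R0⁻¹ * (E 0 1) * R2 ∈ H := by
  have h : R0⁻¹ * (E 0 1) * R2 = 1 := by apply Subtype.ext; decide
  rw [h]; exact one_mem H
lemma c0_3 : R6⁻¹ * (E 0 1) * R3 ∈ H := by
  have h : R6⁻¹ * (E 0 1) * R3 = 1 := by apply Subtype.ext; decide
  rw [h]; exact one_mem H
lemma c0_4 : R7⁻¹ * (E 0 1) * R4 ∈ H := by
  have h : R7⁻¹ * (E 0 1) * R4 = 1 := by apply Subtype.ext; decide
  rw [h]; exact one_mem H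
lemma c0_5 : R2⁻¹ * (E 0 1) * R5 ∈ H := by
  have h : R2⁻¹ * (E 0 1) * R5 = W0 := by apply Subtype.ext; decide
  rw [h]; exact hW0
lemma c0_6 : R15⁻¹ * (E 0 1) * R6 ∈ H := by
  have h : R15⁻¹ * (E 0 1) * R6 = 1 := by apply Subtype.ext; decide
  rw [h]; exact one_mem H
lemma c0_7 : R16⁻¹ * (E 0 1) * R7 ∈ H := by
  have h : R16⁻¹ * (E 0 1) * R7 = 1 := by apply Subtype.ext; decide
  rw [h]; exact one_mem H
lemma c0_8 : R3⁻¹ * (E 0 1) * R8 ∈ H := by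
  have h : R3⁻¹ * (E 0 1) * R8 = 1 := by apply Subtype.ext; decide
  rw [h]; exact one_mem H
lemma c0_9 : R4⁻¹ * (E 0 1) * R9 ∈ H := by
  have h : R4⁻¹ * (E 0 1) * R9 = 1 := by apply Subtype.ext; decide
  rw [h]; exact one_mem H
lemma c0_10 : R17⁻¹ * (E 0 1) * R10 ∈ H := by
  have h : R17⁻¹ * (E 0 1) * R10 = 1 := by apply Subtype.ext; decide
  rw [h]; exact one_mem H
lemma c0_11 : R18⁻¹ * (E 0 1) * R11 ∈ H := by
  have h : R18⁻¹ * (E 0 1) * R11 = 1 := by apply Subtype.ext; decide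
  rw [h]; exact one_mem H
lemma c0_12 : R19⁻¹ * (E 0 1) * R12 ∈ H := by
  have h : R19⁻¹ * (E 0 1) * R12 = 1 := by apply Subtype.ext; decide
  rw [h]; exact one_mem H
lemma c0_13 : R20⁻¹ * (E 0 1) * R13 ∈ H := by
  have h : R20⁻¹ * (E 0 1) * R13 = 1 := by apply Subtype.ext; decide
  rw [h]; exact one_mem H
lemma c0_14 : R21⁻¹ * (E 0 1) * R14 ∈ H := by
  have h : R21⁻¹ * (E 0 1) * R14 = 1 := by apply Subtype.ext; decide
  rw [h]; exact one_mem H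
lemma c0_15 : R8⁻¹ * (E 0 1) * R15 ∈ H := by
  have h : R8⁻¹ * (E 0 1) * R15 = U⁻¹ * W3 * U := by apply Subtype.ext; decide
  rw [h]; exact (mul_mem (mul_mem (inv_mem hU) hW3) hU)
lemma c0_16 : R9⁻¹ * (E 0 1) * R16 ∈ H := by
  have h : R9⁻¹ * (E 0 1) * R16 = W1 := by apply Subtype.ext; decide
  rw [h]; exact hW1
lemma c0_17 : R31⁻¹ * (E 0 1) * R17 ∈ H := by
  have h : R31⁻¹ * (E 0 1) * R17 = 1 := by apply Subtype.ext; decide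
  rw [h]; exact one_mem H
lemma c0_18 : R32⁻¹ * (E 0 1) * R18 ∈ H := by
  have h : R32⁻¹ * (E 0 1) * R18 = 1 := by apply Subtype.ext; decide
  rw [h]; exact one_mem H
lemma c0_19 : R33⁻¹ * (E 0 1) * R19 ∈ H := by
  have h : R33⁻¹ * (E 0 1) * R19 = 1 := by apply Subtype.ext; decide
  rw [h]; exact one_mem H
lemma c0_20 : R34⁻¹ * (E 0 1) * R20 ∈ H := by
  have h : R34⁻¹ * (E 0 1) * R20 = 1 := by apply Subtype.ext; decide
  rw [h]; exact one_mem H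
lemma c0_21 : R35⁻¹ * (E 0 1) * R21 ∈ H := by
  have h : R35⁻¹ * (E 0 1) * R21 = 1 := by apply Subtype.ext; decide
  rw [h]; exact one_mem H
lemma c0_22 : R10⁻¹ * (E 0 1) * R22 ∈ H := by
  have h : R10⁻¹ * (E 0 1) * R22 = 1 := by apply Subtype.ext; decide
  rw [h]; exact one_mem H
lemma c0_23 : R11⁻¹ * (E 0 1) * R23 ∈ H := by
  have h : R11⁻¹ * (E 0 1) * R23 = 1 := by apply Subtype.ext; decide
  rw [h]; exact one_mem H
lemma c0_24 : R12⁻¹ * (E 0 1) * R24 ∈ H := by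
  have h : R12⁻¹ * (E 0 1) * R24 = 1 := by apply Subtype.ext; decide
  rw [h]; exact one_mem H
lemma c0_25 : R13⁻¹ * (E 0 1) * R25 ∈ H := by
  have h : R13⁻¹ * (E 0 1) * R25 = 1 := by apply Subtype.ext; decide
  rw [h]; exact one_mem H
lemma c0_26 : R14⁻¹ * (E 0 1) * R26 ∈ H := by
  have h : R14⁻¹ * (E 0 1) * R26 = 1 := by apply Subtype.ext; decide
  rw [h]; exact one_mem H
lemma c0_27 : R36⁻¹ * (E 0 1) * R27 ∈ H := by
  have h : R36⁻¹ * (E 0 1) * R27 = 1 := by apply Subtype.ext; decide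
  rw [h]; exact one_mem H
lemma c0_28 : R37⁻¹ * (E 0 1) * R28 ∈ H := by
  have h : R37⁻¹ * (E 0 1) * R28 = 1 := by apply Subtype.ext; decide
  rw [h]; exact one_mem H
lemma c0_29 : R38⁻¹ * (E 0 1) * R29 ∈ H := by
  have h : R38⁻¹ * (E 0 1) * R29 = 1 := by apply Subtype.ext; decide
  rw [h]; exact one_mem H
lemma c0_30 : R39⁻¹ * (E 0 1) * R30 ∈ H := by
  have h : R39⁻¹ * (E 0 1) * R30 = 1 := by apply Subtype.ext; decide
  rw [h]; exact one_mem H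
lemma c0_31 : R22⁻¹ * (E 0 1) * R31 ∈ H := by
  have h : R22⁻¹ * (E 0 1) * R31 = W0⁻¹ * W1⁻¹ * W2⁻¹ * W3⁻¹ * U := by apply Subtype.ext; decide
  rw [h]; exact (mul_mem (mul_mem (mul_mem (mul_mem (inv_mem hW0) (inv_mem hW1)) (inv_mem hW2)) (inv_mem hW3)) hU)
lemma c0_32 : R23⁻¹ * (E 0 1) * R32 ∈ H := by
  have h : R23⁻¹ * (E 0 1) * R32 = U⁻¹ := by apply Subtype.ext; decide
  rw [h]; exact (inv_mem hU)
lemma c0_33 : R24⁻¹ * (E 0 1) * R33 ∈ H := by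
  have h : R24⁻¹ * (E 0 1) * R33 = U⁻¹ * W2 * U := by apply Subtype.ext; decide
  rw [h]; exact (mul_mem (mul_mem (inv_mem hU) hW2) hU)
lemma c0_34 : R25⁻¹ * (E 0 1) * R34 ∈ H := by
  have h : R25⁻¹ * (E 0 1) * R34 = U⁻¹ := by apply Subtype.ext; decide
  rw [h]; exact (inv_mem hU)
lemma c0_35 : R26⁻¹ * (E 0 1) * R35 ∈ H := by
  have h : R26⁻¹ * (E 0 1) * R35 = W1⁻¹ * W2⁻¹ * W3⁻¹ * U * W0⁻¹ := by apply Subtype.ext; decide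
  rw [h]; exact (mul_mem (mul_mem (mul_mem (mul_mem (inv_mem hW1) (inv_mem hW2)) (inv_mem hW3)) hU) (inv_mem hW0))
lemma c0_36 : R43⁻¹ * (E 0 1) * R36 ∈ H := by
  have h : R43⁻¹ * (E 0 1) * R36 = 1 := by apply Subtype.ext; decide
  rw [h]; exact one_mem H
lemma c0_37 : R29⁻¹ * (E 0 1) * R37 ∈ H := by
  have h : R29⁻¹ * (E 0 1) * R37 = W3⁻¹ * U := by apply Subtype.ext; decide
  rw [h]; exact (mul_mem (inv_mem hW3) hU)
lemma c0_38 : R28⁻¹ * (E 0 1) * R38 ∈ H := by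
  have h : R28⁻¹ * (E 0 1) * R38 = U⁻¹ * W3 * W2 := by apply Subtype.ext; decide
  rw [h]; exact (mul_mem (mul_mem (inv_mem hU) hW3) hW2)
lemma c0_39 : R44⁻¹ * (E 0 1) * R39 ∈ H := by
  have h : R44⁻¹ * (E 0 1) * R39 = 1 := by apply Subtype.ext; decide
  rw [h]; exact one_mem H
lemma c0_40 : R27⁻¹ * (E 0 1) * R40 ∈ H := by
  have h : R27⁻¹ * (E 0 1) * R40 = 1 := by apply Subtype.ext; decide
  rw [h]; exact one_mem H
lemma c0_41 : R30⁻¹ * (E 0 1) * R41 ∈ H := by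
  have h : R30⁻¹ * (E 0 1) * R41 = 1 := by apply Subtype.ext; decide
  rw [h]; exact one_mem H
lemma c0_42 : R45⁻¹ * (E 0 1) * R42 ∈ H := by
  have h : R45⁻¹ * (E 0 1) * R42 = 1 := by apply Subtype.ext; decide
  rw [h]; exact one_mem H
lemma c0_43 : R40⁻¹ * (E 0 1) * R43 ∈ H := by
  have h : R40⁻¹ * (E 0 1) * R43 = W0⁻¹ * W1 * W0 := by apply Subtype.ext; decide
  rw [h]; exact (mul_mem (mul_mem (inv_mem hW0) hW1) hW0)
lemma c0_44 : R41⁻¹ * (E 0 1) * R44 ∈ H := by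
  have h : R41⁻¹ * (E 0 1) * R44 = U⁻¹ * W3 * U := by apply Subtype.ext; decide
  rw [h]; exact (mul_mem (mul_mem (inv_mem hU) hW3) hU)
lemma c0_45 : R47⁻¹ * (E 0 1) * R45 ∈ H := by
  have h : R47⁻¹ * (E 0 1) * R45 = 1 := by apply Subtype.ext; decide
  rw [h]; exact one_mem H
lemma c0_46 : R42⁻¹ * (E 0 1) * R46 ∈ H := by
  have h : R42⁻¹ * (E 0 1) * R46 = 1 := by apply Subtype.ext; decide
  rw [h]; exact one_mem H
lemma c0_47 : R46⁻¹ * (E 0 1) * R47 ∈ H := by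
  have h : R46⁻¹ * (E 0 1) * R47 = U⁻¹ * W3⁻¹ * U * W0 * U⁻¹ * W3 * U := by apply Subtype.ext; decide
  rw [h]; exact (mul_mem (mul_mem (mul_mem (mul_mem (mul_mem (mul_mem (inv_mem hU) (inv_mem hW3)) hU) hW0) (inv_mem hU)) hW3) hU)
lemma c1_0 : R2⁻¹ * (E 0 1)⁻¹ * R0 ∈ H := by
  have h : R2⁻¹ * (E 0 1)⁻¹ * R0 = 1 := by apply Subtype.ext; decide
  rw [h]; exact one_mem H
lemma c1_1 : R0⁻¹ * (E 0 1)⁻¹ * R1 ∈ H := by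
  have h : R0⁻¹ * (E 0 1)⁻¹ * R1 = 1 := by apply Subtype.ext; decide
  rw [h]; exact one_mem H
lemma c1_2 : R5⁻¹ * (E 0 1)⁻¹ * R2 ∈ H := by
  have h : R5⁻¹ * (E 0 1)⁻¹ * R2 = W0⁻¹ := by apply Subtype.ext; decide
  rw [h]; exact (inv_mem hW0)
lemma c1_3 : R8⁻¹ * (E 0 1)⁻¹ * R3 ∈ H := by
  have h : R8⁻¹ * (E 0 1)⁻¹ * R3 = 1 := by apply Subtype.ext; decide
  rw [h]; exact one_mem H
lemma c1_4 : R9⁻¹ * (E 0 1)⁻¹ * R4 ∈ H := by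
  have h : R9⁻¹ * (E 0 1)⁻¹ * R4 = 1 := by apply Subtype.ext; decide
  rw [h]; exact one_mem H
lemma c1_5 : R1⁻¹ * (E 0 1)⁻¹ * R5 ∈ H := by
  have h : R1⁻¹ * (E 0 1)⁻¹ * R5 = 1 := by apply Subtype.ext; decide
  rw [h]; exact one_mem H
lemma c1_6 : R3⁻¹ * (E 0 1)⁻¹ * R6 ∈ H := by
  have h : R3⁻¹ * (E 0 1)⁻¹ * R6 = 1 := by apply Subtype.ext; decide
  rw [h]; exact one_mem H
lemma c1_7 : R4⁻¹ * (E 0 1)⁻¹ * R7 ∈ H := by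
  have h : R4⁻¹ * (E 0 1)⁻¹ * R7 = 1 := by apply Subtype.ext; decide
  rw [h]; exact one_mem H
lemma c1_8 : R15⁻¹ * (E 0 1)⁻¹ * R8 ∈ H := by
  have h : R15⁻¹ * (E 0 1)⁻¹ * R8 = U⁻¹ * W3⁻¹ * U := by apply Subtype.ext; decide
  rw [h]; exact (mul_mem (mul_mem (inv_mem hU) (inv_mem hW3)) hU)
lemma c1_9 : R16⁻¹ * (E 0 1)⁻¹ * R9 ∈ H := by
  have h : R16⁻¹ * (E 0 1)⁻¹ * R9 = W1⁻¹ := by apply Subtype.ext; decide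
  rw [h]; exact (inv_mem hW1)
lemma c1_10 : R22⁻¹ * (E 0 1)⁻¹ * R10 ∈ H := by
  have h : R22⁻¹ * (E 0 1)⁻¹ * R10 = 1 := by apply Subtype.ext; decide
  rw [h]; exact one_mem H
lemma c1_11 : R23⁻¹ * (E 0 1)⁻¹ * R11 ∈ H := by
  have h : R23⁻¹ * (E 0 1)⁻¹ * R11 = 1 := by apply Subtype.ext; decide
  rw [h]; exact one_mem H
lemma c1_12 : R24⁻¹ * (E 0 1)⁻¹ * R12 ∈ H := by
  have h : R24⁻¹ * (E 0 1)⁻¹ * R12 = 1 := by apply Subtype.ext; decide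
  rw [h]; exact one_mem H
lemma c1_13 : R25⁻¹ * (E 0 1)⁻¹ * R13 ∈ H := by
  have h : R25⁻¹ * (E 0 1)⁻¹ * R13 = 1 := by apply Subtype.ext; decide
  rw [h]; exact one_mem H
lemma c1_14 : R26⁻¹ * (E 0 1)⁻¹ * R14 ∈ H := by
  have h : R26⁻¹ * (E 0 1)⁻¹ * R14 = 1 := by apply Subtype.ext; decide
  rw [h]; exact one_mem H
lemma c1_15 : R6⁻¹ * (E 0 1)⁻¹ * R15 ∈ H := by
  have h : R6⁻¹ * (E 0 1)⁻¹ * R15 = 1 := by apply Subtype.ext; decide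
  rw [h]; exact one_mem H
lemma c1_16 : R7⁻¹ * (E 0 1)⁻¹ * R16 ∈ H := by
  have h : R7⁻¹ * (E 0 1)⁻¹ * R16 = 1 := by apply Subtype.ext; decide
  rw [h]; exact one_mem H
lemma c1_17 : R10⁻¹ * (E 0 1)⁻¹ * R17 ∈ H := by
  have h : R10⁻¹ * (E 0 1)⁻¹ * R17 = 1 := by apply Subtype.ext; decide
  rw [h]; exact one_mem H
lemma c1_18 : R11⁻¹ * (E 0 1)⁻¹ * R18 ∈ H := by
  have h : R11⁻¹ * (E 0 1)⁻¹ * R18 = 1 := by apply Subtype.ext; decide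
  rw [h]; exact one_mem H
lemma c1_19 : R12⁻¹ * (E 0 1)⁻¹ * R19 ∈ H := by
  have h : R12⁻¹ * (E 0 1)⁻¹ * R19 = 1 := by apply Subtype.ext; decide
  rw [h]; exact one_mem H
lemma c1_20 : R13⁻¹ * (E 0 1)⁻¹ * R20 ∈ H := by
  have h : R13⁻¹ * (E 0 1)⁻¹ * R20 = 1 := by apply Subtype.ext; decide
  rw [h]; exact one_mem H
lemma c1_21 : R14⁻¹ * (E 0 1)⁻¹ * R21 ∈ H := by
  have h : R14⁻¹ * (E 0 1)⁻¹ * R21 = 1 := by apply Subtype.ext; decide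
  rw [h]; exact one_mem H
lemma c1_22 : R31⁻¹ * (E 0 1)⁻¹ * R22 ∈ H := by
  have h : R31⁻¹ * (E 0 1)⁻¹ * R22 = U⁻¹ * W3 * W2 * W1 * W0 := by apply Subtype.ext; decide
  rw [h]; exact (mul_mem (mul_mem (mul_mem (mul_mem (inv_mem hU) hW3) hW2) hW1) hW0)
lemma c1_23 : R32⁻¹ * (E 0 1)⁻¹ * R23 ∈ H := by
  have h : R32⁻¹ * (E 0 1)⁻¹ * R23 = U := by apply Subtype.ext; decide
  rw [h]; exact hU
lemma c1_24 : R33⁻¹ * (E 0 1)⁻¹ * R24 ∈ H := by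
  have h : R33⁻¹ * (E 0 1)⁻¹ * R24 = U⁻¹ * W2⁻¹ * U := by apply Subtype.ext; decide
  rw [h]; exact (mul_mem (mul_mem (inv_mem hU) (inv_mem hW2)) hU)
lemma c1_25 : R34⁻¹ * (E 0 1)⁻¹ * R25 ∈ H := by
  have h : R34⁻¹ * (E 0 1)⁻¹ * R25 = U := by apply Subtype.ext; decide
  rw [h]; exact hU
lemma c1_26 : R35⁻¹ * (E 0 1)⁻¹ * R26 ∈ H := by
  have h : R35⁻¹ * (E 0 1)⁻¹ * R26 = W0 * U⁻¹ * W3 * W2 * W1 := by apply Subtype.ext; decide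
  rw [h]; exact (mul_mem (mul_mem (mul_mem (mul_mem hW0 (inv_mem hU)) hW3) hW2) hW1)
lemma c1_27 : R40⁻¹ * (E 0 1)⁻¹ * R27 ∈ H := by
  have h : R40⁻¹ * (E 0 1)⁻¹ * R27 = 1 := by apply Subtype.ext; decide
  rw [h]; exact one_mem H
lemma c1_28 : R38⁻¹ * (E 0 1)⁻¹ * R28 ∈ H := by
  have h : R38⁻¹ * (E 0 1)⁻¹ * R28 = W2⁻¹ * W3⁻¹ * U := by apply Subtype.ext; decide
  rw [h]; exact (mul_mem (mul_mem (inv_mem hW2) (inv_mem hW3)) hU)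
lemma c1_29 : R37⁻¹ * (E 0 1)⁻¹ * R29 ∈ H := by
  have h : R37⁻¹ * (E 0 1)⁻¹ * R29 = U⁻¹ * W3 := by apply Subtype.ext; decide
  rw [h]; exact (mul_mem (inv_mem hU) hW3)
lemma c1_30 : R41⁻¹ * (E 0 1)⁻¹ * R30 ∈ H := by
  have h : R41⁻¹ * (E 0 1)⁻¹ * R30 = 1 := by apply Subtype.ext; decide
  rw [h]; exact one_mem H
lemma c1_31 : R17⁻¹ * (E 0 1)⁻¹ * R31 ∈ H := by
  have h : R17⁻¹ * (E 0 1)⁻¹ * R31 = 1 := by apply Subtype.ext; decide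
  rw [h]; exact one_mem H
lemma c1_32 : R18⁻¹ * (E 0 1)⁻¹ * R32 ∈ H := by
  have h : R18⁻¹ * (E 0 1)⁻¹ * R32 = 1 := by apply Subtype.ext; decide
  rw [h]; exact one_mem H
lemma c1_33 : R19⁻¹ * (E 0 1)⁻¹ * R33 ∈ H := by
  have h : R19⁻¹ * (E 0 1)⁻¹ * R33 = 1 := by apply Subtype.ext; decide
  rw [h]; exact one_mem H
lemma c1_34 : R20⁻¹ * (E 0 1)⁻¹ * R34 ∈ H := by
  have h : R20⁻¹ * (E 0 1)⁻¹ * R34 = 1 := by apply Subtype.ext; decide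
  rw [h]; exact one_mem H
lemma c1_35 : R21⁻¹ * (E 0 1)⁻¹ * R35 ∈ H := by
  have h : R21⁻¹ * (E 0 1)⁻¹ * R35 = 1 := by apply Subtype.ext; decide
  rw [h]; exact one_mem H
lemma c1_36 : R27⁻¹ * (E 0 1)⁻¹ * R36 ∈ H := by
  have h : R27⁻¹ * (E 0 1)⁻¹ * R36 = 1 := by apply Subtype.ext; decide
  rw [h]; exact one_mem H
lemma c1_37 : R28⁻¹ * (E 0 1)⁻¹ * R37 ∈ H := by
  have h : R28⁻¹ * (E 0 1)⁻¹ * R37 = 1 := by apply Subtype.ext; decide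
  rw [h]; exact one_mem H
lemma c1_38 : R29⁻¹ * (E 0 1)⁻¹ * R38 ∈ H := by
  have h : R29⁻¹ * (E 0 1)⁻¹ * R38 = 1 := by apply Subtype.ext; decide
  rw [h]; exact one_mem H
lemma c1_39 : R30⁻¹ * (E 0 1)⁻¹ * R39 ∈ H := by
  have h : R30⁻¹ * (E 0 1)⁻¹ * R39 = 1 := by apply Subtype.ext; decide
  rw [h]; exact one_mem H
lemma c1_40 : R43⁻¹ * (E 0 1)⁻¹ * R40 ∈ H := by
  have h : R43⁻¹ * (E 0 1)⁻¹ * R40 = W0⁻¹ * W1⁻¹ * W0 := by apply Subtype.ext; decide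
  rw [h]; exact (mul_mem (mul_mem (inv_mem hW0) (inv_mem hW1)) hW0)
lemma c1_41 : R44⁻¹ * (E 0 1)⁻¹ * R41 ∈ H := by
  have h : R44⁻¹ * (E 0 1)⁻¹ * R41 = U⁻¹ * W3⁻¹ * U := by apply Subtype.ext; decide
  rw [h]; exact (mul_mem (mul_mem (inv_mem hU) (inv_mem hW3)) hU)
lemma c1_42 : R46⁻¹ * (E 0 1)⁻¹ * R42 ∈ H := by
  have h : R46⁻¹ * (E 0 1)⁻¹ * R42 = 1 := by apply Subtype.ext; decide
  rw [h]; exact one_mem H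
lemma c1_43 : R36⁻¹ * (E 0 1)⁻¹ * R43 ∈ H := by
  have h : R36⁻¹ * (E 0 1)⁻¹ * R43 = 1 := by apply Subtype.ext; decide
  rw [h]; exact one_mem H
lemma c1_44 : R39⁻¹ * (E 0 1)⁻¹ * R44 ∈ H := by
  have h : R39⁻¹ * (E 0 1)⁻¹ * R44 = 1 := by apply Subtype.ext; decide
  rw [h]; exact one_mem H
lemma c1_45 : R42⁻¹ * (E 0 1)⁻¹ * R45 ∈ H := by
  have h : R42⁻¹ * (E 0 1)⁻¹ * R45 = 1 := by apply Subtype.ext; decide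
  rw [h]; exact one_mem H
lemma c1_46 : R47⁻¹ * (E 0 1)⁻¹ * R46 ∈ H := by
  have h : R47⁻¹ * (E 0 1)⁻¹ * R46 = U⁻¹ * W3⁻¹ * U * W0⁻¹ * U⁻¹ * W3 * U := by apply Subtype.ext; decide
  rw [h]; exact (mul_mem (mul_mem (mul_mem (mul_mem (mul_mem (mul_mem (inv_mem hU) (inv_mem hW3)) hU) (inv_mem hW0)) (inv_mem hU)) hW3) hU)
lemma c1_47 : R45⁻¹ * (E 0 1)⁻¹ * R47 ∈ H := by
  have h : R45⁻¹ * (E 0 1)⁻¹ * R47 = 1 := by apply Subtype.ext; decide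
  rw [h]; exact one_mem H
lemma c2_0 : R3⁻¹ * (E 1 0) * R0 ∈ H := by
  have h : R3⁻¹ * (E 1 0) * R0 = 1 := by apply Subtype.ext; decide
  rw [h]; exact one_mem H
lemma c2_1 : R10⁻¹ * (E 1 0) * R1 ∈ H := by
  have h : R10⁻¹ * (E 1 0) * R1 = 1 := by apply Subtype.ext; decide
  rw [h]; exact one_mem H
lemma c2_2 : R11⁻¹ * (E 1 0) * R2 ∈ H := by
  have h : R11⁻¹ * (E 1 0) * R2 = 1 := by apply Subtype.ext; decide
  rw [h]; exact one_mem H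
lemma c2_3 : R12⁻¹ * (E 1 0) * R3 ∈ H := by
  have h : R12⁻¹ * (E 1 0) * R3 = 1 := by apply Subtype.ext; decide
  rw [h]; exact one_mem H
lemma c2_4 : R0⁻¹ * (E 1 0) * R4 ∈ H := by
  have h : R0⁻¹ * (E 1 0) * R4 = 1 := by apply Subtype.ext; decide
  rw [h]; exact one_mem H
lemma c2_5 : R27⁻¹ * (E 1 0) * R5 ∈ H := by
  have h : R27⁻¹ * (E 1 0) * R5 = 1 := by apply Subtype.ext; decide
  rw [h]; exact one_mem H
lemma c2_6 : R26⁻¹ * (E 1 0) * R6 ∈ H := by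
  have h : R26⁻¹ * (E 1 0) * R6 = W1⁻¹ * W2⁻¹ * U := by apply Subtype.ext; decide
  rw [h]; exact (mul_mem (mul_mem (inv_mem hW1) (inv_mem hW2)) hU)
lemma c2_7 : R21⁻¹ * (E 1 0) * R7 ∈ H := by
  have h : R21⁻¹ * (E 1 0) * R7 = 1 := by apply Subtype.ext; decide
  rw [h]; exact one_mem H
lemma c2_8 : R23⁻¹ * (E 1 0) * R8 ∈ H := by
  have h : R23⁻¹ * (E 1 0) * R8 = 1 := by apply Subtype.ext; decide
  rw [h]; exact one_mem H
lemma c2_9 : R18⁻¹ * (E 1 0) * R9 ∈ H := by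
  have h : R18⁻¹ * (E 1 0) * R9 = 1 := by apply Subtype.ext; decide
  rw [h]; exact one_mem H
lemma c2_10 : R28⁻¹ * (E 1 0) * R10 ∈ H := by
  have h : R28⁻¹ * (E 1 0) * R10 = 1 := by apply Subtype.ext; decide
  rw [h]; exact one_mem H
lemma c2_11 : R29⁻¹ * (E 1 0) * R11 ∈ H := by
  have h : R29⁻¹ * (E 1 0) * R11 = 1 := by apply Subtype.ext; decide
  rw [h]; exact one_mem H
lemma c2_12 : R4⁻¹ * (E 1 0) * R12 ∈ H := by
  have h : R4⁻¹ * (E 1 0) * R12 = U := by apply Subtype.ext; decide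
  rw [h]; exact hU
lemma c2_13 : R1⁻¹ * (E 1 0) * R13 ∈ H := by
  have h : R1⁻¹ * (E 1 0) * R13 = 1 := by apply Subtype.ext; decide
  rw [h]; exact one_mem H
lemma c2_14 : R2⁻¹ * (E 1 0) * R14 ∈ H := by
  have h : R2⁻¹ * (E 1 0) * R14 = 1 := by apply Subtype.ext; decide
  rw [h]; exact one_mem H
lemma c2_15 : R42⁻¹ * (E 1 0) * R15 ∈ H := by
  have h : R42⁻¹ * (E 1 0) * R15 = 1 := by apply Subtype.ext; decide
  rw [h]; exact one_mem H
lemma c2_16 : R38⁻¹ * (E 1 0) * R16 ∈ H := by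
  have h : R38⁻¹ * (E 1 0) * R16 = W1 := by apply Subtype.ext; decide
  rw [h]; exact hW1
lemma c2_17 : R9⁻¹ * (E 1 0) * R17 ∈ H := by
  have h : R9⁻¹ * (E 1 0) * R17 = W2⁻¹ * W3⁻¹ * U := by apply Subtype.ext; decide
  rw [h]; exact (mul_mem (mul_mem (inv_mem hW2) (inv_mem hW3)) hU)
lemma c2_18 : R41⁻¹ * (E 1 0) * R18 ∈ H := by
  have h : R41⁻¹ * (E 1 0) * R18 = U⁻¹ * W3 := by apply Subtype.ext; decide
  rw [h]; exact (mul_mem (inv_mem hU) hW3)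
lemma c2_19 : R31⁻¹ * (E 1 0) * R19 ∈ H := by
  have h : R31⁻¹ * (E 1 0) * R19 = U⁻¹ * W3 * W2 * U := by apply Subtype.ext; decide
  rw [h]; exact (mul_mem (mul_mem (mul_mem (inv_mem hU) hW3) hW2) hU)
lemma c2_20 : R7⁻¹ * (E 1 0) * R20 ∈ H := by
  have h : R7⁻¹ * (E 1 0) * R20 = 1 := by apply Subtype.ext; decide
  rw [h]; exact one_mem H
lemma c2_21 : R39⁻¹ * (E 1 0) * R21 ∈ H := by
  have h : R39⁻¹ * (E 1 0) * R21 = W0⁻¹ := by apply Subtype.ext; decide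
  rw [h]; exact (inv_mem hW0)
lemma c2_22 : R8⁻¹ * (E 1 0) * R22 ∈ H := by
  have h : R8⁻¹ * (E 1 0) * R22 = 1 := by apply Subtype.ext; decide
  rw [h]; exact one_mem H
lemma c2_23 : R40⁻¹ * (E 1 0) * R23 ∈ H := by
  have h : R40⁻¹ * (E 1 0) * R23 = W0⁻¹ := by apply Subtype.ext; decide
  rw [h]; exact (inv_mem hW0)
lemma c2_24 : R32⁻¹ * (E 1 0) * R24 ∈ H := by
  have h : R32⁻¹ * (E 1 0) * R24 = U := by apply Subtype.ext; decide
  rw [h]; exact hU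
lemma c2_25 : R6⁻¹ * (E 1 0) * R25 ∈ H := by
  have h : R6⁻¹ * (E 1 0) * R25 = 1 := by apply Subtype.ext; decide
  rw [h]; exact one_mem H
lemma c2_26 : R36⁻¹ * (E 1 0) * R26 ∈ H := by
  have h : R36⁻¹ * (E 1 0) * R26 = W0⁻¹ := by apply Subtype.ext; decide
  rw [h]; exact (inv_mem hW0)
lemma c2_27 : R33⁻¹ * (E 1 0) * R27 ∈ H := by
  have h : R33⁻¹ * (E 1 0) * R27 = U⁻¹ * W1 * W0 := by apply Subtype.ext; decide
  rw [h]; exact (mul_mem (mul_mem (inv_mem hU) hW1) hW0)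
lemma c2_28 : R13⁻¹ * (E 1 0) * R28 ∈ H := by
  have h : R13⁻¹ * (E 1 0) * R28 = U⁻¹ * W3⁻¹ * U := by apply Subtype.ext; decide
  rw [h]; exact (mul_mem (mul_mem (inv_mem hU) (inv_mem hW3)) hU)
lemma c2_29 : R14⁻¹ * (E 1 0) * R29 ∈ H := by
  have h : R14⁻¹ * (E 1 0) * R29 = W1⁻¹ := by apply Subtype.ext; decide
  rw [h]; exact (inv_mem hW1)
lemma c2_30 : R5⁻¹ * (E 1 0) * R30 ∈ H := by
  have h : R5⁻¹ * (E 1 0) * R30 = 1 := by apply Subtype.ext; decide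
  rw [h]; exact one_mem H
lemma c2_31 : R45⁻¹ * (E 1 0) * R31 ∈ H := by
  have h : R45⁻¹ * (E 1 0) * R31 = U⁻¹ * W3⁻¹ * U * W0⁻¹ * W1⁻¹ * W2⁻¹ * W3⁻¹ * U := by apply Subtype.ext; decide
  rw [h]; exact (mul_mem (mul_mem (mul_mem (mul_mem (mul_mem (mul_mem (mul_mem (inv_mem hU) (inv_mem hW3)) hU) (inv_mem hW0)) (inv_mem hW1)) (inv_mem hW2)) (inv_mem hW3)) hU)
lemma c2_32 : R46⁻¹ * (E 1 0) * R32 ∈ H := by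
  have h : R46⁻¹ * (E 1 0) * R32 = U⁻¹ * W3⁻¹ := by apply Subtype.ext; decide
  rw [h]; exact (mul_mem (inv_mem hU) (inv_mem hW3))
lemma c2_33 : R30⁻¹ * (E 1 0) * R33 ∈ H := by
  have h : R30⁻¹ * (E 1 0) * R33 = U⁻¹ * W3 * W2 * U := by apply Subtype.ext; decide
  rw [h]; exact (mul_mem (mul_mem (mul_mem (inv_mem hU) hW3) hW2) hU)
lemma c2_34 : R19⁻¹ * (E 1 0) * R34 ∈ H := by
  have h : R19⁻¹ * (E 1 0) * R34 = U⁻¹ := by apply Subtype.ext; decide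
  rw [h]; exact (inv_mem hU)
lemma c2_35 : R24⁻¹ * (E 1 0) * R35 ∈ H := by
  have h : R24⁻¹ * (E 1 0) * R35 = U⁻¹ * W3⁻¹ * U * W0⁻¹ := by apply Subtype.ext; decide
  rw [h]; exact (mul_mem (mul_mem (mul_mem (inv_mem hU) (inv_mem hW3)) hU) (inv_mem hW0))
lemma c2_36 : R25⁻¹ * (E 1 0) * R36 ∈ H := by
  have h : R25⁻¹ * (E 1 0) * R36 = U⁻¹ * W1 * W0 := by apply Subtype.ext; decide
  rw [h]; exact (mul_mem (mul_mem (inv_mem hU) hW1) hW0)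
lemma c2_37 : R43⁻¹ * (E 1 0) * R37 ∈ H := by
  have h : R43⁻¹ * (E 1 0) * R37 = W0⁻¹ * W1⁻¹ * W3⁻¹ * U := by apply Subtype.ext; decide
  rw [h]; exact (mul_mem (mul_mem (mul_mem (inv_mem hW0) (inv_mem hW1)) (inv_mem hW3)) hU)
lemma c2_38 : R15⁻¹ * (E 1 0) * R38 ∈ H := by
  have h : R15⁻¹ * (E 1 0) * R38 = U⁻¹ * W2 := by apply Subtype.ext; decide
  rw [h]; exact (mul_mem (inv_mem hU) hW2)
lemma c2_39 : R20⁻¹ * (E 1 0) * R39 ∈ H := by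
  have h : R20⁻¹ * (E 1 0) * R39 = 1 := by apply Subtype.ext; decide
  rw [h]; exact one_mem H
lemma c2_40 : R22⁻¹ * (E 1 0) * R40 ∈ H := by
  have h : R22⁻¹ * (E 1 0) * R40 = 1 := by apply Subtype.ext; decide
  rw [h]; exact one_mem H
lemma c2_41 : R17⁻¹ * (E 1 0) * R41 ∈ H := by
  have h : R17⁻¹ * (E 1 0) * R41 = 1 := by apply Subtype.ext; decide
  rw [h]; exact one_mem H
lemma c2_42 : R16⁻¹ * (E 1 0) * R42 ∈ H := by
  have h : R16⁻¹ * (E 1 0) * R42 = W0 * U⁻¹ * W3 * U := by apply Subtype.ext; decide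
  rw [h]; exact (mul_mem (mul_mem (mul_mem hW0 (inv_mem hU)) hW3) hU)
lemma c2_43 : R47⁻¹ * (E 1 0) * R43 ∈ H := by
  have h : R47⁻¹ * (E 1 0) * R43 = U⁻¹ * W3⁻¹ * U * W0⁻¹ * W1 * W0 := by apply Subtype.ext; decide
  rw [h]; exact (mul_mem (mul_mem (mul_mem (mul_mem (mul_mem (inv_mem hU) (inv_mem hW3)) hU) (inv_mem hW0)) hW1) hW0)
lemma c2_44 : R37⁻¹ * (E 1 0) * R44 ∈ H := by
  have h : R37⁻¹ * (E 1 0) * R44 = U⁻¹ * W3 * U := by apply Subtype.ext; decide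
  rw [h]; exact (mul_mem (mul_mem (inv_mem hU) hW3) hU)
lemma c2_45 : R34⁻¹ * (E 1 0) * R45 ∈ H := by
  have h : R34⁻¹ * (E 1 0) * R45 = W0 * U⁻¹ * W3 * U := by apply Subtype.ext; decide
  rw [h]; exact (mul_mem (mul_mem (mul_mem hW0 (inv_mem hU)) hW3) hU)
lemma c2_46 : R35⁻¹ * (E 1 0) * R46 ∈ H := by
  have h : R35⁻¹ * (E 1 0) * R46 = W0 * U⁻¹ * W3 * U := by apply Subtype.ext; decide
  rw [h]; exact (mul_mem (mul_mem (mul_mem hW0 (inv_mem hU)) hW3) hU)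
lemma c2_47 : R44⁻¹ * (E 1 0) * R47 ∈ H := by
  have h : R44⁻¹ * (E 1 0) * R47 = W0 * U⁻¹ * W3 * U := by apply Subtype.ext; decide
  rw [h]; exact (mul_mem (mul_mem (mul_mem hW0 (inv_mem hU)) hW3) hU)
lemma c3_0 : R4⁻¹ * (E 1 0)⁻¹ * R0 ∈ H := by
  have h : R4⁻¹ * (E 1 0)⁻¹ * R0 = 1 := by apply Subtype.ext; decide
  rw [h]; exact one_mem H
lemma c3_1 : R13⁻¹ * (E 1 0)⁻¹ * R1 ∈ H := by
  have h : R13⁻¹ * (E 1 0)⁻¹ * R1 = 1 := by apply Subtype.ext; decide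
  rw [h]; exact one_mem H
lemma c3_2 : R14⁻¹ * (E 1 0)⁻¹ * R2 ∈ H := by
  have h : R14⁻¹ * (E 1 0)⁻¹ * R2 = 1 := by apply Subtype.ext; decide
  rw [h]; exact one_mem H
lemma c3_3 : R0⁻¹ * (E 1 0)⁻¹ * R3 ∈ H := by
  have h : R0⁻¹ * (E 1 0)⁻¹ * R3 = 1 := by apply Subtype.ext; decide
  rw [h]; exact one_mem H
lemma c3_4 : R12⁻¹ * (E 1 0)⁻¹ * R4 ∈ H := by
  have h : R12⁻¹ * (E 1 0)⁻¹ * R4 = U⁻¹ := by apply Subtype.ext; decide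
  rw [h]; exact (inv_mem hU)
lemma c3_5 : R30⁻¹ * (E 1 0)⁻¹ * R5 ∈ H := by
  have h : R30⁻¹ * (E 1 0)⁻¹ * R5 = 1 := by apply Subtype.ext; decide
  rw [h]; exact one_mem H
lemma c3_6 : R25⁻¹ * (E 1 0)⁻¹ * R6 ∈ H := by
  have h : R25⁻¹ * (E 1 0)⁻¹ * R6 = 1 := by apply Subtype.ext; decide
  rw [h]; exact one_mem H
lemma c3_7 : R20⁻¹ * (E 1 0)⁻¹ * R7 ∈ H := by
  have h : R20⁻¹ * (E 1 0)⁻¹ * R7 = 1 := by apply Subtype.ext; decide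
  rw [h]; exact one_mem H
lemma c3_8 : R22⁻¹ * (E 1 0)⁻¹ * R8 ∈ H := by
  have h : R22⁻¹ * (E 1 0)⁻¹ * R8 = 1 := by apply Subtype.ext; decide
  rw [h]; exact one_mem H
lemma c3_9 : R17⁻¹ * (E 1 0)⁻¹ * R9 ∈ H := by
  have h : R17⁻¹ * (E 1 0)⁻¹ * R9 = U⁻¹ * W3 * W2 := by apply Subtype.ext; decide
  rw [h]; exact (mul_mem (mul_mem (inv_mem hU) hW3) hW2)
lemma c3_10 : R1⁻¹ * (E 1 0)⁻¹ * R10 ∈ H := by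
  have h : R1⁻¹ * (E 1 0)⁻¹ * R10 = 1 := by apply Subtype.ext; decide
  rw [h]; exact one_mem H
lemma c3_11 : R2⁻¹ * (E 1 0)⁻¹ * R11 ∈ H := by
  have h : R2⁻¹ * (E 1 0)⁻¹ * R11 = 1 := by apply Subtype.ext; decide
  rw [h]; exact one_mem H
lemma c3_12 : R3⁻¹ * (E 1 0)⁻¹ * R12 ∈ H := by
  have h : R3⁻¹ * (E 1 0)⁻¹ * R12 = 1 := by apply Subtype.ext; decide
  rw [h]; exact one_mem H
lemma c3_13 : R28⁻¹ * (E 1 0)⁻¹ * R13 ∈ H := by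
  have h : R28⁻¹ * (E 1 0)⁻¹ * R13 = U⁻¹ * W3 * U := by apply Subtype.ext; decide
  rw [h]; exact (mul_mem (mul_mem (inv_mem hU) hW3) hU)
lemma c3_14 : R29⁻¹ * (E 1 0)⁻¹ * R14 ∈ H := by
  have h : R29⁻¹ * (E 1 0)⁻¹ * R14 = W1 := by apply Subtype.ext; decide
  rw [h]; exact hW1
lemma c3_15 : R38⁻¹ * (E 1 0)⁻¹ * R15 ∈ H := by
  have h : R38⁻¹ * (E 1 0)⁻¹ * R15 = W2⁻¹ * U := by apply Subtype.ext; decide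
  rw [h]; exact (mul_mem (inv_mem hW2) hU)
lemma c3_16 : R42⁻¹ * (E 1 0)⁻¹ * R16 ∈ H := by
  have h : R42⁻¹ * (E 1 0)⁻¹ * R16 = U⁻¹ * W3⁻¹ * U * W0⁻¹ := by apply Subtype.ext; decide
  rw [h]; exact (mul_mem (mul_mem (mul_mem (inv_mem hU) (inv_mem hW3)) hU) (inv_mem hW0))
lemma c3_17 : R41⁻¹ * (E 1 0)⁻¹ * R17 ∈ H := by
  have h : R41⁻¹ * (E 1 0)⁻¹ * R17 = 1 := by apply Subtype.ext; decide
  rw [h]; exact one_mem H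
lemma c3_18 : R9⁻¹ * (E 1 0)⁻¹ * R18 ∈ H := by
  have h : R9⁻¹ * (E 1 0)⁻¹ * R18 = 1 := by apply Subtype.ext; decide
  rw [h]; exact one_mem H
lemma c3_19 : R34⁻¹ * (E 1 0)⁻¹ * R19 ∈ H := by
  have h : R34⁻¹ * (E 1 0)⁻¹ * R19 = U := by apply Subtype.ext; decide
  rw [h]; exact hU
lemma c3_20 : R39⁻¹ * (E 1 0)⁻¹ * R20 ∈ H := by
  have h : R39⁻¹ * (E 1 0)⁻¹ * R20 = 1 := by apply Subtype.ext; decide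
  rw [h]; exact one_mem H
lemma c3_21 : R7⁻¹ * (E 1 0)⁻¹ * R21 ∈ H := by
  have h : R7⁻¹ * (E 1 0)⁻¹ * R21 = 1 := by apply Subtype.ext; decide
  rw [h]; exact one_mem H
lemma c3_22 : R40⁻¹ * (E 1 0)⁻¹ * R22 ∈ H := by
  have h : R40⁻¹ * (E 1 0)⁻¹ * R22 = 1 := by apply Subtype.ext; decide
  rw [h]; exact one_mem H
lemma c3_23 : R8⁻¹ * (E 1 0)⁻¹ * R23 ∈ H := by
  have h : R8⁻¹ * (E 1 0)⁻¹ * R23 = 1 := by apply Subtype.ext; decide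
  rw [h]; exact one_mem H
lemma c3_24 : R35⁻¹ * (E 1 0)⁻¹ * R24 ∈ H := by
  have h : R35⁻¹ * (E 1 0)⁻¹ * R24 = W0 * U⁻¹ * W3 * U := by apply Subtype.ext; decide
  rw [h]; exact (mul_mem (mul_mem (mul_mem hW0 (inv_mem hU)) hW3) hU)
lemma c3_25 : R36⁻¹ * (E 1 0)⁻¹ * R25 ∈ H := by
  have h : R36⁻¹ * (E 1 0)⁻¹ * R25 = W0⁻¹ * W1⁻¹ * U := by apply Subtype.ext; decide
  rw [h]; exact (mul_mem (mul_mem (inv_mem hW0) (inv_mem hW1)) hU)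
lemma c3_26 : R6⁻¹ * (E 1 0)⁻¹ * R26 ∈ H := by
  have h : R6⁻¹ * (E 1 0)⁻¹ * R26 = U⁻¹ * W2 * W1 := by apply Subtype.ext; decide
  rw [h]; exact (mul_mem (mul_mem (inv_mem hU) hW2) hW1)
lemma c3_27 : R5⁻¹ * (E 1 0)⁻¹ * R27 ∈ H := by
  have h : R5⁻¹ * (E 1 0)⁻¹ * R27 = 1 := by apply Subtype.ext; decide
  rw [h]; exact one_mem H
lemma c3_28 : R10⁻¹ * (E 1 0)⁻¹ * R28 ∈ H := by
  have h : R10⁻¹ * (E 1 0)⁻¹ * R28 = 1 := by apply Subtype.ext; decide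
  rw [h]; exact one_mem H
lemma c3_29 : R11⁻¹ * (E 1 0)⁻¹ * R29 ∈ H := by
  have h : R11⁻¹ * (E 1 0)⁻¹ * R29 = 1 := by apply Subtype.ext; decide
  rw [h]; exact one_mem H
lemma c3_30 : R33⁻¹ * (E 1 0)⁻¹ * R30 ∈ H := by
  have h : R33⁻¹ * (E 1 0)⁻¹ * R30 = U⁻¹ * W2⁻¹ * W3⁻¹ * U := by apply Subtype.ext; decide
  rw [h]; exact (mul_mem (mul_mem (mul_mem (inv_mem hU) (inv_mem hW2)) (inv_mem hW3)) hU)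
lemma c3_31 : R19⁻¹ * (E 1 0)⁻¹ * R31 ∈ H := by
  have h : R19⁻¹ * (E 1 0)⁻¹ * R31 = U⁻¹ * W2⁻¹ * W3⁻¹ * U := by apply Subtype.ext; decide
  rw [h]; exact (mul_mem (mul_mem (mul_mem (inv_mem hU) (inv_mem hW2)) (inv_mem hW3)) hU)
lemma c3_32 : R24⁻¹ * (E 1 0)⁻¹ * R32 ∈ H := by
  have h : R24⁻¹ * (E 1 0)⁻¹ * R32 = U⁻¹ := by apply Subtype.ext; decide
  rw [h]; exact (inv_mem hU)
lemma c3_33 : R27⁻¹ * (E 1 0)⁻¹ * R33 ∈ H := by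
  have h : R27⁻¹ * (E 1 0)⁻¹ * R33 = W0⁻¹ * W1⁻¹ * U := by apply Subtype.ext; decide
  rw [h]; exact (mul_mem (mul_mem (inv_mem hW0) (inv_mem hW1)) hU)
lemma c3_34 : R45⁻¹ * (E 1 0)⁻¹ * R34 ∈ H := by
  have h : R45⁻¹ * (E 1 0)⁻¹ * R34 = U⁻¹ * W3⁻¹ * U * W0⁻¹ := by apply Subtype.ext; decide
  rw [h]; exact (mul_mem (mul_mem (mul_mem (inv_mem hU) (inv_mem hW3)) hU) (inv_mem hW0))
lemma c3_35 : R46⁻¹ * (E 1 0)⁻¹ * R35 ∈ H := by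
  have h : R46⁻¹ * (E 1 0)⁻¹ * R35 = U⁻¹ * W3⁻¹ * U * W0⁻¹ := by apply Subtype.ext; decide
  rw [h]; exact (mul_mem (mul_mem (mul_mem (inv_mem hU) (inv_mem hW3)) hU) (inv_mem hW0))
lemma c3_36 : R26⁻¹ * (E 1 0)⁻¹ * R36 ∈ H := by
  have h : R26⁻¹ * (E 1 0)⁻¹ * R36 = W0 := by apply Subtype.ext; decide
  rw [h]; exact hW0
lemma c3_37 : R44⁻¹ * (E 1 0)⁻¹ * R37 ∈ H := by
  have h : R44⁻¹ * (E 1 0)⁻¹ * R37 = U⁻¹ * W3⁻¹ * U := by apply Subtype.ext; decide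
  rw [h]; exact (mul_mem (mul_mem (inv_mem hU) (inv_mem hW3)) hU)
lemma c3_38 : R16⁻¹ * (E 1 0)⁻¹ * R38 ∈ H := by
  have h : R16⁻¹ * (E 1 0)⁻¹ * R38 = W1⁻¹ := by apply Subtype.ext; decide
  rw [h]; exact (inv_mem hW1)
lemma c3_39 : R21⁻¹ * (E 1 0)⁻¹ * R39 ∈ H := by
  have h : R21⁻¹ * (E 1 0)⁻¹ * R39 = W0 := by apply Subtype.ext; decide
  rw [h]; exact hW0
lemma c3_40 : R23⁻¹ * (E 1 0)⁻¹ * R40 ∈ H := by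
  have h : R23⁻¹ * (E 1 0)⁻¹ * R40 = W0 := by apply Subtype.ext; decide
  rw [h]; exact hW0
lemma c3_41 : R18⁻¹ * (E 1 0)⁻¹ * R41 ∈ H := by
  have h : R18⁻¹ * (E 1 0)⁻¹ * R41 = W3⁻¹ * U := by apply Subtype.ext; decide
  rw [h]; exact (mul_mem (inv_mem hW3) hU)
lemma c3_42 : R15⁻¹ * (E 1 0)⁻¹ * R42 ∈ H := by
  have h : R15⁻¹ * (E 1 0)⁻¹ * R42 = 1 := by apply Subtype.ext; decide
  rw [h]; exact one_mem H
lemma c3_43 : R37⁻¹ * (E 1 0)⁻¹ * R43 ∈ H := by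
  have h : R37⁻¹ * (E 1 0)⁻¹ * R43 = U⁻¹ * W3 * W1 * W0 := by apply Subtype.ext; decide
  rw [h]; exact (mul_mem (mul_mem (mul_mem (inv_mem hU) hW3) hW1) hW0)
lemma c3_44 : R47⁻¹ * (E 1 0)⁻¹ * R44 ∈ H := by
  have h : R47⁻¹ * (E 1 0)⁻¹ * R44 = U⁻¹ * W3⁻¹ * U * W0⁻¹ := by apply Subtype.ext; decide
  rw [h]; exact (mul_mem (mul_mem (mul_mem (inv_mem hU) (inv_mem hW3)) hU) (inv_mem hW0))
lemma c3_45 : R31⁻¹ * (E 1 0)⁻¹ * R45 ∈ H := by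
  have h : R31⁻¹ * (E 1 0)⁻¹ * R45 = U⁻¹ * W3 * W2 * W1 * W0 * U⁻¹ * W3 * U := by apply Subtype.ext; decide
  rw [h]; exact (mul_mem (mul_mem (mul_mem (mul_mem (mul_mem (mul_mem (mul_mem (inv_mem hU) hW3) hW2) hW1) hW0) (inv_mem hU)) hW3) hU)
lemma c3_46 : R32⁻¹ * (E 1 0)⁻¹ * R46 ∈ H := by
  have h : R32⁻¹ * (E 1 0)⁻¹ * R46 = W3 * U := by apply Subtype.ext; decide
  rw [h]; exact (mul_mem hW3 hU)
lemma c3_47 : R43⁻¹ * (E 1 0)⁻¹ * R47 ∈ H := by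
  have h : R43⁻¹ * (E 1 0)⁻¹ * R47 = W0⁻¹ * W1⁻¹ * W0 * U⁻¹ * W3 * U := by apply Subtype.ext; decide
  rw [h]; exact (mul_mem (mul_mem (mul_mem (mul_mem (mul_mem (inv_mem hW0) (inv_mem hW1)) hW0) (inv_mem hU)) hW3) hU)

lemma exists_rep (A : SLZ2) : ∃ t ∈ RepL, t⁻¹ * A ∈ H := by
  have hA : A ∈ Subgroup.closure ({E 0 1, E 1 0} : Set SLZ2) := by rw [closure_ET]; trivial
  induction hA using Subgroup.closure_induction_left with
  | one =>
    refine ⟨R0, mR0, ?_⟩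
    rw [show R0⁻¹ * 1 = 1 from by apply Subtype.ext; decide]
    exact one_mem H
  | mul_left x hx y hy ih =>
    obtain ⟨t, ht, hth⟩ := ih
    simp only [RepL, List.mem_cons, List.not_mem_nil, or_false] at ht
    simp only [Set.mem_insert_iff, Set.mem_singleton_iff] at hx
    rcases hx with rfl | rfl
    · rcases ht with rfl|rfl|rfl|rfl|rfl|rfl|rfl|rfl|rfl|rfl|rfl|rfl|rfl|rfl|rfl|rfl|rfl|rfl|rfl|rfl|rfl|rfl|rfl|rfl|rfl|rfl|rfl|rfl|rfl|rfl|rfl|rfl|rfl|rfl|rfl|rfl|rfl|rfl|rfl|rfl|rfl|rfl|rfl|rfl|rfl|rfl|rfl|rfl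
      · exact step c0_0 mR1 hth
      · exact step c0_1 mR5 hth
      · exact step c0_2 mR0 hth
      · exact step c0_3 mR6 hth
      · exact step c0_4 mR7 hth
      · exact step c0_5 mR2 hth
      · exact step c0_6 mR15 hth
      · exact step c0_7 mR16 hth
      · exact step c0_8 mR3 hth
      · exact step c0_9 mR4 hth
      · exact step c0_10 mR17 hth
      · exact step c0_11 mR18 hth
      · exact step c0_12 mR19 hth
      · exact step c0_13 mR20 hth
      · exact step c0_14 mR21 hth
      · exact step c0_15 mR8 hth
      · exact step c0_16 mR9 hth
      · exact step c0_17 mR31 hth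
      · exact step c0_18 mR32 hth
      · exact step c0_19 mR33 hth
      · exact step c0_20 mR34 hth
      · exact step c0_21 mR35 hth
      · exact step c0_22 mR10 hth
      · exact step c0_23 mR11 hth
      · exact step c0_24 mR12 hth
      · exact step c0_25 mR13 hth
      · exact step c0_26 mR14 hth
      · exact step c0_27 mR36 hth
      · exact step c0_28 mR37 hth
      · exact step c0_29 mR38 hth
      · exact step c0_30 mR39 hth
      · exact step c0_31 mR22 hth
      · exact step c0_32 mR23 hth
      · exact step c0_33 mR24 hth
      · exact step c0_34 mR25 hth
      · exact step c0_35 mR26 hth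
      · exact step c0_36 mR43 hth
      · exact step c0_37 mR29 hth
      · exact step c0_38 mR28 hth
      · exact step c0_39 mR44 hth
      · exact step c0_40 mR27 hth
      · exact step c0_41 mR30 hth
      · exact step c0_42 mR45 hth
      · exact step c0_43 mR40 hth
      · exact step c0_44 mR41 hth
      · exact step c0_45 mR47 hth
      · exact step c0_46 mR42 hth
      · exact step c0_47 mR46 hth
    · rcases ht with rfl|rfl|rfl|rfl|rfl|rfl|rfl|rfl|rfl|rfl|rfl|rfl|rfl|rfl|rfl|rfl|rfl|rfl|rfl|rfl|rfl|rfl|rfl|rfl|rfl|rfl|rfl|rfl|rfl|rfl|rfl|rfl|rfl|rfl|rfl|rfl|rfl|rfl|rfl|rfl|rfl|rfl|rfl|rfl|rfl|rfl|rfl|rfl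
      · exact step c2_0 mR3 hth
      · exact step c2_1 mR10 hth
      · exact step c2_2 mR11 hth
      · exact step c2_3 mR12 hth
      · exact step c2_4 mR0 hth
      · exact step c2_5 mR27 hth
      · exact step c2_6 mR26 hth
      · exact step c2_7 mR21 hth
      · exact step c2_8 mR23 hth
      · exact step c2_9 mR18 hth
      · exact step c2_10 mR28 hth
      · exact step c2_11 mR29 hth
      · exact step c2_12 mR4 hth
      · exact step c2_13 mR1 hth
      · exact step c2_14 mR2 hth
      · exact step c2_15 mR42 hth
      · exact step c2_16 mR38 hth
      · exact step c2_17 mR9 hth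
      · exact step c2_18 mR41 hth
      · exact step c2_19 mR31 hth
      · exact step c2_20 mR7 hth
      · exact step c2_21 mR39 hth
      · exact step c2_22 mR8 hth
      · exact step c2_23 mR40 hth
      · exact step c2_24 mR32 hth
      · exact step c2_25 mR6 hth
      · exact step c2_26 mR36 hth
      · exact step c2_27 mR33 hth
      · exact step c2_28 mR13 hth
      · exact step c2_29 mR14 hth
      · exact step c2_30 mR5 hth
      · exact step c2_31 mR45 hth
      · exact step c2_32 mR46 hth
      · exact step c2_33 mR30 hth
      · exact step c2_34 mR19 hth
      · exact step c2_35 mR24 hth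
      · exact step c2_36 mR25 hth
      · exact step c2_37 mR43 hth
      · exact step c2_38 mR15 hth
      · exact step c2_39 mR20 hth
      · exact step c2_40 mR22 hth
      · exact step c2_41 mR17 hth
      · exact step c2_42 mR16 hth
      · exact step c2_43 mR47 hth
      · exact step c2_44 mR37 hth
      · exact step c2_45 mR34 hth
      · exact step c2_46 mR35 hth
      · exact step c2_47 mR44 hth
  | inv_mul_cancel x hx y hy ih =>
    obtain ⟨t, ht, hth⟩ := ih
    simp only [RepL, List.mem_cons, List.not_mem_nil, or_false] at ht
    simp only [Set.mem_insert_iff, Set.mem_singleton_iff] at hx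
    rcases hx with rfl | rfl
    · rcases ht with rfl|rfl|rfl|rfl|rfl|rfl|rfl|rfl|rfl|rfl|rfl|rfl|rfl|rfl|rfl|rfl|rfl|rfl|rfl|rfl|rfl|rfl|rfl|rfl|rfl|rfl|rfl|rfl|rfl|rfl|rfl|rfl|rfl|rfl|rfl|rfl|rfl|rfl|rfl|rfl|rfl|rfl|rfl|rfl|rfl|rfl|rfl|rfl
      · exact step c1_0 mR2 hth
      · exact step c1_1 mR0 hth
      · exact step c1_2 mR5 hth
      · exact step c1_3 mR8 hth
      · exact step c1_4 mR9 hth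
      · exact step c1_5 mR1 hth
      · exact step c1_6 mR3 hth
      · exact step c1_7 mR4 hth
      · exact step c1_8 mR15 hth
      · exact step c1_9 mR16 hth
      · exact step c1_10 mR22 hth
      · exact step c1_11 mR23 hth
      · exact step c1_12 mR24 hth
      · exact step c1_13 mR25 hth
      · exact step c1_14 mR26 hth
      · exact step c1_15 mR6 hth
      · exact step c1_16 mR7 hth
      · exact step c1_17 mR10 hth
      · exact step c1_18 mR11 hth
      · exact step c1_19 mR12 hth
      · exact step c1_20 mR13 hth
      · exact step c1_21 mR14 hth
      · exact step c1_22 mR31 hth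
      · exact step c1_23 mR32 hth
      · exact step c1_24 mR33 hth
      · exact step c1_25 mR34 hth
      · exact step c1_26 mR35 hth
      · exact step c1_27 mR40 hth
      · exact step c1_28 mR38 hth
      · exact step c1_29 mR37 hth
      · exact step c1_30 mR41 hth
      · exact step c1_31 mR17 hth
      · exact step c1_32 mR18 hth
      · exact step c1_33 mR19 hth
      · exact step c1_34 mR20 hth
      · exact step c1_35 mR21 hth
      · exact step c1_36 mR27 hth
      · exact step c1_37 mR28 hth
      · exact step c1_38 mR29 hth
      · exact step c1_39 mR30 hth
      · exact step c1_40 mR43 hth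
      · exact step c1_41 mR44 hth
      · exact step c1_42 mR46 hth
      · exact step c1_43 mR36 hth
      · exact step c1_44 mR39 hth
      · exact step c1_45 mR42 hth
      · exact step c1_46 mR47 hth
      · exact step c1_47 mR45 hth
    · rcases ht with rfl|rfl|rfl|rfl|rfl|rfl|rfl|rfl|rfl|rfl|rfl|rfl|rfl|rfl|rfl|rfl|rfl|rfl|rfl|rfl|rfl|rfl|rfl|rfl|rfl|rfl|rfl|rfl|rfl|rfl|rfl|rfl|rfl|rfl|rfl|rfl|rfl|rfl|rfl|rfl|rfl|rfl|rfl|rfl|rfl|rfl|rfl|rfl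
      · exact step c3_0 mR4 hth
      · exact step c3_1 mR13 hth
      · exact step c3_2 mR14 hth
      · exact step c3_3 mR0 hth
      · exact step c3_4 mR12 hth
      · exact step c3_5 mR30 hth
      · exact step c3_6 mR25 hth
      · exact step c3_7 mR20 hth
      · exact step c3_8 mR22 hth
      · exact step c3_9 mR17 hth
      · exact step c3_10 mR1 hth
      · exact step c3_11 mR2 hth
      · exact step c3_12 mR3 hth
      · exact step c3_13 mR28 hth
      · exact step c3_14 mR29 hth
      · exact step c3_15 mR38 hth
      · exact step c3_16 mR42 hth
      · exact step c3_17 mR41 hth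
      · exact step c3_18 mR9 hth
      · exact step c3_19 mR34 hth
      · exact step c3_20 mR39 hth
      · exact step c3_21 mR7 hth
      · exact step c3_22 mR40 hth
      · exact step c3_23 mR8 hth
      · exact step c3_24 mR35 hth
      · exact step c3_25 mR36 hth
      · exact step c3_26 mR6 hth
      · exact step c3_27 mR5 hth
      · exact step c3_28 mR10 hth
      · exact step c3_29 mR11 hth
      · exact step c3_30 mR33 hth
      · exact step c3_31 mR19 hth
      · exact step c3_32 mR24 hth
      · exact step c3_33 mR27 hth
      · exact step c3_34 mR45 hth
      · exact step c3_35 mR46 hth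
      · exact step c3_36 mR26 hth
      · exact step c3_37 mR44 hth
      · exact step c3_38 mR16 hth
      · exact step c3_39 mR21 hth
      · exact step c3_40 mR23 hth
      · exact step c3_41 mR18 hth
      · exact step c3_42 mR15 hth
      · exact step c3_43 mR37 hth
      · exact step c3_44 mR47 hth
      · exact step c3_45 mR31 hth
      · exact step c3_46 mR32 hth
      · exact step c3_47 mR43 hth

lemma unique_rep : ∀ t ∈ RepL,
    Matrix.SpecialLinearGroup.map (n := Fin 2) (Int.castRingHom (ZMod 4)) t = 1 → t = R0 := by
  decide

theorem result : Gamma 4 = Subgroup.closure SS := by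
  apply le_antisymm
  · intro A hA
    obtain ⟨t, ht, hth⟩ := exists_rep A
    have h1 := Gamma_map (Hle hth)
    have h2 := Gamma_map hA
    rw [_root_.map_mul, _root_.map_inv, h2, mul_one, inv_eq_one] at h1
    have ht1 : t = R0 := unique_rep t ht h1
    subst ht1
    rw [show R0⁻¹ * A = A from by
      rw [show R0 = 1 from by apply Subtype.ext; decide, inv_one, one_mul]] at hth
    exact hth
  · exact Hle

end D4

/-- Theorem 1.5(1): for `d = 3` or `d = 4`, `Γ_d(2)` is generated by `e_{21}^d`
and the `e_{21}^m e_{12}^d e_{21}^{-m}` for `0 ≤ m ≤ d - 1`. -/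
theorem gamma_d_two_generators (d : ℕ) (hd : d = 3 ∨ d = 4) :
    Gamma d =
      Subgroup.closure
        ({(E 1 0) ^ d} ∪
         {x : SLZ2 | ∃ m : ℕ, m ≤ d - 1 ∧
            x = (E 1 0) ^ m * (E 0 1) ^ d * ((E 1 0) ^ m)⁻¹}) := by
  rcases hd with rfl | rfl
  · exact D3.result
  · exact D4.result
end

section
/- The level-6 principal congruence subgroup Γ_6(2) of SL(2,ℤ) is equal to the subgroup of SL(2,ℤ) generated by e_{21}^6, the matrices e_{21}^m e_{12}^6 e_{21}^{−m} for 0 ≤ m ≤ 5, and the matrices e_{21}^m [e_{21}^{δ}, e_{12}^{ε}] e_{21}^{−m} for 0 ≤ m ≤ 5, δ ∈ {3, −3} and ε ∈ {2, −2}, where [a,b] = a b a^{−1} b^{−1} denotes the commutator. -/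
open Matrix
open scoped commutatorElement

/-!
Every generator lies in the normal subgroup `Γ(6)`. Conversely, conjugation by `e₂₁` permutes the
conjugates `e₂₁^m g e₂₁^(-m)` cyclically up to conjugation by the generator `e₂₁^6`, so `e₂₁`
normalises the group `H` they generate and `H ⊔ ⟨e₂₁⟩ = H · ⟨e₂₁⟩`. A Euclidean algorithm on the
lower-left entry, using `e₁₂^6`, `e₂₁` and the parabolic elements `e₁₂^(±3) e₂₁^2 e₁₂^(∓3)` of
`H ⊔ ⟨e₂₁⟩`, shows that `H ⊔ ⟨e₂₁⟩` contains every matrix whose first row is `(1, 0)` modulo `6`,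
hence `Γ(6)`. Writing `γ ∈ Γ(6)` as `h * e₂₁^n` with `h ∈ H`, also `e₂₁^n ∈ Γ(6)`, so `6 ∣ n` and
`γ ∈ H`.
-/

local notation:1024 "↑ₘ" A:1024 => ((A : SLZ2) : Matrix (Fin 2) (Fin 2) ℤ)

lemma Subgroup.conj_zpow_mem_of_forall_lt {G : Type*} [Group G] {H : Subgroup G} {t y : G}
    {p : ℕ} (hp : 0 < p) (htp : t ^ p ∈ H) (hy : ∀ m < p, t ^ m * y * (t ^ m)⁻¹ ∈ H) (n : ℤ) :
    t ^ n * y * (t ^ n)⁻¹ ∈ H := by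
  set q := n / p
  set r := (n % p).toNat
  have hr : r < p := by have := Int.emod_lt_of_pos n (b := p) (by omega); omega
  have hn : n = p * q + r := by
    rw [Int.toNat_of_nonneg (Int.emod_nonneg n (by omega)), Int.mul_ediv_add_emod]
  have hconj : t ^ n * y * (t ^ n)⁻¹ = (t ^ p) ^ q * (t ^ r * y * (t ^ r)⁻¹) * ((t ^ p) ^ q)⁻¹ := by
    rw [hn]; group
  rw [hconj]
  exact mul_mem (mul_mem (zpow_mem htp _) (hy _ hr)) (inv_mem (zpow_mem htp _))

lemma Int.exists_natAbs_add_mul_le (x d : ℤ) (hd : d ≠ 0) :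
    ∃ k : ℤ, 2 * (x + d * k).natAbs ≤ d.natAbs := by
  have hpos : 0 < d.natAbs := Int.natAbs_pos.2 hd
  obtain ⟨q, hq⟩ : d ∣ x - x.bmod d.natAbs := Int.natAbs_dvd.1 (Int.ModEq.dvd Int.bmod_emod)
  have hlo := Int.le_bmod (x := x) hpos
  have hhi := Int.bmod_le (x := x) hpos
  refine ⟨-q, ?_⟩
  have : x + d * -q = x.bmod d.natAbs := by linarith
  omega

lemma Matrix.SpecialLinearGroup.transvection_zpow {ι R : Type*} [DecidableEq ι] [Fintype ι]
    [CommRing R] {i j : ι} (hij : i ≠ j) (b : R) (n : ℤ) :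
    transvection hij b ^ n = transvection hij (n • b) := by
  induction n using Int.induction_on with
  | zero => simp [transvection_coeff_zero]
  | succ n ih => rw [_root_.zpow_add_one, ih, ← transvection_add, add_smul, one_smul]
  | pred n ih => rw [_root_.zpow_sub_one, ih, transvection_inv, ← transvection_add, sub_smul,
      one_smul, sub_eq_add_neg]

def rowStabilizer {n R : Type*} [DecidableEq n] [Fintype n] [CommRing R] (v : n → R) :
    Subgroup (SpecialLinearGroup n R) where
  carrier := {A | v ᵥ* A = v}
  one_mem' := vecMul_one v
  mul_mem' {A B} (hA : v ᵥ* A = v) (hB : v ᵥ* B = v) := by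
    change v ᵥ* ((A * B : SpecialLinearGroup n R) : Matrix n n R) = v
    rw [Matrix.SpecialLinearGroup.coe_mul, ← vecMul_vecMul, hA, hB]
  inv_mem' {A} (hA : v ᵥ* A = v) := by
    change v ᵥ* ((A⁻¹ : SpecialLinearGroup n R) : Matrix n n R) = v
    conv_lhs => rw [← hA]
    rw [vecMul_vecMul, ← Matrix.SpecialLinearGroup.coe_mul, mul_inv_cancel,
      Matrix.SpecialLinearGroup.coe_one, vecMul_one]

lemma E_zpow {i j : Fin 2} (hij : i ≠ j) (n : ℤ) :
    E i j ^ n = SpecialLinearGroup.transvection hij n := by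
  rw [show E i j = SpecialLinearGroup.transvection hij 1 from dif_pos hij,
    SpecialLinearGroup.transvection_zpow, zsmul_one, Int.cast_id]

lemma coe_E_zero_one_zpow (n : ℤ) : ↑ₘ(E 0 1 ^ n) = !![1, n; 0, 1] := by
  rw [E_zpow (by decide), SpecialLinearGroup.transvection_coe]
  ext i j; fin_cases i <;> fin_cases j <;> simp

lemma coe_E_one_zero_zpow (n : ℤ) : ↑ₘ(E 1 0 ^ n) = !![1, 0; n, 1] := by
  rw [E_zpow (by decide), SpecialLinearGroup.transvection_coe]
  ext i j; fin_cases i <;> fin_cases j <;> simp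

lemma E_zero_one_zpow_mul_apply_zero_zero (n : ℤ) (M : SLZ2) :
    (E 0 1 ^ n * M) 0 0 = M 0 0 + n * M 1 0 := by
  simp [Matrix.SpecialLinearGroup.coe_mul, coe_E_zero_one_zpow, Matrix.mul_apply, Fin.sum_univ_two]

lemma E_zero_one_zpow_mul_apply_one_zero (n : ℤ) (M : SLZ2) : (E 0 1 ^ n * M) 1 0 = M 1 0 := by
  simp [Matrix.SpecialLinearGroup.coe_mul, coe_E_zero_one_zpow, Matrix.mul_apply, Fin.sum_univ_two]

lemma E_one_zero_zpow_mul_apply_one_zero (n : ℤ) (M : SLZ2) :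
    (E 1 0 ^ n * M) 1 0 = M 1 0 + n * M 0 0 := by
  simp [Matrix.SpecialLinearGroup.coe_mul, coe_E_one_zero_zpow, Matrix.mul_apply, Fin.sum_univ_two]
  ring

lemma coe_commutator_E_zpow (δ ε : ℤ) : ↑ₘ⁅E 1 0 ^ δ, E 0 1 ^ ε⁆ =
    !![1 - δ * ε, δ * ε ^ 2; -δ ^ 2 * ε, 1 + δ * ε + δ ^ 2 * ε ^ 2] := by
  simp only [commutatorElement_def, ← _root_.zpow_neg, Matrix.SpecialLinearGroup.coe_mul,
    coe_E_zero_one_zpow, coe_E_one_zero_zpow, Matrix.mul_fin_two]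
  congrm !![?_, ?_; ?_, ?_] <;> ring

-- The left-hand side is the parabolic element `!![7, -18; 2, -5]` fixing the cusp `3`.
lemma E_parabolic_three_eq : E 0 1 ^ (3 : ℤ) * E 1 0 ^ (2 : ℤ) * E 0 1 ^ (-3 : ℤ) =
    E 0 1 ^ (6 : ℤ) * E 1 0 ^ (-1 : ℤ) * E 0 1 ^ (2 : ℤ) * E 1 0 ^ (-3 : ℤ) * E 0 1 ^ (-2 : ℤ) := by
  ext i j
  simp only [Matrix.SpecialLinearGroup.coe_mul, coe_E_zero_one_zpow, coe_E_one_zero_zpow,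
    Matrix.mul_fin_two]
  fin_cases i <;> fin_cases j <;> norm_num

lemma Gamma_eq_congruenceSubgroup_Gamma (N : ℕ) : Gamma N = CongruenceSubgroup.Gamma N := rfl

lemma E_one_zero_zpow_mem_Gamma_iff {N : ℕ} {n : ℤ} : E 1 0 ^ n ∈ Gamma N ↔ (N : ℤ) ∣ n := by
  simp [Gamma_eq_congruenceSubgroup_Gamma, coe_E_one_zero_zpow, ZMod.intCast_zmod_eq_zero_iff_dvd]

lemma E_one_zero_pow_self_mem_Gamma (N : ℕ) : E 1 0 ^ N ∈ Gamma N := by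
  simp [Gamma_eq_congruenceSubgroup_Gamma, ← zpow_natCast, coe_E_one_zero_zpow]

lemma E_zero_one_pow_self_mem_Gamma (N : ℕ) : E 0 1 ^ N ∈ Gamma N := by
  simp [Gamma_eq_congruenceSubgroup_Gamma, ← zpow_natCast, coe_E_zero_one_zpow]

lemma commutator_E_zpow_mem_Gamma {N : ℕ} {δ ε : ℤ} (h : (N : ℤ) ∣ δ * ε) :
    ⁅E 1 0 ^ δ, E 0 1 ^ ε⁆ ∈ Gamma N := by
  have h0 : (δ : ZMod N) * ε = 0 := by
    exact_mod_cast (ZMod.intCast_zmod_eq_zero_iff_dvd _ _).2 h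
  simp only [Gamma_eq_congruenceSubgroup_Gamma, CongruenceSubgroup.Gamma_mem,
    coe_commutator_E_zpow, of_apply, cons_val', cons_val_zero, cons_val_one, cons_val_fin_one]
  push_cast
  refine ⟨?_, ?_, ?_, ?_⟩
  · linear_combination -h0
  · linear_combination (ε : ZMod N) * h0
  · linear_combination -(δ : ZMod N) * h0
  · linear_combination (1 + (δ : ZMod N) * ε) * h0

def Gamma1Transpose (N : ℕ) : Subgroup SLZ2 :=
  (rowStabilizer (Pi.single 0 1)).comap (SpecialLinearGroup.map (Int.castRingHom (ZMod N)))

lemma mem_Gamma1Transpose_iff {N : ℕ} {γ : SLZ2} :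
    γ ∈ Gamma1Transpose N ↔ (N : ℤ) ∣ γ 0 0 - 1 ∧ (N : ℤ) ∣ γ 0 1 := by
  simp [Gamma1Transpose, rowStabilizer, single_vecMul, funext_iff, Fin.forall_fin_two,
    ← ZMod.intCast_zmod_eq_zero_iff_dvd, sub_eq_zero]

lemma Gamma_le_Gamma1Transpose (N : ℕ) : Gamma N ≤ Gamma1Transpose N :=
  MonoidHom.ker_le_comap _ _

-- After shifting `a` by a multiple of `6c` into `[-3|c|, 3|c|]`, it lies within `|c|` of `0`, `3c`
-- or `-3c`; the boundary cases `a = ±2c, ±3c` would force `c = ±1`, against `a ≡ 1 [ZMOD 6]`.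
lemma exists_euclidean_step (a c : ℤ) (hc : c ≠ 0) (ha : 6 ∣ a - 1) (hac : IsCoprime a c) :
    ∃ k s j m : ℤ, (s = 0 ∧ j = 1 ∨ (s = 3 ∨ s = -3) ∧ j = 2) ∧
      (c + j * (a + 6 * c * k - s * c) * m).natAbs < c.natAbs := by
  obtain ⟨k, hk⟩ := Int.exists_natAbs_add_mul_le a (6 * c) (by omega)
  set a' := a + 6 * c * k
  have ha' : 6 ∣ a' - 1 := by
    rw [show a' - 1 = (a - 1) + 6 * (c * k) by ring]; exact dvd_add ha (dvd_mul_right _ _)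
  have hunit : ∀ e : ℤ, a' = e * c → c = 1 ∨ c = -1 := by
    intro e he
    have hcop : IsCoprime (e * c) c := by
      rw [← he, show a' = a + c * (6 * k) by ring]; exact hac.add_mul_left_left _
    exact Int.isUnit_iff.1 (isCoprime_self.1 hcop.of_mul_left_right)
  obtain ⟨s, j, hsj, hne, hlt⟩ : ∃ s j : ℤ, (s = 0 ∧ j = 1 ∨ (s = 3 ∨ s = -3) ∧ j = 2) ∧
      j * (a' - s * c) ≠ 0 ∧ (j * (a' - s * c)).natAbs < 2 * c.natAbs := by
    have h2 := hunit 2; have h2' := hunit (-2); have h3 := hunit 3; have h3' := hunit (-3)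
    rcases (by omega : (a' ≠ 0 ∧ a'.natAbs < 2 * c.natAbs) ∨
        (a' - 3 * c ≠ 0 ∧ (a' - 3 * c).natAbs < c.natAbs) ∨
        (a' + 3 * c ≠ 0 ∧ (a' + 3 * c).natAbs < c.natAbs)) with h | h | h
    · exact ⟨0, 1, by omega, by omega, by omega⟩
    · exact ⟨3, 2, by omega, by omega, by omega⟩
    · exact ⟨-3, 2, by omega, by omega, by omega⟩
  obtain ⟨m, hm⟩ := Int.exists_natAbs_add_mul_le c _ hne
  exact ⟨k, s, j, m, hsj, show (c + j * (a' - s * c) * m).natAbs < c.natAbs by omega⟩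

def gammaSixGens : Set SLZ2 :=
  {(E 1 0) ^ 6} ∪
    {x : SLZ2 | ∃ m : ℕ, m ≤ 5 ∧ x = (E 1 0) ^ m * (E 0 1) ^ 6 * ((E 1 0) ^ m)⁻¹} ∪
    {x : SLZ2 | ∃ m : ℕ, m ≤ 5 ∧ ∃ δ ε : ℤ, (δ = 3 ∨ δ = -3) ∧ (ε = 2 ∨ ε = -2) ∧
      x = (E 1 0) ^ m * ⁅(E 1 0) ^ δ, (E 0 1) ^ ε⁆ * ((E 1 0) ^ m)⁻¹}

lemma gammaSixGens_subset_Gamma : gammaSixGens ⊆ Gamma 6 := by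
  have hnormal := CongruenceSubgroup.Gamma_normal 6
  rintro _ ((rfl | ⟨m, -, rfl⟩) | ⟨m, -, δ, ε, hδ, hε, rfl⟩)
  · exact E_one_zero_pow_self_mem_Gamma 6
  · exact hnormal.conj_mem _ (E_zero_one_pow_self_mem_Gamma 6) _
  · refine hnormal.conj_mem _ (commutator_E_zpow_mem_Gamma ?_) _
    rcases hδ with rfl | rfl <;> rcases hε with rfl | rfl <;> norm_num

lemma closure_gammaSixGens_le_Gamma : Subgroup.closure gammaSixGens ≤ Gamma 6 :=
  (Subgroup.closure_le _).2 gammaSixGens_subset_Gamma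

lemma E_one_zero_pow_six_mem_closure : E 1 0 ^ 6 ∈ Subgroup.closure gammaSixGens :=
  Subgroup.subset_closure (.inl (.inl rfl))

lemma E_zero_one_pow_six_mem_closure : E 0 1 ^ 6 ∈ Subgroup.closure gammaSixGens :=
  Subgroup.subset_closure (.inl (.inr ⟨0, by norm_num, by group⟩))

lemma commutator_mem_closure {δ ε : ℤ} (hδ : δ = 3 ∨ δ = -3) (hε : ε = 2 ∨ ε = -2) :
    ⁅E 1 0 ^ δ, E 0 1 ^ ε⁆ ∈ Subgroup.closure gammaSixGens :=
  Subgroup.subset_closure (.inr ⟨0, by norm_num, δ, ε, hδ, hε, by group⟩)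

lemma E_one_zero_zpow_conj_mem_closure (n : ℤ) {g : SLZ2} (hg : g ∈ gammaSixGens) :
    E 1 0 ^ n * g * (E 1 0 ^ n)⁻¹ ∈ Subgroup.closure gammaSixGens := by
  have hcycle : ∀ y : SLZ2, (∀ m ≤ 5, E 1 0 ^ m * y * (E 1 0 ^ m)⁻¹ ∈ gammaSixGens) →
      ∀ m : ℕ, E 1 0 ^ n * (E 1 0 ^ m * y * (E 1 0 ^ m)⁻¹) * (E 1 0 ^ n)⁻¹ ∈
        Subgroup.closure gammaSixGens := by
    intro y hy m
    convert Subgroup.conj_zpow_mem_of_forall_lt (by norm_num) E_one_zero_pow_six_mem_closure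
      (fun m hm => Subgroup.subset_closure (hy m (by omega))) (n + m) using 1
    group
  rcases hg with (rfl | ⟨m, -, rfl⟩) | ⟨m, -, δ, ε, hδ, hε, rfl⟩
  · convert E_one_zero_pow_six_mem_closure using 1; group
  · exact hcycle _ (fun m hm => .inl (.inr ⟨m, hm, rfl⟩)) m
  · exact hcycle _ (fun m hm => .inr ⟨m, hm, δ, ε, hδ, hε, rfl⟩) m

def gammaSixSup : Subgroup SLZ2 := Subgroup.closure gammaSixGens ⊔ Subgroup.zpowers (E 1 0)

lemma exists_mul_zpow_eq_of_mem_gammaSixSup {x : SLZ2} (hx : x ∈ gammaSixSup) :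
    ∃ h ∈ Subgroup.closure gammaSixGens, ∃ n : ℤ, h * E 1 0 ^ n = x := by
  have hle : Subgroup.zpowers (E 1 0) ≤
      Subgroup.normalizer (Subgroup.closure gammaSixGens : Set SLZ2) := by
    rw [Subgroup.le_normalizer_closure_iff]
    rintro _ ⟨n, rfl⟩ g hg
    exact E_one_zero_zpow_conj_mem_closure n hg
  rw [← SetLike.mem_coe, gammaSixSup, Subgroup.coe_mul_of_right_le_normalizer_left _ _ hle] at hx
  obtain ⟨h, hh, _, ⟨n, rfl⟩, rfl⟩ := hx
  exact ⟨h, hh, n, rfl⟩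

lemma closure_gammaSixGens_le_gammaSixSup : Subgroup.closure gammaSixGens ≤ gammaSixSup :=
  le_sup_left

lemma E_one_zero_zpow_mem_gammaSixSup (n : ℤ) : E 1 0 ^ n ∈ gammaSixSup :=
  Subgroup.mem_sup_right (Subgroup.zpow_mem_zpowers _ n)

lemma E_zero_one_zpow_six_mul_mem_gammaSixSup (k : ℤ) : E 0 1 ^ (6 * k) ∈ gammaSixSup := by
  rw [_root_.zpow_mul]
  exact zpow_mem (closure_gammaSixGens_le_gammaSixSup (mod_cast E_zero_one_pow_six_mem_closure)) k

lemma gammaSixSup_le_Gamma1Transpose : gammaSixSup ≤ Gamma1Transpose 6 := by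
  refine sup_le (closure_gammaSixGens_le_Gamma.trans (Gamma_le_Gamma1Transpose 6)) ?_
  rw [Subgroup.zpowers_le, mem_Gamma1Transpose_iff, ← zpow_one (E 1 0), coe_E_one_zero_zpow]
  simp

lemma E_zero_one_zpow_conj_mem_gammaSixSup {s j : ℤ}
    (hsj : s = 0 ∧ j = 1 ∨ (s = 3 ∨ s = -3) ∧ j = 2) :
    E 0 1 ^ s * E 1 0 ^ j * (E 0 1 ^ s)⁻¹ ∈ gammaSixSup := by
  have hS6 := E_zero_one_zpow_six_mul_mem_gammaSixSup 1
  have h3 : E 0 1 ^ (3 : ℤ) * E 1 0 ^ (2 : ℤ) * (E 0 1 ^ (3 : ℤ))⁻¹ ∈ gammaSixSup := by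
    have hcomm := closure_gammaSixGens_le_gammaSixSup
      (commutator_mem_closure (δ := -3) (ε := 2) (Or.inr rfl) (Or.inl rfl))
    rw [← _root_.zpow_neg, E_parabolic_three_eq]
    convert mul_mem (mul_mem hS6 (E_one_zero_zpow_mem_gammaSixSup (-1)))
      (inv_mem (mul_mem (E_one_zero_zpow_mem_gammaSixSup 3) hcomm)) using 1
    rw [commutatorElement_def]
    group
  rcases hsj with ⟨rfl, rfl⟩ | ⟨rfl | rfl, rfl⟩
  · simpa using E_one_zero_zpow_mem_gammaSixSup 1
  · exact h3
  · convert mul_mem (mul_mem (inv_mem hS6) h3) hS6 using 1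
    group

lemma exists_natAbs_mul_apply_one_zero_lt {M : SLZ2} (hM : M ∈ Gamma1Transpose 6)
    (hc : M 1 0 ≠ 0) : ∃ X ∈ gammaSixSup, ((X * M) 1 0).natAbs < (M 1 0).natAbs := by
  have hac : IsCoprime (M 0 0) (M 1 0) := by
    refine ⟨M 1 1, -M 0 1, ?_⟩
    linear_combination (Matrix.det_fin_two (M : Matrix (Fin 2) (Fin 2) ℤ)).symm.trans M.2
  obtain ⟨k, s, j, m, hsj, hlt⟩ :=
    exists_euclidean_step _ _ hc (mem_Gamma1Transpose_iff.1 hM).1 hac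
  refine ⟨E 0 1 ^ s * E 1 0 ^ (j * m) * (E 0 1 ^ s)⁻¹ * E 0 1 ^ (6 * k), mul_mem ?_ ?_, ?_⟩
  · rw [_root_.zpow_mul, ← conj_zpow]
    exact zpow_mem (E_zero_one_zpow_conj_mem_gammaSixSup hsj) m
  · exact E_zero_one_zpow_six_mul_mem_gammaSixSup k
  · rw [show E 0 1 ^ s * E 1 0 ^ (j * m) * (E 0 1 ^ s)⁻¹ * E 0 1 ^ (6 * k) * M =
        E 0 1 ^ s * (E 1 0 ^ (j * m) * (E 0 1 ^ (-s) * (E 0 1 ^ (6 * k) * M))) by group,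
      E_zero_one_zpow_mul_apply_one_zero, E_one_zero_zpow_mul_apply_one_zero,
      E_zero_one_zpow_mul_apply_zero_zero, E_zero_one_zpow_mul_apply_one_zero,
      E_zero_one_zpow_mul_apply_zero_zero, E_zero_one_zpow_mul_apply_one_zero]
    convert hlt using 3
    ring

lemma mem_closure_of_mem_Gamma1Transpose_of_apply_one_zero_eq_zero {M : SLZ2}
    (hM : M ∈ Gamma1Transpose 6) (hc : M 1 0 = 0) : M ∈ Subgroup.closure gammaSixGens := by
  obtain ⟨ha, q, hq⟩ := mem_Gamma1Transpose_iff.1 hM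
  have hdet : M 0 0 * M 1 1 = 1 := by
    have := M.2
    rwa [Matrix.det_fin_two, hc, mul_zero, sub_zero] at this
  have ha1 : M 0 0 = 1 := by
    rcases Int.eq_one_or_neg_one_of_mul_eq_one hdet with h | h <;> omega
  have hd1 : M 1 1 = 1 := by simpa [ha1] using hdet
  have hM : M = (E 0 1 ^ 6) ^ q := by
    ext i j
    rw [← zpow_natCast, ← _root_.zpow_mul, coe_E_zero_one_zpow]
    fin_cases i <;> fin_cases j <;> simp [ha1, hq, hc, hd1]
  rw [hM]
  exact zpow_mem E_zero_one_pow_six_mem_closure q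

lemma Gamma1Transpose_le_gammaSixSup : Gamma1Transpose 6 ≤ gammaSixSup := by
  intro M hM
  induction h : (M 1 0).natAbs using Nat.strong_induction_on generalizing M with
  | _ n ih =>
  by_cases hc : M 1 0 = 0
  · exact closure_gammaSixGens_le_gammaSixSup
      (mem_closure_of_mem_Gamma1Transpose_of_apply_one_zero_eq_zero hM hc)
  obtain ⟨X, hX, hlt⟩ := exists_natAbs_mul_apply_one_zero_lt hM hc
  have hXM : X * M ∈ gammaSixSup :=
    ih _ (h ▸ hlt) (mul_mem (gammaSixSup_le_Gamma1Transpose hX) hM) rfl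
  simpa using mul_mem (inv_mem hX) hXM

/-- Theorem 1.5(3): `Γ_6(2)` is generated by `e_{21}^6`, the
`e_{21}^m e_{12}^6 e_{21}^{-m}` (`0 ≤ m ≤ 5`), and the
`e_{21}^m [e_{21}^{±3}, e_{12}^{±2}] e_{21}^{-m}` (`0 ≤ m ≤ 5`), where
`[a, b] = a b a⁻¹ b⁻¹`. -/
theorem gamma_six_two_generators :
    Gamma 6 =
      Subgroup.closure
        ({(E 1 0) ^ 6} ∪
         {x : SLZ2 | ∃ m : ℕ, m ≤ 5 ∧
            x = (E 1 0) ^ m * (E 0 1) ^ 6 * ((E 1 0) ^ m)⁻¹} ∪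
         {x : SLZ2 | ∃ m : ℕ, m ≤ 5 ∧ ∃ δ ε : ℤ,
            (δ = 3 ∨ δ = -3) ∧ (ε = 2 ∨ ε = -2) ∧
            x = (E 1 0) ^ m * ⁅(E 1 0) ^ δ, (E 0 1) ^ ε⁆ * ((E 1 0) ^ m)⁻¹}) := by
  change Gamma 6 = Subgroup.closure gammaSixGens
  refine le_antisymm (fun M hM => ?_) closure_gammaSixGens_le_Gamma
  obtain ⟨h, hh, n, rfl⟩ := exists_mul_zpow_eq_of_mem_gammaSixSup
    (Gamma1Transpose_le_gammaSixSup (Gamma_le_Gamma1Transpose 6 hM))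
  have hn : E 1 0 ^ n ∈ Gamma 6 := by
    simpa using mul_mem (inv_mem (closure_gammaSixGens_le_Gamma hh)) hM
  obtain ⟨q, rfl⟩ := E_one_zero_zpow_mem_Gamma_iff.1 hn
  rw [_root_.zpow_mul, zpow_natCast]
  exact mul_mem hh (zpow_mem E_one_zero_pow_six_mem_closure q)
end

section
/- In GL(2,ℤ), the commutator subgroup [Γ̂_2(2), Γ_2(2)] (generated by all commutators [X,Y] with X ∈ Γ̂_2(2) and Y in the image of Γ_2(2)) equals the image of Γ_4(2), and the commutator subgroup [Γ̂_2(2), Γ_3(2)] equals the image of Γ_6(2); moreover [Γ̂_2(2), Γ̂_2(2)] also equals the image of Γ_4(2). -/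
set_option maxHeartbeats 4000000
set_option maxRecDepth 100000


open Matrix
open scoped commutatorElement

/-- The level-`d` principal congruence subgroup of `GL(2, ℤ)`: the subgroup of
matrices congruent to the identity modulo `d`, realized as the kernel of the
reduction map `GL(2, ℤ) → GL(2, ℤ/dℤ)`. -/
def GammaHat (d : ℕ) : Subgroup (GL (Fin 2) ℤ) :=
  (Units.map ((Int.castRingHom (ZMod d)).mapMatrix.toMonoidHom :
      Matrix (Fin 2) (Fin 2) ℤ →* Matrix (Fin 2) (Fin 2) (ZMod d))).ker



instance {R : Type*} [CommRing R] [DecidableEq R] :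
    DecidableEq (Matrix.SpecialLinearGroup (Fin 2) R) :=
  fun a b => decidable_of_iff (a.val = b.val) Subtype.ext_iff.symm

namespace CGH

abbrev toGL : SLZ2 →* GL (Fin 2) ℤ := Matrix.SpecialLinearGroup.toGL

lemma toGL_val (g : SLZ2) : (toGL g : Matrix (Fin 2) (Fin 2) ℤ) = g.val := rfl

lemma mem_Gamma_iff {d : ℕ} (g : SLZ2) :
    g ∈ Gamma d ↔ g.val.map (Int.castRingHom (ZMod d)) = 1 := by
  rw [Gamma, MonoidHom.mem_ker]
  constructor
  · intro h; have := congrArg Subtype.val h; simpa using this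
  · intro h; exact Subtype.ext (by simpa using h)

lemma mem_GammaHat_iff {d : ℕ} (g : GL (Fin 2) ℤ) :
    g ∈ GammaHat d ↔ (g : Matrix (Fin 2) (Fin 2) ℤ).map (Int.castRingHom (ZMod d)) = 1 := by
  rw [GammaHat, MonoidHom.mem_ker]
  constructor
  · intro h; have := congrArg Units.val h; simpa using this
  · intro h; exact Units.ext (by simpa using h)

lemma mem_map_toGL_iff {d : ℕ} (u : GL (Fin 2) ℤ) :
    u ∈ (Gamma d).map toGL ↔
      ((u : Matrix (Fin 2) (Fin 2) ℤ).det = 1 ∧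
        (u : Matrix (Fin 2) (Fin 2) ℤ).map (Int.castRingHom (ZMod d)) = 1) := by
  constructor
  · rintro ⟨g, hg, rfl⟩
    exact ⟨g.prop, (mem_Gamma_iff g).mp hg⟩
  · rintro ⟨h1, h2⟩
    refine ⟨⟨(u : Matrix (Fin 2) (Fin 2) ℤ), h1⟩, (mem_Gamma_iff _).mpr h2, Units.ext rfl⟩

lemma toGL_mem_map_iff {d : ℕ} (g : SLZ2) : toGL g ∈ (Gamma d).map toGL ↔ g ∈ Gamma d := by
  rw [mem_map_toGL_iff, mem_Gamma_iff, toGL_val]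
  exact ⟨fun h => h.2, fun h => ⟨g.prop, h⟩⟩

lemma map_toGL_le_GammaHat {d : ℕ} : (Gamma d).map toGL ≤ GammaHat d := by
  rintro u hu
  rw [mem_map_toGL_iff] at hu
  rw [mem_GammaHat_iff]
  exact hu.2

instance mapGamma_normal (d : ℕ) : ((Gamma d).map toGL).Normal := by
  constructor
  intro u hu c
  rw [mem_map_toGL_iff] at hu ⊢
  have hval : ((c * u * c⁻¹ : GL (Fin 2) ℤ) : Matrix (Fin 2) (Fin 2) ℤ)
      = (c : Matrix (Fin 2) (Fin 2) ℤ) * (u : Matrix (Fin 2) (Fin 2) ℤ)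
        * ((c⁻¹ : GL (Fin 2) ℤ) : Matrix (Fin 2) (Fin 2) ℤ) := rfl
  constructor
  · rw [hval, Matrix.det_mul, Matrix.det_mul, hu.1]
    have : (c : Matrix (Fin 2) (Fin 2) ℤ).det * ((c⁻¹ : GL (Fin 2) ℤ) : Matrix (Fin 2) (Fin 2) ℤ).det = 1 := by
      rw [← Matrix.det_mul]
      have : ((c * c⁻¹ : GL (Fin 2) ℤ) : Matrix (Fin 2) (Fin 2) ℤ) = 1 := by
        rw [mul_inv_cancel]; rfl
      rw [show (c : Matrix (Fin 2) (Fin 2) ℤ) * ((c⁻¹ : GL (Fin 2) ℤ) : Matrix (Fin 2) (Fin 2) ℤ) = 1 from this]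
      simp
    linear_combination this
  · have hmap : ∀ x y : GL (Fin 2) ℤ,
        ((x * y : GL (Fin 2) ℤ) : Matrix (Fin 2) (Fin 2) ℤ).map (Int.castRingHom (ZMod d))
        = (x : Matrix (Fin 2) (Fin 2) ℤ).map (Int.castRingHom (ZMod d))
          * (y : Matrix (Fin 2) (Fin 2) ℤ).map (Int.castRingHom (ZMod d)) := by
      intro x y
      exact (RingHom.mapMatrix (Int.castRingHom (ZMod d))).map_mul _ _
    have h1 : ((c * u * c⁻¹ : GL (Fin 2) ℤ) : Matrix (Fin 2) (Fin 2) ℤ).map (Int.castRingHom (ZMod d))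
        = (c : Matrix _ _ ℤ).map (Int.castRingHom (ZMod d)) * 1
          * ((c⁻¹ : GL (Fin 2) ℤ) : Matrix _ _ ℤ).map (Int.castRingHom (ZMod d)) := by
      rw [hmap, hmap, hu.2]
    rw [h1, mul_one, ← hmap, mul_inv_cancel]
    exact (RingHom.mapMatrix (Int.castRingHom (ZMod d))).map_one

end CGH

-- entry lemma: if z ≡ δ mod 2 then over ZMod 4, z = δ + 2*c
lemma int_mod4_of_mod2 (z δ : ℤ) (h : (z : ZMod 2) = (δ : ZMod 2)) :
    ∃ c : ZMod 4, (z : ZMod 4) = (δ : ZMod 4) + 2 * c := by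
  have h2 : (2:ℤ) ∣ z - δ := by
    have : ((z - δ : ℤ) : ZMod 2) = 0 := by push_cast; rw [h]; ring
    exact (ZMod.intCast_zmod_eq_zero_iff_dvd _ _).mp this
  obtain ⟨k, hk⟩ := h2
  refine ⟨(k : ZMod 4), ?_⟩
  have : z = δ + 2 * k := by omega
  rw [this]; push_cast; ring

-- matrices over ZMod 4 of the form 1 + 2*M commute
lemma mod4_comm (u v : Matrix (Fin 2) (Fin 2) (ZMod 4))
    (hu : ∃ U, u = 1 + (2:ZMod 4) • U) (hv : ∃ V, v = 1 + (2:ZMod 4) • V) :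
    u * v = v * u := by
  obtain ⟨U, rfl⟩ := hu
  obtain ⟨V, rfl⟩ := hv
  have key : ∀ X Y : Matrix (Fin 2) (Fin 2) (ZMod 4),
      ((2:ZMod 4) • X) * ((2:ZMod 4) • Y) = 0 := by
    intro X Y
    rw [Matrix.smul_mul, Matrix.mul_smul, smul_smul]
    have : (2:ZMod 4) * 2 = 0 := by decide
    rw [this, zero_smul]
  simp only [add_mul, mul_add, one_mul, mul_one, key, add_zero]
  abel

section helpers
variable {d : ℕ}

lemma entry_dvd_of_map_one (M : Matrix (Fin 2) (Fin 2) ℤ)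
    (h : M.map (Int.castRingHom (ZMod d)) = 1) (i j : Fin 2) :
    (d : ℤ) ∣ M i j - (if i = j then 1 else 0) := by
  have h1 : ((M i j : ℤ) : ZMod d) = (1 : Matrix (Fin 2) (Fin 2) (ZMod d)) i j := by
    have := congrArg (fun (X : Matrix (Fin 2) (Fin 2) (ZMod d)) => X i j) h
    simpa using this
  have h2 : (1 : Matrix (Fin 2) (Fin 2) (ZMod d)) i j
      = ((if i = j then (1:ℤ) else 0 : ℤ) : ZMod d) := by
    rw [Matrix.one_apply]; split <;> simp
  have : ((M i j - (if i = j then 1 else 0) : ℤ) : ZMod d) = 0 := by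
    push_cast
    rw [h1, h2]
    split <;> simp
  exact (ZMod.intCast_zmod_eq_zero_iff_dvd _ _).mp this

lemma map_one_of_entry_dvd (M : Matrix (Fin 2) (Fin 2) ℤ)
    (h : ∀ i j : Fin 2, (d : ℤ) ∣ M i j - (if i = j then 1 else 0)) :
    M.map (Int.castRingHom (ZMod d)) = 1 := by
  ext i j
  have : ((M i j - (if i = j then 1 else 0) : ℤ) : ZMod d) = 0 :=
    (ZMod.intCast_zmod_eq_zero_iff_dvd _ _).mpr (h i j)
  have h2 : ((M i j : ℤ) : ZMod d) = ((if i = j then (1:ℤ) else 0 : ℤ) : ZMod d) := by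
    have h3 : ((M i j : ℤ) : ZMod d) - ((if i = j then (1:ℤ) else 0 : ℤ) : ZMod d) = 0 := by
      push_cast at this
      split at this <;> split <;> simp_all
    linear_combination h3
  show ((M i j : ℤ) : ZMod d) = (1 : Matrix (Fin 2) (Fin 2) (ZMod d)) i j
  rw [h2, Matrix.one_apply]
  split <;> simp
end helpers

notation "GL2Z" => GL (Fin 2) ℤ

def mcast (d : ℕ) : Matrix (Fin 2) (Fin 2) ℤ →+* Matrix (Fin 2) (Fin 2) (ZMod d) :=
  (Int.castRingHom (ZMod d)).mapMatrix

lemma val_inv_mul (u : GL2Z) :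
    (u : Matrix (Fin 2) (Fin 2) ℤ) * ((u⁻¹ : GL2Z) : Matrix (Fin 2) (Fin 2) ℤ) = 1 := by
  rw [← Units.val_mul, mul_inv_cancel, Units.val_one]

lemma commutator_val (x y : GL2Z) :
    ((⁅x, y⁆ : GL2Z) : Matrix (Fin 2) (Fin 2) ℤ)
      = (x : Matrix (Fin 2) (Fin 2) ℤ) * (y : Matrix (Fin 2) (Fin 2) ℤ)
        * ((x⁻¹ : GL2Z) : Matrix (Fin 2) (Fin 2) ℤ) * ((y⁻¹ : GL2Z) : Matrix (Fin 2) (Fin 2) ℤ) := by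
  rw [commutatorElement_def]
  rfl

lemma commutator_det (x y : GL2Z) :
    ((⁅x, y⁆ : GL2Z) : Matrix (Fin 2) (Fin 2) ℤ).det = 1 := by
  rw [commutator_val, Matrix.det_mul, Matrix.det_mul, Matrix.det_mul]
  have h1 : (x : Matrix (Fin 2) (Fin 2) ℤ).det * ((x⁻¹ : GL2Z) : Matrix (Fin 2) (Fin 2) ℤ).det = 1 := by
    rw [← Matrix.det_mul, val_inv_mul, Matrix.det_one]
  have h2 : (y : Matrix (Fin 2) (Fin 2) ℤ).det * ((y⁻¹ : GL2Z) : Matrix (Fin 2) (Fin 2) ℤ).det = 1 := by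
    rw [← Matrix.det_mul, val_inv_mul, Matrix.det_one]
  nlinarith [h1, h2]

lemma commutator_mcast_one {d : ℕ} (x y : GL2Z)
    (hcomm : mcast d (x : Matrix (Fin 2) (Fin 2) ℤ) * mcast d (y : Matrix (Fin 2) (Fin 2) ℤ)
      = mcast d (y : Matrix (Fin 2) (Fin 2) ℤ) * mcast d (x : Matrix (Fin 2) (Fin 2) ℤ)) :
    mcast d ((⁅x, y⁆ : GL2Z) : Matrix (Fin 2) (Fin 2) ℤ) = 1 := by
  rw [commutator_val, _root_.map_mul, _root_.map_mul, _root_.map_mul, hcomm]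
  have hx : mcast d (x : Matrix (Fin 2) (Fin 2) ℤ) * mcast d ((x⁻¹ : GL2Z) : Matrix (Fin 2) (Fin 2) ℤ) = 1 := by
    rw [← _root_.map_mul, val_inv_mul, _root_.map_one]
  have hy : mcast d (y : Matrix (Fin 2) (Fin 2) ℤ) * mcast d ((y⁻¹ : GL2Z) : Matrix (Fin 2) (Fin 2) ℤ) = 1 := by
    rw [← _root_.map_mul, val_inv_mul, _root_.map_one]
  calc mcast d (y:Matrix (Fin 2) (Fin 2) ℤ) * mcast d (x:Matrix (Fin 2) (Fin 2) ℤ)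
        * mcast d ((x⁻¹ : GL2Z):Matrix (Fin 2) (Fin 2) ℤ) * mcast d ((y⁻¹ : GL2Z):Matrix (Fin 2) (Fin 2) ℤ)
      = mcast d (y:Matrix (Fin 2) (Fin 2) ℤ) * (mcast d (x:Matrix (Fin 2) (Fin 2) ℤ)
        * mcast d ((x⁻¹ : GL2Z):Matrix (Fin 2) (Fin 2) ℤ)) * mcast d ((y⁻¹ : GL2Z):Matrix (Fin 2) (Fin 2) ℤ) := by
        noncomm_ring
    _ = 1 := by rw [hx, mul_one, hy]
-- depends on all previous parts when assembled

lemma mcast_apply (d : ℕ) (M : Matrix (Fin 2) (Fin 2) ℤ) :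
    mcast d M = M.map (Int.castRingHom (ZMod d)) := rfl

lemma mcast4_decomp (u : GL2Z) (hu : u ∈ GammaHat 2) :
    ∃ U, mcast 4 (u : Matrix (Fin 2) (Fin 2) ℤ) = 1 + (2 : ZMod 4) • U := by
  rw [CGH.mem_GammaHat_iff] at hu
  have h2 : ∀ i j : Fin 2, (2:ℤ) ∣ (u : Matrix (Fin 2) (Fin 2) ℤ) i j - (if i = j then 1 else 0) :=
    fun i j => by exact_mod_cast entry_dvd_of_map_one _ hu i j
  have key : ∀ i j : Fin 2, ∃ c : ZMod 4,
      ((( u : Matrix (Fin 2) (Fin 2) ℤ) i j : ℤ) : ZMod 4)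
        = (1 : Matrix (Fin 2) (Fin 2) (ZMod 4)) i j + 2 * c := by
    intro i j
    obtain ⟨k, hk⟩ := h2 i j
    refine ⟨(k : ZMod 4), ?_⟩
    have hz : (u : Matrix (Fin 2) (Fin 2) ℤ) i j = (if i = j then 1 else 0) + 2 * k := by omega
    rw [hz, Matrix.one_apply]
    push_cast
    split <;> simp
  choose U hU using fun i j => key i j
  refine ⟨Matrix.of U, ?_⟩
  ext i j
  simpa [mcast, Matrix.add_apply] using hU i j

lemma commutator_mem_map4 (x y : GL2Z) (hx : x ∈ GammaHat 2) (hy : y ∈ GammaHat 2) :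
    ⁅x, y⁆ ∈ (Gamma 4).map CGH.toGL := by
  rw [CGH.mem_map_toGL_iff]
  refine ⟨commutator_det x y, ?_⟩
  show mcast 4 _ = 1
  exact commutator_mcast_one x y (mod4_comm _ _ (mcast4_decomp x hx) (mcast4_decomp y hy))

lemma commutator_mem_map6 (x y : GL2Z) (hx : x ∈ GammaHat 2) (hy : y ∈ (Gamma 3).map CGH.toGL) :
    ⁅x, y⁆ ∈ (Gamma 6).map CGH.toGL := by
  rw [CGH.mem_map_toGL_iff]
  refine ⟨commutator_det x y, ?_⟩
  rw [CGH.mem_GammaHat_iff] at hx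
  rw [CGH.mem_map_toGL_iff] at hy
  have h2 : mcast 2 ((⁅x, y⁆ : GL2Z) : Matrix (Fin 2) (Fin 2) ℤ) = 1 := by
    apply commutator_mcast_one
    have hx1 : mcast 2 (x : Matrix (Fin 2) (Fin 2) ℤ) = 1 := hx
    rw [hx1, one_mul, mul_one]
  have h3 : mcast 3 ((⁅x, y⁆ : GL2Z) : Matrix (Fin 2) (Fin 2) ℤ) = 1 := by
    apply commutator_mcast_one
    have hy1 : mcast 3 (y : Matrix (Fin 2) (Fin 2) ℤ) = 1 := hy.2
    rw [hy1, one_mul, mul_one]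
  apply map_one_of_entry_dvd
  intro i j
  have d2 := entry_dvd_of_map_one (d := 2) _ (by rw [← mcast_apply]; exact h2) i j
  have d3 := entry_dvd_of_map_one (d := 3) _ (by rw [← mcast_apply]; exact h3) i j
  have d2' : (2:ℤ) ∣ ((⁅x, y⁆ : GL2Z) : Matrix (Fin 2) (Fin 2) ℤ) i j - (if i = j then 1 else 0) := by exact_mod_cast d2
  have d3' : (3:ℤ) ∣ ((⁅x, y⁆ : GL2Z) : Matrix (Fin 2) (Fin 2) ℤ) i j - (if i = j then 1 else 0) := by exact_mod_cast d3
  have : ((6:ℕ):ℤ) = 6 := by norm_num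
  rw [this]
  omega

lemma comm_le_Gamma4 : ⁅GammaHat 2, GammaHat 2⁆ ≤ (Gamma 4).map CGH.toGL :=
  Subgroup.commutator_le.mpr fun x hx y hy => commutator_mem_map4 x y hx hy

lemma comm_le_Gamma4' : ⁅GammaHat 2, (Gamma 2).map CGH.toGL⁆ ≤ (Gamma 4).map CGH.toGL :=
  le_trans (Subgroup.commutator_mono le_rfl CGH.map_toGL_le_GammaHat) comm_le_Gamma4

lemma comm_le_Gamma6 : ⁅GammaHat 2, (Gamma 3).map CGH.toGL⁆ ≤ (Gamma 6).map CGH.toGL :=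
  Subgroup.commutator_le.mpr fun x hx y hy => commutator_mem_map6 x y hx hy

def Am : SLZ2 := ⟨!![1,2;0,1], by decide⟩
def Bm : SLZ2 := ⟨!![1,0;2,1], by decide⟩
def Nm : SLZ2 := ⟨!![-1,0;0,-1], by decide⟩
def Ai : SLZ2 := ⟨!![1,-2;0,1], by decide⟩
def Bi : SLZ2 := ⟨!![1,0;-2,1], by decide⟩

abbrev HG : Subgroup SLZ2 := Subgroup.closure {Am, Bm, Nm}

lemma Am_mem : Am ∈ HG := Subgroup.subset_closure (by simp)
lemma Bm_mem : Bm ∈ HG := Subgroup.subset_closure (by simp)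
lemma Nm_mem : Nm ∈ HG := Subgroup.subset_closure (by simp)

lemma sl_val_mul (g h : SLZ2) : (g * h).val = g.val * h.val := rfl

lemma Ai_mem : Ai ∈ HG := by
  have h : Ai * Am = 1 := by apply Subtype.ext; decide
  rw [eq_inv_of_mul_eq_one_left h]
  exact inv_mem Am_mem

lemma Bi_mem : Bi ∈ HG := by
  have h : Bi * Bm = 1 := by apply Subtype.ext; decide
  rw [eq_inv_of_mul_eq_one_left h]
  exact inv_mem Bm_mem

lemma mem_of_mul_mem {t g : SLZ2} (ht : t ∈ HG) (h : t * g ∈ HG) : g ∈ HG := by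
  have := mul_mem (inv_mem ht) h
  simpa using this

def up (z : ℤ) : SLZ2 := ⟨!![1,z;0,1], by simp⟩

lemma up_mem : ∀ (n : ℕ) (z : ℤ), z.natAbs ≤ n → Even z → up z ∈ HG := by
  intro n
  induction n with
  | zero =>
    intro z hz _
    have hz0 : z = 0 := by omega
    subst hz0
    have : up 0 = 1 := by apply Subtype.ext; show !![(1:ℤ),0;0,1] = 1; decide
    rw [this]; exact one_mem _
  | succ n ih =>
    intro z hz hev
    obtain ⟨k, hk⟩ := hev
    rcases le_or_gt z.natAbs n with h' | h'
    · exact ih z h' ⟨k, hk⟩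
    · have hz0 : z ≠ 0 := by omega
      rcases le_or_gt 0 z with hpos | hneg
      · have hmem := ih (z - 2) (by omega) ⟨k - 1, by omega⟩
        apply mem_of_mul_mem Ai_mem
        have heq : Ai * up z = up (z - 2) := by
          apply Subtype.ext
          show !![(1:ℤ),-2;0,1] * !![(1:ℤ),z;0,1] = !![(1:ℤ),z-2;0,1]
          rw [Matrix.mul_fin_two]; congr 1 <;> ring
        rw [heq]; exact hmem
      · have hmem := ih (z + 2) (by omega) ⟨k + 1, by omega⟩
        apply mem_of_mul_mem Am_mem
        have heq : Am * up z = up (z + 2) := by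
          apply Subtype.ext
          show !![(1:ℤ),2;0,1] * !![(1:ℤ),z;0,1] = !![(1:ℤ),z+2;0,1]
          rw [Matrix.mul_fin_two]; congr 1 <;> ring
        rw [heq]; exact hmem

lemma mul_val_explicit (t g : SLZ2) (p q r s a b c d : ℤ)
    (ht : t.val = !![p,q;r,s]) (hg : g.val = !![a,b;c,d]) :
    (t * g).val = !![p*a+q*c, p*b+q*d; r*a+s*c, r*b+s*d] := by
  rw [sl_val_mul, ht, hg, Matrix.mul_fin_two]

lemma gamma2_gen_aux : ∀ (n : ℕ) (g : SLZ2) (a b c d : ℤ), g.val = !![a,b;c,d] →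
    a.natAbs + c.natAbs ≤ n → a % 2 = 1 → b % 2 = 0 → c % 2 = 0 → g ∈ HG := by
  intro n
  induction n with
  | zero => intro g a b c d _ hm h1 _ _; omega
  | succ n ih =>
    intro g a b c d hg hm h1 h2 h3
    have hdet : a * d - b * c = 1 := by
      have h := g.prop
      rw [hg, Matrix.det_fin_two_of] at h
      exact h
    by_cases hc : c = 0
    · subst hc
      have had : a * d = 1 := by linarith [hdet]
      rcases Int.eq_one_or_neg_one_of_mul_eq_one' had with ⟨ha, hd⟩ | ⟨ha, hd⟩
      · subst ha; subst hd
        have hgu : g = up b := Subtype.ext (by rw [hg]; rfl)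
        rw [hgu]
        exact up_mem b.natAbs b le_rfl ⟨b / 2, by omega⟩
      · subst ha; subst hd
        apply mem_of_mul_mem Nm_mem
        have hval := mul_val_explicit Nm g (-1) 0 0 (-1) (-1) b 0 (-1) rfl hg
        have hgu : Nm * g = up (-b) := Subtype.ext (by rw [hval]; norm_num; rfl)
        rw [hgu]
        exact up_mem (-b).natAbs (-b) le_rfl ⟨-(b / 2), by omega⟩
    · rcases lt_trichotomy a.natAbs c.natAbs with hlt | heq | hgt
      · by_cases hsgn : (0 ≤ a) ↔ (0 ≤ c)
        · apply mem_of_mul_mem Bi_mem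
          exact ih _ (1*a+0*c) (1*b+0*d) (-2*a+1*c) (-2*b+1*d)
            (mul_val_explicit Bi g 1 0 (-2) 1 a b c d rfl hg)
            (by omega) (by omega) (by omega) (by omega)
        · apply mem_of_mul_mem Bm_mem
          exact ih _ (1*a+0*c) (1*b+0*d) (2*a+1*c) (2*b+1*d)
            (mul_val_explicit Bm g 1 0 2 1 a b c d rfl hg)
            (by omega) (by omega) (by omega) (by omega)
      · omega
      · by_cases hsgn : (0 ≤ a) ↔ (0 ≤ c)
        · apply mem_of_mul_mem Ai_mem
          exact ih _ (1*a+(-2)*c) (1*b+(-2)*d) (0*a+1*c) (0*b+1*d)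
            (mul_val_explicit Ai g 1 (-2) 0 1 a b c d rfl hg)
            (by omega) (by omega) (by omega) (by omega)
        · apply mem_of_mul_mem Am_mem
          exact ih _ (1*a+2*c) (1*b+2*d) (0*a+1*c) (0*b+1*d)
            (mul_val_explicit Am g 1 2 0 1 a b c d rfl hg)
            (by omega) (by omega) (by omega) (by omega)

lemma Gamma2_le_HG : Gamma 2 ≤ HG := by
  intro g hg
  rw [CGH.mem_Gamma_iff] at hg
  have h00 := entry_dvd_of_map_one (d := 2) _ hg 0 0
  have h01 := entry_dvd_of_map_one (d := 2) _ hg 0 1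
  have h10 := entry_dvd_of_map_one (d := 2) _ hg 1 0
  simp only [if_pos rfl] at h00
  norm_num at h00 h01 h10
  exact gamma2_gen_aux _ g _ _ _ _ (Matrix.eta_fin_two g.val) le_rfl (by omega) (by omega) (by omega)

section descent
variable {d : ℕ}

abbrev redmap (d : ℕ) : SLZ2 →* Matrix.SpecialLinearGroup (Fin 2) (ZMod d) :=
  Matrix.SpecialLinearGroup.map (n := Fin 2) (Int.castRingHom (ZMod d))

lemma descent (H : Subgroup SLZ2) (hH : H.Normal)
    (Q : Subgroup (Matrix.SpecialLinearGroup (Fin 2) (ZMod d)))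
    (S : Set SLZ2) (hSQ : ∀ s ∈ S, redmap d s ∈ Q)
    (nf : Matrix.SpecialLinearGroup (Fin 2) (ZMod d) → SLZ2)
    (base : ∀ s ∈ S, ∀ q ∈ Q, s * nf q * (nf (redmap d s * q))⁻¹ ∈ H) :
    ∀ g ∈ Subgroup.closure S, ∀ q ∈ Q, g * nf q * (nf (redmap d g * q))⁻¹ ∈ H := by
  intro g hg
  have hgQ : ∀ g' ∈ Subgroup.closure S, redmap d g' ∈ Q := by
    intro g' hg'
    have : Subgroup.closure S ≤ Q.comap (redmap d) :=
      (Subgroup.closure_le _).mpr (fun s hs => hSQ s hs)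
    exact this hg'
  induction hg using Subgroup.closure_induction with
  | mem s hs => exact base s hs
  | one => intro q _; simpa using one_mem H
  | mul x y hx hy ihx ihy =>
    intro q hq
    have h1 : x * (y * nf q * (nf (redmap d y * q))⁻¹) * x⁻¹ ∈ H :=
      hH.conj_mem _ (ihy q hq) x
    have h2 : x * nf (redmap d y * q) * (nf (redmap d x * (redmap d y * q)))⁻¹ ∈ H :=
      ihx _ (mul_mem (hgQ y hy) hq)
    have key := mul_mem h1 h2
    have : x * (y * nf q * (nf (redmap d y * q))⁻¹) * x⁻¹ *
        (x * nf (redmap d y * q) * (nf (redmap d x * (redmap d y * q)))⁻¹)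
        = x * y * nf q * (nf (redmap d (x * y) * q))⁻¹ := by
      rw [_root_.map_mul, mul_assoc (redmap d x)]
      group
    rwa [this] at key
  | inv x hx ihx =>
    intro q hq
    have hq' : redmap d x⁻¹ * q ∈ Q := mul_mem (hgQ x⁻¹ (inv_mem hx)) hq
    have h1 : x * nf (redmap d x⁻¹ * q) * (nf (redmap d x * (redmap d x⁻¹ * q)))⁻¹ ∈ H :=
      ihx _ hq'
    have h2 : (x * nf (redmap d x⁻¹ * q) * (nf (redmap d x * (redmap d x⁻¹ * q)))⁻¹)⁻¹ ∈ H :=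
      inv_mem h1
    have h3 := hH.conj_mem _ h2 x⁻¹
    have : x⁻¹ * (x * nf (redmap d x⁻¹ * q) * (nf (redmap d x * (redmap d x⁻¹ * q)))⁻¹)⁻¹ * x⁻¹⁻¹
        = x⁻¹ * nf q * (nf (redmap d x⁻¹ * q))⁻¹ := by
      rw [show redmap d x * (redmap d x⁻¹ * q) = q by rw [← mul_assoc, ← _root_.map_mul]; simp]
      group
    rwa [this] at h3
end descent
set_option maxRecDepth 40000

def S2 (a b c d : ℤ) (h : a * d - b * c = 1 := by decide) : SLZ2 :=
  ⟨!![a,b;c,d], by rw [Matrix.det_fin_two_of]; exact h⟩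

lemma mem_of_eq {x y : SLZ2} {H : Subgroup SLZ2} (h : x = y) (hy : y ∈ H) : x ∈ H := h ▸ hy

def Jm : GL (Fin 2) ℤ := ⟨!![1,0;0,-1], !![1,0;0,-1], by decide, by decide⟩
def K2 : GL (Fin 2) ℤ := ⟨!![1,-2;0,-1], !![1,-2;0,-1], by decide, by decide⟩

def H4 : Subgroup SLZ2 := (⁅GammaHat 2, (Gamma 2).map CGH.toGL⁆).comap CGH.toGL
def H6 : Subgroup SLZ2 := (⁅GammaHat 2, (Gamma 3).map CGH.toGL⁆).comap CGH.toGL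

lemma commNormal4 : (⁅GammaHat 2, (Gamma 2).map CGH.toGL⁆).Normal := by
  haveI : (GammaHat 2).Normal := MonoidHom.normal_ker _
  exact Subgroup.commutator_normal _ _

lemma H4normal : H4.Normal := by haveI := commNormal4; exact Subgroup.normal_comap _
lemma commNormal6 : (⁅GammaHat 2, (Gamma 3).map CGH.toGL⁆).Normal := by
  haveI : (GammaHat 2).Normal := MonoidHom.normal_ker _
  exact Subgroup.commutator_normal _ _

lemma H6normal : H6.Normal := by haveI := commNormal6; exact Subgroup.normal_comap _

lemma certGL6 (z : SLZ2) (x : GL (Fin 2) ℤ) (y : SLZ2) (hx : x ∈ GammaHat 2) (hy : y ∈ Gamma 3)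
    (h : CGH.toGL z = ⁅x, CGH.toGL y⁆) : z ∈ H6 := by
  rw [H6, Subgroup.mem_comap, h]
  exact Subgroup.commutator_mem_commutator hx (Subgroup.mem_map_of_mem _ hy)

lemma certGL4 (z : SLZ2) (x : GL (Fin 2) ℤ) (y : SLZ2) (hx : x ∈ GammaHat 2) (hy : y ∈ Gamma 2)
    (h : CGH.toGL z = ⁅x, CGH.toGL y⁆) : z ∈ H4 := by
  rw [H4, Subgroup.mem_comap, h]
  exact Subgroup.commutator_mem_commutator hx (Subgroup.mem_map_of_mem _ hy)

lemma certSL4 (x y : SLZ2) (hx : x ∈ Gamma 2) (hy : y ∈ Gamma 2) : ⁅x, y⁆ ∈ H4 := by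
  rw [H4, Subgroup.mem_comap, map_commutatorElement]
  exact Subgroup.commutator_mem_commutator
    (CGH.map_toGL_le_GammaHat (Subgroup.mem_map_of_mem _ hx)) (Subgroup.mem_map_of_mem _ hy)

lemma mem2_Am : Am ∈ Gamma 2 := by rw [CGH.mem_Gamma_iff]; decide
lemma mem2_Bm : Bm ∈ Gamma 2 := by rw [CGH.mem_Gamma_iff]; decide
lemma mem2_Ai : Ai ∈ Gamma 2 := by rw [CGH.mem_Gamma_iff]; decide
lemma mem2_Bi : Bi ∈ Gamma 2 := by rw [CGH.mem_Gamma_iff]; decide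
lemma mem2_Nm : Nm ∈ Gamma 2 := by rw [CGH.mem_Gamma_iff]; decide

lemma Jm_mem : Jm ∈ GammaHat 2 := by rw [CGH.mem_GammaHat_iff]; decide
lemma K2_mem : K2 ∈ GammaHat 2 := by rw [CGH.mem_GammaHat_iff]; decide

def T3i : SLZ2 := S2 1 (-3) 0 1
def L3i : SLZ2 := S2 1 0 (-3) 1
def Z6t : SLZ2 := S2 1 6 0 1
def Z6l : SLZ2 := S2 1 0 6 1
def M0 : SLZ2 := S2 (-29) (-12) (-12) (-5)
def Z4a : SLZ2 := S2 1 4 0 1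
def Z4b : SLZ2 := S2 1 0 4 1

lemma Z6t_mem : Z6t ∈ H6 :=
  certGL6 _ Jm T3i Jm_mem (by rw [CGH.mem_Gamma_iff]; decide) (Units.ext (by decide))
lemma Z6l_mem : Z6l ∈ H6 :=
  certGL6 _ Jm L3i Jm_mem (by rw [CGH.mem_Gamma_iff]; decide) (Units.ext (by decide))
lemma M0_mem : M0 ∈ H6 :=
  certGL6 _ K2 L3i K2_mem (by rw [CGH.mem_Gamma_iff]; decide) (Units.ext (by decide))
lemma Z4a_mem : Z4a ∈ H4 :=
  certGL4 _ Jm Ai Jm_mem mem2_Ai (Units.ext (by decide))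
lemma Z4b_mem : Z4b ∈ H4 :=
  certGL4 _ Jm Bi Jm_mem mem2_Bi (Units.ext (by decide))


lemma c4_0 : (S2 (1) (4) (0) (1)) ∈ H4 := by
  have h : (S2 (1) (4) (0) (1)) = (S2 (1) (0) (0) (1) * Z4a * (S2 (1) (0) (0) (1))⁻¹) := by decide
  rw [h]
  exact ((H4normal).conj_mem _ (Z4a_mem) (S2 (1) (0) (0) (1)))

lemma c4_1 : (S2 (21) (-8) (8) (-3)) ∈ H4 := by
  have h : (S2 (21) (-8) (8) (-3)) = (S2 (5) (-8) (2) (-3) * ⁅Bi, Am⁆ * (S2 (5) (-8) (2) (-3))⁻¹) := by decide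
  rw [h]
  exact ((H4normal).conj_mem _ (certSL4 Bi Am mem2_Bi mem2_Am) (S2 (5) (-8) (2) (-3)))

lemma c4_2 : (S2 (-19) (12) (-8) (5)) ∈ H4 := by
  have h : (S2 (-19) (12) (-8) (5)) = (S2 (1) (2) (0) (1) * ⁅Bm, Am⁆ * (S2 (1) (2) (0) (1))⁻¹) * (S2 (1) (0) (0) (1) * Z4a * (S2 (1) (0) (0) (1))⁻¹) := by decide
  rw [h]
  exact (mul_mem ((H4normal).conj_mem _ (certSL4 Bm Am mem2_Bm mem2_Am) (S2 (1) (2) (0) (1))) ((H4normal).conj_mem _ (Z4a_mem) (S2 (1) (0) (0) (1))))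

lemma c4_3 : (S2 (1) (0) (4) (1)) ∈ H4 := by
  have h : (S2 (1) (0) (4) (1)) = (S2 (1) (0) (0) (1) * Z4b * (S2 (1) (0) (0) (1))⁻¹) := by decide
  rw [h]
  exact ((H4normal).conj_mem _ (Z4b_mem) (S2 (1) (0) (0) (1)))

def n4 : Matrix.SpecialLinearGroup (Fin 2) (ZMod 4) → SLZ2 := fun q =>
  if q = (show Matrix.SpecialLinearGroup (Fin 2) (ZMod 4) from ⟨!![1,0;0,1], by decide⟩) then S2 (1) (0) (0) (1) else if q = (show Matrix.SpecialLinearGroup (Fin 2) (ZMod 4) from ⟨!![1,2;0,1], by decide⟩) then S2 (1) (2) (0) (1) else if q = (show Matrix.SpecialLinearGroup (Fin 2) (ZMod 4) from ⟨!![1,0;2,1], by decide⟩) then S2 (1) (0) (2) (1) else if q = (show Matrix.SpecialLinearGroup (Fin 2) (ZMod 4) from ⟨!![3,0;0,3], by decide⟩) then S2 (-1) (0) (0) (-1) else if q = (show Matrix.SpecialLinearGroup (Fin 2) (ZMod 4) from ⟨!![1,2;2,1], by decide⟩) then S2 (1) (2) (2) (5) else if q = (show Matrix.SpecialLinearGroup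 (Fin 2) (ZMod 4) from ⟨!![3,2;0,3], by decide⟩) then S2 (-1) (-2) (0) (-1) else if q = (show Matrix.SpecialLinearGroup (Fin 2) (ZMod 4) from ⟨!![3,0;2,3], by decide⟩) then S2 (-1) (0) (-2) (-1) else if q = (show Matrix.SpecialLinearGroup (Fin 2) (ZMod 4) from ⟨!![3,2;2,3], by decide⟩) then S2 (-1) (-2) (-2) (-5) else 1

def L4 : List (Matrix.SpecialLinearGroup (Fin 2) (ZMod 4)) := [(⟨!![1,0;0,1], by decide⟩ : Matrix.SpecialLinearGroup (Fin 2) (ZMod 4)), (⟨!![1,2;0,1], by decide⟩ : Matrix.SpecialLinearGroup (Fin 2) (ZMod 4)), (⟨!![1,0;2,1], by decide⟩ : Matrix.SpecialLinearGroup (Fin 2) (ZMod 4)), (⟨!![3,0;0,3], by decide⟩ : Matrix.SpecialLinearGroup (Fin 2) (ZMod 4)), (⟨!![1,2;2,1], by decide⟩ : Matrix.SpecialLinearGroup (Fin 2) (ZMod 4)), (⟨!![3,2;0,3], by decide⟩ : Matrix.SpecialLinearGroup (Fin 2) (ZMod 4)), (⟨!![3,0;2,3], by decide⟩ : Matrix.SpecialLinearGroup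 (Fin 2) (ZMod 4)), (⟨!![3,2;2,3], by decide⟩ : Matrix.SpecialLinearGroup (Fin 2) (ZMod 4))]

def Q4 : Subgroup (Matrix.SpecialLinearGroup (Fin 2) (ZMod 4)) where
  carrier := {x | x ∈ L4}
  one_mem' := by decide
  mul_mem' := by intro a b ha hb; revert a b ha hb; decide
  inv_mem' := by intro a ha; revert a ha; decide

lemma base4 : ∀ s ∈ ({Am, Bm, Nm} : Set SLZ2), ∀ q ∈ Q4,
    s * n4 q * (n4 (redmap 4 s * q))⁻¹ ∈ H4 := by
  rintro s hs q hq
  have hL : q ∈ L4 := hq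
  rcases hs with rfl | rfl | rfl
  · fin_cases hL
    · exact mem_of_eq (by decide) (one_mem _)
    · exact mem_of_eq (by decide) c4_0
    · exact mem_of_eq (by decide) c4_1
    · exact mem_of_eq (by decide) (one_mem _)
    · exact mem_of_eq (by decide) c4_2
    · exact mem_of_eq (by decide) c4_0
    · exact mem_of_eq (by decide) c4_1
    · exact mem_of_eq (by decide) c4_2
  · fin_cases hL
    · exact mem_of_eq (by decide) (one_mem _)
    · exact mem_of_eq (by decide) (one_mem _)
    · exact mem_of_eq (by decide) c4_3
    · exact mem_of_eq (by decide) (one_mem _)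
    · exact mem_of_eq (by decide) c4_3
    · exact mem_of_eq (by decide) (one_mem _)
    · exact mem_of_eq (by decide) c4_3
    · exact mem_of_eq (by decide) c4_3
  · fin_cases hL
    · exact mem_of_eq (by decide) (one_mem _)
    · exact mem_of_eq (by decide) (one_mem _)
    · exact mem_of_eq (by decide) (one_mem _)
    · exact mem_of_eq (by decide) (one_mem _)
    · exact mem_of_eq (by decide) (one_mem _)
    · exact mem_of_eq (by decide) (one_mem _)
    · exact mem_of_eq (by decide) (one_mem _)
    · exact mem_of_eq (by decide) (one_mem _)

lemma c3_0 : (S2 (1) (6) (0) (1)) ∈ H6 := by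
  have h : (S2 (1) (6) (0) (1)) = (S2 (1) (0) (0) (1) * Z6t * (S2 (1) (0) (0) (1))⁻¹) := by decide
  rw [h]
  exact ((H6normal).conj_mem _ (Z6t_mem) (S2 (1) (0) (0) (1)))

lemma c3_1 : (S2 (43) (-12) (18) (-5)) ∈ H6 := by
  have h : (S2 (43) (-12) (18) (-5)) = (S2 (1) (0) (0) (1) * M0 * (S2 (1) (0) (0) (1))⁻¹) * (S2 (1) (0) (0) (1) * (Z6l)⁻¹ * (S2 (1) (0) (0) (1))⁻¹) := by decide
  rw [h]
  exact (mul_mem ((H6normal).conj_mem _ (M0_mem) (S2 (1) (0) (0) (1))) ((H6normal).conj_mem _ (inv_mem (Z6l_mem)) (S2 (1) (0) (0) (1))))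

lemma c3_2 : (S2 (-77) (30) (-18) (7)) ∈ H6 := by
  have h : (S2 (-77) (30) (-18) (7)) = (S2 (1) (4) (0) (1) * Z6l * (S2 (1) (4) (0) (1))⁻¹) * (S2 (1) (4) (0) (1) * (M0)⁻¹ * (S2 (1) (4) (0) (1))⁻¹) * (S2 (1) (0) (0) (1) * Z6t * (S2 (1) (0) (0) (1))⁻¹) := by decide
  rw [h]
  exact (mul_mem (mul_mem ((H6normal).conj_mem _ (Z6l_mem) (S2 (1) (4) (0) (1))) ((H6normal).conj_mem _ (inv_mem (M0_mem)) (S2 (1) (4) (0) (1)))) ((H6normal).conj_mem _ (Z6t_mem) (S2 (1) (0) (0) (1))))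

lemma c3_3 : (S2 (-719) (324) (-162) (73)) ∈ H6 := by
  have h : (S2 (-719) (324) (-162) (73)) = (S2 (9) (4) (2) (1) * Z6t * (S2 (9) (4) (2) (1))⁻¹) * (S2 (9) (-14) (2) (-3) * (M0)⁻¹ * (S2 (9) (-14) (2) (-3))⁻¹) * (S2 (1) (4) (0) (1) * Z6l * (S2 (1) (4) (0) (1))⁻¹) * (S2 (1) (4) (0) (1) * (M0)⁻¹ * (S2 (1) (4) (0) (1))⁻¹) * (S2 (1) (0) (0) (1) * Z6t * (S2 (1) (0) (0) (1))⁻¹) := by decide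
  rw [h]
  exact (mul_mem (mul_mem (mul_mem (mul_mem ((H6normal).conj_mem _ (Z6t_mem) (S2 (9) (4) (2) (1))) ((H6normal).conj_mem _ (inv_mem (M0_mem)) (S2 (9) (-14) (2) (-3)))) ((H6normal).conj_mem _ (Z6l_mem) (S2 (1) (4) (0) (1)))) ((H6normal).conj_mem _ (inv_mem (M0_mem)) (S2 (1) (4) (0) (1)))) ((H6normal).conj_mem _ (Z6t_mem) (S2 (1) (0) (0) (1))))

lemma c3_4 : (S2 (397) (-174) (162) (-71)) ∈ H6 := by
  have h : (S2 (397) (-174) (162) (-71)) = (S2 (1) (0) (0) (1) * M0 * (S2 (1) (0) (0) (1))⁻¹) * (S2 (5) (2) (-8) (-3) * (Z6t)⁻¹ * (S2 (5) (2) (-8) (-3))⁻¹) * (S2 (1) (0) (-2) (1) * M0 * (S2 (1) (0) (-2) (1))⁻¹) * (S2 (1) (0) (0) (1) * (Z6l)⁻¹ * (S2 (1) (0) (0) (1))⁻¹) := by decide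
  rw [h]
  exact (mul_mem (mul_mem (mul_mem ((H6normal).conj_mem _ (M0_mem) (S2 (1) (0) (0) (1))) ((H6normal).conj_mem _ (inv_mem (Z6t_mem)) (S2 (5) (2) (-8) (-3)))) ((H6normal).conj_mem _ (M0_mem) (S2 (1) (0) (-2) (1)))) ((H6normal).conj_mem _ (inv_mem (Z6l_mem)) (S2 (1) (0) (0) (1))))

lemma c3_5 : (S2 (-5) (18) (-12) (43)) ∈ H6 := by
  have h : (S2 (-5) (18) (-12) (43)) = (S2 (1) (-2) (0) (1) * M0 * (S2 (1) (-2) (0) (1))⁻¹) * (S2 (1) (0) (0) (1) * (Z6t)⁻¹ * (S2 (1) (0) (0) (1))⁻¹) := by decide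
  rw [h]
  exact (mul_mem ((H6normal).conj_mem _ (M0_mem) (S2 (1) (-2) (0) (1))) ((H6normal).conj_mem _ (inv_mem (Z6t_mem)) (S2 (1) (0) (0) (1))))

lemma c3_6 : (S2 (1) (0) (6) (1)) ∈ H6 := by
  have h : (S2 (1) (0) (6) (1)) = (S2 (1) (0) (0) (1) * Z6l * (S2 (1) (0) (0) (1))⁻¹) := by decide
  rw [h]
  exact ((H6normal).conj_mem _ (Z6l_mem) (S2 (1) (0) (0) (1)))

lemma c3_7 : (S2 (-5) (12) (-18) (43)) ∈ H6 := by
  have h : (S2 (-5) (12) (-18) (43)) = (S2 (1) (-2) (4) (-7) * (M0)⁻¹ * (S2 (1) (-2) (4) (-7))⁻¹) * (S2 (1) (0) (0) (1) * Z6l * (S2 (1) (0) (0) (1))⁻¹) := by decide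
  rw [h]
  exact (mul_mem ((H6normal).conj_mem _ (inv_mem (M0_mem)) (S2 (1) (-2) (4) (-7))) ((H6normal).conj_mem _ (Z6l_mem) (S2 (1) (0) (0) (1))))

lemma c3_8 : (S2 (7) (-18) (30) (-77)) ∈ H6 := by
  have h : (S2 (7) (-18) (30) (-77)) = (S2 (1) (0) (4) (1) * Z6t * (S2 (1) (0) (4) (1))⁻¹) * (S2 (1) (-2) (4) (-7) * (M0)⁻¹ * (S2 (1) (-2) (4) (-7))⁻¹) * (S2 (1) (0) (0) (1) * Z6l * (S2 (1) (0) (0) (1))⁻¹) := by decide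
  rw [h]
  exact (mul_mem (mul_mem ((H6normal).conj_mem _ (Z6t_mem) (S2 (1) (0) (4) (1))) ((H6normal).conj_mem _ (inv_mem (M0_mem)) (S2 (1) (-2) (4) (-7)))) ((H6normal).conj_mem _ (Z6l_mem) (S2 (1) (0) (0) (1))))

lemma c3_9 : (S2 (-5) (-12) (-12) (-29)) ∈ H6 := by
  have h : (S2 (-5) (-12) (-12) (-29)) = (S2 (1) (-2) (0) (1) * M0 * (S2 (1) (-2) (0) (1))⁻¹) := by decide
  rw [h]
  exact ((H6normal).conj_mem _ (M0_mem) (S2 (1) (-2) (0) (1)))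

lemma c3_10 : (S2 (-35) (162) (-78) (361)) ∈ H6 := by
  have h : (S2 (-35) (162) (-78) (361)) = (S2 (1) (2) (2) (5) * M0 * (S2 (1) (2) (2) (5))⁻¹) * (S2 (1) (2) (2) (5) * (Z6l)⁻¹ * (S2 (1) (2) (2) (5))⁻¹) * (S2 (1) (-2) (0) (1) * M0 * (S2 (1) (-2) (0) (1))⁻¹) * (S2 (1) (0) (0) (1) * (Z6t)⁻¹ * (S2 (1) (0) (0) (1))⁻¹) := by decide
  rw [h]
  exact (mul_mem (mul_mem (mul_mem ((H6normal).conj_mem _ (M0_mem) (S2 (1) (2) (2) (5))) ((H6normal).conj_mem _ (inv_mem (Z6l_mem)) (S2 (1) (2) (2) (5)))) ((H6normal).conj_mem _ (M0_mem) (S2 (1) (-2) (0) (1)))) ((H6normal).conj_mem _ (inv_mem (Z6t_mem)) (S2 (1) (0) (0) (1))))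

lemma c3_11 : (S2 (-71) (162) (-174) (397)) ∈ H6 := by
  have h : (S2 (-71) (162) (-174) (397)) = (S2 (1) (-2) (0) (1) * M0 * (S2 (1) (-2) (0) (1))⁻¹) * (S2 (-3) (-8) (2) (5) * (Z6l)⁻¹ * (S2 (-3) (-8) (2) (5))⁻¹) * (S2 (1) (-4) (0) (1) * M0 * (S2 (1) (-4) (0) (1))⁻¹) * (S2 (1) (0) (0) (1) * (Z6t)⁻¹ * (S2 (1) (0) (0) (1))⁻¹) := by decide
  rw [h]
  exact (mul_mem (mul_mem (mul_mem ((H6normal).conj_mem _ (M0_mem) (S2 (1) (-2) (0) (1))) ((H6normal).conj_mem _ (inv_mem (Z6l_mem)) (S2 (-3) (-8) (2) (5)))) ((H6normal).conj_mem _ (M0_mem) (S2 (1) (-4) (0) (1)))) ((H6normal).conj_mem _ (inv_mem (Z6t_mem)) (S2 (1) (0) (0) (1))))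

lemma c3_12 : (S2 (37) (-162) (156) (-683)) ∈ H6 := by
  have h : (S2 (37) (-162) (156) (-683)) = (S2 (9) (-14) (38) (-59) * (M0)⁻¹ * (S2 (9) (-14) (38) (-59))⁻¹) * (S2 (1) (0) (4) (1) * Z6t * (S2 (1) (0) (4) (1))⁻¹) * (S2 (1) (-2) (4) (-7) * Z6l * (S2 (1) (-2) (4) (-7))⁻¹) * (S2 (1) (-2) (4) (-7) * (M0)⁻¹ * (S2 (1) (-2) (4) (-7))⁻¹) * (S2 (1) (0) (0) (1) * Z6l * (S2 (1) (0) (0) (1))⁻¹) := by decide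
  rw [h]
  exact (mul_mem (mul_mem (mul_mem (mul_mem ((H6normal).conj_mem _ (inv_mem (M0_mem)) (S2 (9) (-14) (38) (-59))) ((H6normal).conj_mem _ (Z6t_mem) (S2 (1) (0) (4) (1)))) ((H6normal).conj_mem _ (Z6l_mem) (S2 (1) (-2) (4) (-7)))) ((H6normal).conj_mem _ (inv_mem (M0_mem)) (S2 (1) (-2) (4) (-7)))) ((H6normal).conj_mem _ (Z6l_mem) (S2 (1) (0) (0) (1))))

lemma c3_13 : (S2 (-65) (144) (-144) (319)) ∈ H6 := by
  have h : (S2 (-65) (144) (-144) (319)) = (S2 (9) (-14) (20) (-31) * (Z6l)⁻¹ * (S2 (9) (-14) (20) (-31))⁻¹) * (S2 (1) (2) (2) (5) * M0 * (S2 (1) (2) (2) (5))⁻¹) * (S2 (-3) (2) (-8) (5) * (Z6t)⁻¹ * (S2 (-3) (2) (-8) (5))⁻¹) * (S2 (1) (-2) (0) (1) * M0 * (S2 (1) (-2) (0) (1))⁻¹) * (S2 (1) (-2) (0) (1) * (Z6l)⁻¹ * (S2 (1) (-2) (0) (1))⁻¹) * (S2 (1) (-4) (0) (1) * M0 * (S2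 (1) (-4) (0) (1))⁻¹) * (S2 (1) (0) (0) (1) * (Z6t)⁻¹ * (S2 (1) (0) (0) (1))⁻¹) := by decide
  rw [h]
  exact (mul_mem (mul_mem (mul_mem (mul_mem (mul_mem (mul_mem ((H6normal).conj_mem _ (inv_mem (Z6l_mem)) (S2 (9) (-14) (20) (-31))) ((H6normal).conj_mem _ (M0_mem) (S2 (1) (2) (2) (5)))) ((H6normal).conj_mem _ (inv_mem (Z6t_mem)) (S2 (-3) (2) (-8) (5)))) ((H6normal).conj_mem _ (M0_mem) (S2 (1) (-2) (0) (1)))) ((H6normal).conj_mem _ (inv_mem (Z6l_mem)) (S2 (1) (-2) (0) (1)))) ((H6normal).conj_mem _ (M0_mem) (S2 (1) (-4) (0) (1)))) ((H6normal).conj_mem _ (inv_mem (Z6t_mem)) (S2 (1) (0) (0) (1))))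

lemma c3_14 : (S2 (-41) (180) (-18) (79)) ∈ H6 := by
  have h : (S2 (-41) (180) (-18) (79)) = (S2 (9) (-16) (4) (-7) * (M0)⁻¹ * (S2 (9) (-16) (4) (-7))⁻¹) * (S2 (1) (2) (0) (1) * Z6l * (S2 (1) (2) (0) (1))⁻¹) := by decide
  rw [h]
  exact (mul_mem ((H6normal).conj_mem _ (inv_mem (M0_mem)) (S2 (9) (-16) (4) (-7))) ((H6normal).conj_mem _ (Z6l_mem) (S2 (1) (2) (0) (1))))

lemma c3_15 : (S2 (79) (-180) (18) (-41)) ∈ H6 := by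
  have h : (S2 (79) (-180) (18) (-41)) = (S2 (1) (2) (0) (1) * M0 * (S2 (1) (2) (0) (1))⁻¹) * (S2 (1) (2) (0) (1) * (Z6l)⁻¹ * (S2 (1) (2) (0) (1))⁻¹) := by decide
  rw [h]
  exact (mul_mem ((H6normal).conj_mem _ (M0_mem) (S2 (1) (2) (0) (1))) ((H6normal).conj_mem _ (inv_mem (Z6l_mem)) (S2 (1) (2) (0) (1))))

lemma c3_16 : (S2 (319) (-144) (144) (-65)) ∈ H6 := by
  have h : (S2 (319) (-144) (144) (-65)) = (S2 (-31) (20) (-14) (9) * (Z6t)⁻¹ * (S2 (-31) (20) (-14) (9))⁻¹) * (S2 (5) (-8) (2) (-3) * M0 * (S2 (5) (-8) (2) (-3))⁻¹) * (S2 (5) (-8) (2) (-3) * (Z6l)⁻¹ * (S2 (5) (-8) (2) (-3))⁻¹) * (S2 (1) (0) (0) (1) * M0 * (S2 (1) (0) (0) (1))⁻¹) * (S2 (1) (0) (-2) (1) * (Z6t)⁻¹ * (S2 (1) (0) (-2) (1))⁻¹) * (S2 (1) (0) (-2) (1) * M0 * (S2 (1) (0) (-2) (1))⁻¹) * (S2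 (1) (0) (0) (1) * (Z6l)⁻¹ * (S2 (1) (0) (0) (1))⁻¹) := by decide
  rw [h]
  exact (mul_mem (mul_mem (mul_mem (mul_mem (mul_mem (mul_mem ((H6normal).conj_mem _ (inv_mem (Z6t_mem)) (S2 (-31) (20) (-14) (9))) ((H6normal).conj_mem _ (M0_mem) (S2 (5) (-8) (2) (-3)))) ((H6normal).conj_mem _ (inv_mem (Z6l_mem)) (S2 (5) (-8) (2) (-3)))) ((H6normal).conj_mem _ (M0_mem) (S2 (1) (0) (0) (1)))) ((H6normal).conj_mem _ (inv_mem (Z6t_mem)) (S2 (1) (0) (-2) (1)))) ((H6normal).conj_mem _ (M0_mem) (S2 (1) (0) (-2) (1)))) ((H6normal).conj_mem _ (inv_mem (Z6l_mem)) (S2 (1) (0) (0) (1))))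

def n3 : Matrix.SpecialLinearGroup (Fin 2) (ZMod 3) → SLZ2 := fun q =>
  if q = (show Matrix.SpecialLinearGroup (Fin 2) (ZMod 3) from ⟨!![1,0;0,1], by decide⟩) then S2 (1) (0) (0) (1) else if q = (show Matrix.SpecialLinearGroup (Fin 2) (ZMod 3) from ⟨!![1,2;0,1], by decide⟩) then S2 (1) (2) (0) (1) else if q = (show Matrix.SpecialLinearGroup (Fin 2) (ZMod 3) from ⟨!![1,0;2,1], by decide⟩) then S2 (1) (0) (2) (1) else if q = (show Matrix.SpecialLinearGroup (Fin 2) (ZMod 3) from ⟨!![2,0;0,2], by decide⟩) then S2 (-1) (0) (0) (-1) else if q = (show Matrix.SpecialLinearGroup (Fin 2) (ZMod 3) from ⟨!![1,1;0,1], by decide⟩) then S2 (1) (4) (0) (1) else if q = (show Matrix.SpecialLinearGroup (Fin 2) (ZMod 3) from ⟨!![1,2;2,2], by decide⟩) then S2 (1) (2) (2) (5) else if q = (show Matrix.SpecialLinearGroup (Fin 2) (ZMod 3) from ⟨!![2,1;0,2], by decide⟩) then S2 (-1) (-2) (0) (-1) else if q = (show Matrix.SpecialLinearGroup (Fin 2)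 (ZMod 3) from ⟨!![2,2;2,1], by decide⟩) then S2 (5) (2) (2) (1) else if q = (show Matrix.SpecialLinearGroup (Fin 2) (ZMod 3) from ⟨!![1,0;1,1], by decide⟩) then S2 (1) (0) (4) (1) else if q = (show Matrix.SpecialLinearGroup (Fin 2) (ZMod 3) from ⟨!![2,0;1,2], by decide⟩) then S2 (-1) (0) (-2) (-1) else if q = (show Matrix.SpecialLinearGroup (Fin 2) (ZMod 3) from ⟨!![1,1;2,0], by decide⟩) then S2 (1) (4) (2) (9) else if q = (show Matrix.SpecialLinearGroup (Fin 2) (ZMod 3) from ⟨!![2,2;0,2], by decide⟩) then S2 (-1) (-4) (0) (-1) else if q = (show Matrix.SpecialLinearGroup (Fin 2) (ZMod 3) from ⟨!![2,0;2,2], by decide⟩) then S2 (5) (12) (2) (5) else if q = (show Matrix.SpecialLinearGroup (Fin 2) (ZMod 3) from ⟨!![1,2;1,0], by decide⟩) then S2 (1) (2) (4) (9) else if q = (show Matrix.SpecialLinearGroup (Fin 2) (ZMod 3) from ⟨!![2,1;1,1], by decide⟩) then S2 (-1) (-2) (-2) (-5) else if q = (show Matrix.SpecialLinearGroup (Fin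 2) (ZMod 3) from ⟨!![0,1;2,1], by decide⟩) then S2 (9) (4) (2) (1) else if q = (show Matrix.SpecialLinearGroup (Fin 2) (ZMod 3) from ⟨!![1,1;1,2], by decide⟩) then S2 (-5) (-2) (-2) (-1) else if q = (show Matrix.SpecialLinearGroup (Fin 2) (ZMod 3) from ⟨!![0,2;1,1], by decide⟩) then S2 (9) (2) (4) (1) else if q = (show Matrix.SpecialLinearGroup (Fin 2) (ZMod 3) from ⟨!![2,1;2,0], by decide⟩) then S2 (5) (22) (2) (9) else if q = (show Matrix.SpecialLinearGroup (Fin 2) (ZMod 3) from ⟨!![2,2;1,0], by decide⟩) then S2 (-1) (-4) (-2) (-9) else if q = (show Matrix.SpecialLinearGroup (Fin 2) (ZMod 3) from ⟨!![0,1;2,2], by decide⟩) then S2 (9) (22) (2) (5) else if q = (show Matrix.SpecialLinearGroup (Fin 2) (ZMod 3) from ⟨!![0,2;1,0], by decide⟩) then S2 (9) (20) (4) (9) else if q = (show Matrix.SpecialLinearGroup (Fin 2) (ZMod 3) from ⟨!![0,1;2,0], by decide⟩) then S2 (9) (4) (20) (9) else if q = (show Matrix.SpecialLinearGroup (Fin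 2) (ZMod 3) from ⟨!![0,2;1,2], by decide⟩) then S2 (-9) (-4) (-2) (-1) else 1

def L3 : List (Matrix.SpecialLinearGroup (Fin 2) (ZMod 3)) := [(⟨!![1,0;0,1], by decide⟩ : Matrix.SpecialLinearGroup (Fin 2) (ZMod 3)), (⟨!![1,2;0,1], by decide⟩ : Matrix.SpecialLinearGroup (Fin 2) (ZMod 3)), (⟨!![1,0;2,1], by decide⟩ : Matrix.SpecialLinearGroup (Fin 2) (ZMod 3)), (⟨!![2,0;0,2], by decide⟩ : Matrix.SpecialLinearGroup (Fin 2) (ZMod 3)), (⟨!![1,1;0,1], by decide⟩ : Matrix.SpecialLinearGroup (Fin 2) (ZMod 3)), (⟨!![1,2;2,2], by decide⟩ : Matrix.SpecialLinearGroup (Fin 2) (ZMod 3)), (⟨!![2,1;0,2], by decide⟩ : Matrix.SpecialLinearGroup (Fin 2) (ZMod 3)), (⟨!![2,2;2,1], by decide⟩ : Matrix.SpecialLinearGroup (Fin 2) (ZMod 3)), (⟨!![1,0;1,1], by decide⟩ : Matrix.SpecialLinearGroup (Fin 2) (ZMod 3)), (⟨!![2,0;1,2], by decide⟩ : Matrix.SpecialLinearGroup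 (Fin 2) (ZMod 3)), (⟨!![1,1;2,0], by decide⟩ : Matrix.SpecialLinearGroup (Fin 2) (ZMod 3)), (⟨!![2,2;0,2], by decide⟩ : Matrix.SpecialLinearGroup (Fin 2) (ZMod 3)), (⟨!![2,0;2,2], by decide⟩ : Matrix.SpecialLinearGroup (Fin 2) (ZMod 3)), (⟨!![1,2;1,0], by decide⟩ : Matrix.SpecialLinearGroup (Fin 2) (ZMod 3)), (⟨!![2,1;1,1], by decide⟩ : Matrix.SpecialLinearGroup (Fin 2) (ZMod 3)), (⟨!![0,1;2,1], by decide⟩ : Matrix.SpecialLinearGroup (Fin 2) (ZMod 3)), (⟨!![1,1;1,2], by decide⟩ : Matrix.SpecialLinearGroup (Fin 2) (ZMod 3)), (⟨!![0,2;1,1], by decide⟩ : Matrix.SpecialLinearGroup (Fin 2) (ZMod 3)), (⟨!![2,1;2,0], by decide⟩ : Matrix.SpecialLinearGroup (Fin 2) (ZMod 3)), (⟨!![2,2;1,0], by decide⟩ : Matrix.SpecialLinearGroup (Fin 2) (ZMod 3)), (⟨!![0,1;2,2], by decide⟩ : Matrix.SpecialLinearGroup (Fin 2) (ZMod 3)),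 (⟨!![0,2;1,0], by decide⟩ : Matrix.SpecialLinearGroup (Fin 2) (ZMod 3)), (⟨!![0,1;2,0], by decide⟩ : Matrix.SpecialLinearGroup (Fin 2) (ZMod 3)), (⟨!![0,2;1,2], by decide⟩ : Matrix.SpecialLinearGroup (Fin 2) (ZMod 3))]

def Q3 : Subgroup (Matrix.SpecialLinearGroup (Fin 2) (ZMod 3)) where
  carrier := {x | x ∈ L3}
  one_mem' := by decide
  mul_mem' := by intro a b ha hb; revert a b ha hb; decide
  inv_mem' := by intro a ha; revert a ha; decide

lemma base3 : ∀ s ∈ ({Am, Bm, Nm} : Set SLZ2), ∀ q ∈ Q3,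
    s * n3 q * (n3 (redmap 3 s * q))⁻¹ ∈ H6 := by
  rintro s hs q hq
  have hL : q ∈ L3 := hq
  rcases hs with rfl | rfl | rfl
  · fin_cases hL
    · exact mem_of_eq (by decide) (one_mem _)
    · exact mem_of_eq (by decide) (one_mem _)
    · exact mem_of_eq (by decide) (one_mem _)
    · exact mem_of_eq (by decide) (one_mem _)
    · exact mem_of_eq (by decide) c3_0
    · exact mem_of_eq (by decide) (one_mem _)
    · exact mem_of_eq (by decide) (one_mem _)
    · exact mem_of_eq (by decide) (one_mem _)
    · exact mem_of_eq (by decide) (one_mem _)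
    · exact mem_of_eq (by decide) (one_mem _)
    · exact mem_of_eq (by decide) (one_mem _)
    · exact mem_of_eq (by decide) c3_0
    · exact mem_of_eq (by decide) (one_mem _)
    · exact mem_of_eq (by decide) (one_mem _)
    · exact mem_of_eq (by decide) c3_1
    · exact mem_of_eq (by decide) c3_0
    · exact mem_of_eq (by decide) (one_mem _)
    · exact mem_of_eq (by decide) c3_2
    · exact mem_of_eq (by decide) c3_3
    · exact mem_of_eq (by decide) c3_1
    · exact mem_of_eq (by decide) c3_0
    · exact mem_of_eq (by decide) c3_2
    · exact mem_of_eq (by decide) c3_4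
    · exact mem_of_eq (by decide) c3_0
  · fin_cases hL
    · exact mem_of_eq (by decide) (one_mem _)
    · exact mem_of_eq (by decide) (one_mem _)
    · exact mem_of_eq (by decide) (one_mem _)
    · exact mem_of_eq (by decide) (one_mem _)
    · exact mem_of_eq (by decide) (one_mem _)
    · exact mem_of_eq (by decide) (one_mem _)
    · exact mem_of_eq (by decide) (one_mem _)
    · exact mem_of_eq (by decide) c3_5
    · exact mem_of_eq (by decide) c3_6
    · exact mem_of_eq (by decide) c3_7
    · exact mem_of_eq (by decide) c3_8
    · exact mem_of_eq (by decide) (one_mem _)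
    · exact mem_of_eq (by decide) c3_9
    · exact mem_of_eq (by decide) c3_6
    · exact mem_of_eq (by decide) c3_7
    · exact mem_of_eq (by decide) (one_mem _)
    · exact mem_of_eq (by decide) c3_5
    · exact mem_of_eq (by decide) c3_5
    · exact mem_of_eq (by decide) c3_9
    · exact mem_of_eq (by decide) c3_8
    · exact mem_of_eq (by decide) c3_10
    · exact mem_of_eq (by decide) c3_11
    · exact mem_of_eq (by decide) c3_12
    · exact mem_of_eq (by decide) c3_13
  · fin_cases hL
    · exact mem_of_eq (by decide) (one_mem _)
    · exact mem_of_eq (by decide) (one_mem _)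
    · exact mem_of_eq (by decide) (one_mem _)
    · exact mem_of_eq (by decide) (one_mem _)
    · exact mem_of_eq (by decide) (one_mem _)
    · exact mem_of_eq (by decide) (one_mem _)
    · exact mem_of_eq (by decide) (one_mem _)
    · exact mem_of_eq (by decide) (one_mem _)
    · exact mem_of_eq (by decide) c3_7
    · exact mem_of_eq (by decide) (one_mem _)
    · exact mem_of_eq (by decide) (one_mem _)
    · exact mem_of_eq (by decide) (one_mem _)
    · exact mem_of_eq (by decide) c3_1
    · exact mem_of_eq (by decide) c3_7
    · exact mem_of_eq (by decide) (one_mem _)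
    · exact mem_of_eq (by decide) (one_mem _)
    · exact mem_of_eq (by decide) (one_mem _)
    · exact mem_of_eq (by decide) c3_14
    · exact mem_of_eq (by decide) c3_1
    · exact mem_of_eq (by decide) (one_mem _)
    · exact mem_of_eq (by decide) c3_15
    · exact mem_of_eq (by decide) c3_16
    · exact mem_of_eq (by decide) c3_13
    · exact mem_of_eq (by decide) (one_mem _)

lemma gamma_dvd {k m : ℕ} (h : (k:ℤ) ∣ (m:ℤ)) : Gamma m ≤ Gamma k := by
  intro g hg
  rw [CGH.mem_Gamma_iff] at hg ⊢
  apply map_one_of_entry_dvd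
  intro i j
  exact dvd_trans h (entry_dvd_of_map_one _ hg i j)

lemma hSQ4 : ∀ s ∈ ({Am, Bm, Nm} : Set SLZ2), redmap 4 s ∈ Q4 := by
  rintro s (rfl | rfl | rfl) <;> · show _ ∈ L4; decide

lemma hSQ3 : ∀ s ∈ ({Am, Bm, Nm} : Set SLZ2), redmap 3 s ∈ Q3 := by
  rintro s (rfl | rfl | rfl) <;> · show _ ∈ L3; decide

lemma Gamma4_le_comm : (Gamma 4).map CGH.toGL ≤ ⁅GammaHat 2, (Gamma 2).map CGH.toGL⁆ := by
  rintro u ⟨g, hg, rfl⟩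
  have h2 : g ∈ Gamma 2 := gamma_dvd (by norm_num) hg
  have hd := descent H4 H4normal Q4 {Am, Bm, Nm} hSQ4 n4 base4 g (Gamma2_le_HG h2)
    1 (one_mem Q4)
  have hred : redmap 4 g = 1 := hg
  rw [hred, one_mul] at hd
  have hn1 : n4 (1 : Matrix.SpecialLinearGroup (Fin 2) (ZMod 4)) = 1 := by decide
  rw [hn1, mul_one, inv_one, mul_one] at hd
  exact hd

lemma Gamma6_le_comm : (Gamma 6).map CGH.toGL ≤ ⁅GammaHat 2, (Gamma 3).map CGH.toGL⁆ := by
  rintro u ⟨g, hg, rfl⟩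
  have h2 : g ∈ Gamma 2 := gamma_dvd (by norm_num) hg
  have h3 : g ∈ Gamma 3 := gamma_dvd (by norm_num) hg
  have hd := descent H6 H6normal Q3 {Am, Bm, Nm} hSQ3 n3 base3 g (Gamma2_le_HG h2)
    1 (one_mem Q3)
  have hred : redmap 3 g = 1 := h3
  rw [hred, one_mul] at hd
  have hn1 : n3 (1 : Matrix.SpecialLinearGroup (Fin 2) (ZMod 3)) = 1 := by decide
  rw [hn1, mul_one, inv_one, mul_one] at hd
  exact hd

theorem commutator_gammaHat_two' :
    ⁅GammaHat 2, (Gamma 2).map Matrix.SpecialLinearGroup.toGL⁆ =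
        (Gamma 4).map Matrix.SpecialLinearGroup.toGL ∧
      ⁅GammaHat 2, (Gamma 3).map Matrix.SpecialLinearGroup.toGL⁆ =
        (Gamma 6).map Matrix.SpecialLinearGroup.toGL ∧
      ⁅GammaHat 2, GammaHat 2⁆ =
        (Gamma 4).map Matrix.SpecialLinearGroup.toGL := by
  refine ⟨le_antisymm comm_le_Gamma4' Gamma4_le_comm,
    le_antisymm comm_le_Gamma6 Gamma6_le_comm,
    le_antisymm comm_le_Gamma4 ?_⟩
  exact le_trans Gamma4_le_comm
    (Subgroup.commutator_mono le_rfl CGH.map_toGL_le_GammaHat)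

/-- In `GL(2, ℤ)`: `[Γ̂_2(2), Γ_2(2)] = [Γ̂_2(2), Γ̂_2(2)] = Γ_4(2)` and
`[Γ̂_2(2), Γ_3(2)] = Γ_6(2)`, where the `Γ`'s are viewed in `GL(2, ℤ)` via the
inclusion `SL(2, ℤ) → GL(2, ℤ)`. -/
theorem commutator_gammaHat_two :
    ⁅GammaHat 2, (Gamma 2).map Matrix.SpecialLinearGroup.toGL⁆ =
        (Gamma 4).map Matrix.SpecialLinearGroup.toGL ∧
      ⁅GammaHat 2, (Gamma 3).map Matrix.SpecialLinearGroup.toGL⁆ =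
        (Gamma 6).map Matrix.SpecialLinearGroup.toGL ∧
      ⁅GammaHat 2, GammaHat 2⁆ =
        (Gamma 4).map Matrix.SpecialLinearGroup.toGL := by
  exact commutator_gammaHat_two'
end
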